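/- arXiv:1902.00470 — 9 statements merged into one kernel-verified Lean document; each statement's English description precedes it below -/
import Mathlib

section
/- (Minimax theorem for partial monitoring.) For any finite-action partial monitoring game (any integer k ≥ 1, any outcome set X, any signal set Σ, any loss function L : [k] × X → [0,1] and any signal function Φ : [k] × X → Σ) and any horizon n ≥ 1, the minimax regret equals the worst-case Bayesian regret over finitely supported priors: inf_{π} sup_{x ∈ X^n} R_n(π,x) = sup_{ν finitely supported probability measure on X^n} inf_{π} BR_n(π,ν), and for each such ν the inner infimum over policies is attained. -/
/-! Policies form a compact set (a product of simplices) on which every regret `π ↦ R_n(π, x)`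
is continuous. By Kuhn's theorem on behavioural strategies, for two policies and a weight `t`
there is a policy whose law on action sequences is the `t`-mixture of their laws, so the
regret is convex-like in the policy. For finitely many outcome sequences, Sion's minimax theorem
on the compact convex set of vectors dominating some regret vector gives a policy whose regret
on them is bounded by the Bayes-optimal regret of some prior; the finite intersection property
of the compact set of policies extends this to all outcome sequences. The reverse inequality is
weak duality, and Bayes-optimal policies exist because Bayesian regret is continuous. -/

open scoped BigOperators

noncomputable section

/-- The history of action/signal pairs observed before round `t` when policy play
produced actions `a` against outcome sequence `x`. -/
def history {k n : ℕ} {X S : Type*} (Φ : Fin k → X → S) (x : Fin n → X)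
    (a : Fin n → Fin k) (t : Fin n) : List (Fin k × S) :=
  ((List.finRange n).take t.1).map fun s => (a s, Φ (a s) (x s))

/-- The probability that policy `π` plays the action sequence `a` against outcomes `x`. -/
def playProb {k n : ℕ} {X S : Type*} (Φ : Fin k → X → S)
    (π : List (Fin k × S) → Fin k → ℝ) (x : Fin n → X) (a : Fin n → Fin k) : ℝ :=
  ∏ t : Fin n, π (history Φ x a t) (a t)

/-- The expected regret of policy `π` against the outcome sequence `x`. -/
def regret {k n : ℕ} {X S : Type*} (L : Fin k → X → ℝ) (Φ : Fin k → X → S)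
    (π : List (Fin k × S) → Fin k → ℝ) (x : Fin n → X) : ℝ :=
  ⨆ astar : Fin k, ∑ a : Fin n → Fin k,
    playProb Φ π x a * ∑ t : Fin n, (L (a t) (x t) - L astar (x t))

/-- A policy assigns to every history a probability vector over the `k` actions. -/
def IsPolicy {k : ℕ} {S : Type*} (π : List (Fin k × S) → Fin k → ℝ) : Prop :=
  ∀ h, π h ∈ stdSimplex ℝ (Fin k)

/-- The minimax regret of a finite-action partial monitoring game. -/
def minimaxRegret (k n : ℕ) {X S : Type*} (L : Fin k → X → ℝ) (Φ : Fin k → X → S) : ℝ :=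
  ⨅ π : {π : List (Fin k × S) → Fin k → ℝ // IsPolicy π},
    ⨆ x : Fin n → X, regret L Φ π.1 x

/-- A finitely supported prior on outcome sequences: a finitely supported nonnegative
function summing to one. -/
def IsPrior {n : ℕ} {X : Type*} (ν : (Fin n → X) →₀ ℝ) : Prop :=
  (∀ x, 0 ≤ ν x) ∧ ν.sum (fun _ p => p) = 1

/-- The Bayesian regret of a policy `π` with respect to a finitely supported prior `ν`. -/
def bayesRegret {k n : ℕ} {X S : Type*} (L : Fin k → X → ℝ) (Φ : Fin k → X → S)
    (π : List (Fin k × S) → Fin k → ℝ) (ν : (Fin n → X) →₀ ℝ) : ℝ :=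
  ν.sum fun x p => p * regret L Φ π x

open Set

section ConvexLike

variable {α ι κ : Type*}

/-- Convex-likeness in the sense of Ky Fan. -/
def ConvexLikeOn (K : Set α) (f : α → ι → ℝ) : Prop :=
  ∀ p ∈ K, ∀ q ∈ K, ∀ t ∈ Icc (0 : ℝ) 1, ∃ r ∈ K, f r ≤ t • f p + (1 - t) • f q

variable {K : Set α} {f : α → ι → ℝ}

lemma ConvexLikeOn.precomp (hf : ConvexLikeOn K f) (g : κ → ι) :
    ConvexLikeOn K fun p => f p ∘ g := fun p hp q hq t ht =>
  (hf p hp q hq t ht).imp fun _ ⟨hr, h⟩ => ⟨hr, fun j => h (g j)⟩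

lemma ConvexLikeOn.convex_upperClosure (hf : ConvexLikeOn K f) :
    Convex ℝ (upperClosure (f '' K) : Set (ι → ℝ)) := by
  rintro _ ⟨_, ⟨p, hp, rfl⟩, hpy⟩ _ ⟨_, ⟨q, hq, rfl⟩, hqz⟩ a b ha hb hab
  obtain ⟨r, hr, hle⟩ := hf p hp q hq a ⟨ha, by linarith⟩
  refine ⟨f r, mem_image_of_mem f hr, hle.trans ?_⟩
  rw [← eq_sub_of_add_eq' hab]
  gcongr

variable [TopologicalSpace α]

lemma isCompact_upperClosure_image_inter {s : Set (ι → ℝ)} (hK : IsCompact K)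
    (hs : IsCompact s) (hf : Continuous f) :
    IsCompact ((upperClosure (f '' K) : Set (ι → ℝ)) ∩ s) := by
  have hclosed : IsClosed {q : α × (ι → ℝ) | f q.1 ≤ q.2} :=
    isClosed_le (hf.comp continuous_fst) continuous_snd
  convert ((hK.prod hs).inter_right hclosed).image continuous_snd using 1
  ext y
  simp only [mem_inter_iff, SetLike.mem_coe, mem_upperClosure, mem_image, mem_ofPred_eq,
    mem_prod, Prod.exists, exists_exists_and_eq_and]
  constructor
  · rintro ⟨⟨p, hp, hpy⟩, hy⟩
    exact ⟨p, y, ⟨⟨hp, hy⟩, hpy⟩, rfl⟩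
  · rintro ⟨p, y, ⟨⟨hp, hy⟩, hpy⟩, rfl⟩
    exact ⟨⟨p, hp, hpy⟩, hy⟩

theorem ConvexLikeOn.exists_forall_le_sum_mul [Fintype ι] [Nonempty ι] (hf : ConvexLikeOn K f)
    (hK : IsCompact K) (hKne : K.Nonempty) (hcont : Continuous f) :
    ∃ p ∈ K, ∃ w ∈ stdSimplex ℝ ι, ∀ q ∈ K, ∀ i, f p i ≤ ∑ j, w j * f q j := by
  classical
  -- Sion's theorem for `y ⬝ᵥ w` on the simplex and on the vectors dominating some `f q`,
  -- cut down to a ball around `f '' K` so that they form a compact convex set.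
  obtain ⟨R, hR⟩ := (hK.image hcont).isBounded.subset_closedBall 0
  set Y := (upperClosure (f '' K) : Set (ι → ℝ)) ∩ Metric.closedBall 0 R
  have hfY : ∀ q ∈ K, f q ∈ Y := fun q hq =>
    ⟨subset_upperClosure (mem_image_of_mem f hq), hR (mem_image_of_mem f hq)⟩
  have hY : Convex ℝ Y := hf.convex_upperClosure.inter (convex_closedBall 0 R)
  have hYc : IsCompact Y :=
    isCompact_upperClosure_image_inter hK (isCompact_closedBall 0 R) hcont
  have hYne : Y.Nonempty := hKne.image f |>.mono (image_subset_iff.mpr hfY)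
  obtain ⟨y, ⟨⟨_, ⟨p, hp, rfl⟩, hpy⟩, -⟩, w, hw, hsaddle⟩ :=
    Sion.exists_isSaddlePointOn (f := fun y w => y ⬝ᵥ w) hYne hY hYc
      (fun w _ => (continuous_id.dotProduct continuous_const).lowerSemicontinuous
        |>.lowerSemicontinuousOn _)
      (fun w _ => (((dotProductBilin ℝ ℝ).flip w).convexOn hY).quasiconvexOn)
      (convex_stdSimplex ℝ ι) ⟨_, single_mem_stdSimplex ℝ (Classical.arbitrary ι)⟩
      (isCompact_stdSimplex ℝ ι)
      (fun y _ => (continuous_const.dotProduct continuous_id).upperSemicontinuous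
        |>.upperSemicontinuousOn _)
      (fun y _ => ((dotProductBilin ℝ ℝ y).concaveOn (convex_stdSimplex ℝ ι)).quasiconcaveOn)
  refine ⟨p, hp, w, hw, fun q hq i => ?_⟩
  calc f p i ≤ y i := hpy i
    _ = y ⬝ᵥ Pi.single i 1 := by simp
    _ ≤ f q ⬝ᵥ w := hsaddle _ (hfY q hq) _ (single_mem_stdSimplex ℝ i)
    _ = ∑ j, w j * f q j := by simp [dotProduct, mul_comm]

theorem ConvexLikeOn.exists_forall_le_of_forall_stdSimplex (hf : ConvexLikeOn K f)
    (hK : IsCompact K) (hKne : K.Nonempty) (hcont : Continuous f) {c : ℝ}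
    (hc : ∀ F : Finset ι, ∀ w ∈ stdSimplex ℝ F, ∃ q ∈ K, ∑ j, w j * f q j ≤ c) :
    ∃ p ∈ K, ∀ i, f p i ≤ c := by
  have hclosed (i : ι) : IsClosed {p | f p i ≤ c} :=
    isClosed_le ((continuous_apply i).comp hcont) continuous_const
  have hfinite (F : Finset ι) : (K ∩ ⋂ i ∈ F, {p | f p i ≤ c}).Nonempty := by
    rcases isEmpty_or_nonempty F with hF | hF
    · simpa [Finset.isEmpty_coe_sort.mp hF] using hKne
    obtain ⟨p, hp, w, hw, hpw⟩ := (hf.precomp ((↑) : F → ι)).exists_forall_le_sum_mul hK hKne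
      (continuous_pi fun j => (continuous_apply _).comp hcont)
    obtain ⟨q, hq, hqc⟩ := hc F w hw
    exact ⟨p, hp, by simpa using fun i hi => (hpw q hq ⟨i, hi⟩).trans hqc⟩
  obtain ⟨p, hp, hpc⟩ := hK.inter_iInter_nonempty _ hclosed hfinite
  exact ⟨p, hp, fun i => mem_iInter.mp hpc i⟩

end ConvexLike

section Histories

variable {k n : ℕ} {X S : Type*}

def playPrefix (Φ : Fin k → X → S) (x : Fin n → X) (a : Fin n → Fin k) (m : ℕ) :
    List (Fin k × S) :=
  ((List.finRange n).take m).map fun s => (a s, Φ (a s) (x s))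

lemma playPrefix_succ (Φ : Fin k → X → S) (x : Fin n → X) (a : Fin n → Fin k) {m : ℕ}
    (hm : m < n) :
    playPrefix Φ x a (m + 1) =
      playPrefix Φ x a m ++ [(a ⟨m, hm⟩, Φ (a ⟨m, hm⟩) (x ⟨m, hm⟩))] := by
  rw [playPrefix, List.take_add_one, List.map_append,
    List.getElem?_eq_getElem (by simpa using hm)]
  simp [playPrefix]

/-- `historyWeight` on a history listed from the most recent round backwards. -/
def revHistoryWeight (π : List (Fin k × S) → Fin k → ℝ) : List (Fin k × S) → ℝ
  | [] => 1
  | e :: r => revHistoryWeight π r * π r.reverse e.1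

/-- The probability that `π` plays the actions recorded in `h` when it receives the signals
recorded in `h`. -/
def historyWeight (π : List (Fin k × S) → Fin k → ℝ) (h : List (Fin k × S)) : ℝ :=
  revHistoryWeight π h.reverse

variable {π : List (Fin k × S) → Fin k → ℝ}

@[simp]
lemma historyWeight_nil : historyWeight π [] = 1 := rfl

lemma historyWeight_append_singleton (h : List (Fin k × S)) (e : Fin k × S) :
    historyWeight π (h ++ [e]) = historyWeight π h * π h e.1 := by
  simp [historyWeight, revHistoryWeight]

lemma historyWeight_nonneg (hπ : IsPolicy π) (h : List (Fin k × S)) :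
    0 ≤ historyWeight π h := by
  induction h using List.reverseRecOn with
  | nil => exact zero_le_one
  | append_singleton h e ih =>
    rw [historyWeight_append_singleton]
    exact mul_nonneg ih ((hπ h).1 e.1)

lemma historyWeight_playPrefix (Φ : Fin k → X → S) (x : Fin n → X) (a : Fin n → Fin k) :
    ∀ {m : ℕ} (hm : m ≤ n), historyWeight π (playPrefix Φ x a m) =
      ∏ s : Fin m, π (history Φ x a (Fin.castLE hm s)) (a (Fin.castLE hm s))
  | 0, _ => by simp [playPrefix]
  | m + 1, hm => by
    rw [playPrefix_succ Φ x a hm, historyWeight_append_singleton,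
      historyWeight_playPrefix Φ x a (Nat.le_of_succ_le hm), Fin.prod_univ_castSucc]
    rfl

lemma playProb_eq_historyWeight (Φ : Fin k → X → S) (x : Fin n → X) (a : Fin n → Fin k) :
    playProb Φ π x a = historyWeight π (playPrefix Φ x a n) := by
  simp [historyWeight_playPrefix Φ x a le_rfl, playProb]

end Histories

section Mixture

variable {k n : ℕ} {X S : Type*}

/-- Kuhn's behavioural mixture of `π₀` and `π₁` with weights `t` and `1 - t`: at each history
the two next-action distributions are mixed in proportion to the probability with which each
policy produces that history (at unreachable histories any distribution will do). -/
def mixPolicy (π₀ π₁ : List (Fin k × S) → Fin k → ℝ) (t : ℝ) :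
    List (Fin k × S) → Fin k → ℝ := fun h j =>
  if t * historyWeight π₀ h + (1 - t) * historyWeight π₁ h = 0 then π₀ h j
  else (t * historyWeight π₀ h * π₀ h j + (1 - t) * historyWeight π₁ h * π₁ h j) /
    (t * historyWeight π₀ h + (1 - t) * historyWeight π₁ h)

variable {π₀ π₁ : List (Fin k × S) → Fin k → ℝ} {t : ℝ}

lemma isPolicy_mixPolicy (h₀ : IsPolicy π₀) (h₁ : IsPolicy π₁) (ht : t ∈ Icc (0 : ℝ) 1) :
    IsPolicy (mixPolicy π₀ π₁ t) := by
  intro h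
  unfold mixPolicy
  set d := t * historyWeight π₀ h + (1 - t) * historyWeight π₁ h
  by_cases hd : d = 0
  · simpa [hd] using h₀ h
  have := historyWeight_nonneg h₀ h
  have := historyWeight_nonneg h₁ h
  have := ht.1
  have : 0 ≤ 1 - t := sub_nonneg.2 ht.2
  have hd_pos : 0 < d := lt_of_le_of_ne (by positivity) (Ne.symm hd)
  refine ⟨fun j => ?_, ?_⟩
  · have := (h₀ h).1 j
    have := (h₁ h).1 j
    simp only [if_neg hd]
    positivity
  · simp only [if_neg hd, ← Finset.sum_div, Finset.sum_add_distrib, ← Finset.mul_sum, (h₀ h).2,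
      (h₁ h).2, mul_one]
    exact div_self hd

lemma historyWeight_mixPolicy (h₀ : IsPolicy π₀) (h₁ : IsPolicy π₁) (ht : t ∈ Icc (0 : ℝ) 1)
    (h : List (Fin k × S)) :
    historyWeight (mixPolicy π₀ π₁ t) h =
      t * historyWeight π₀ h + (1 - t) * historyWeight π₁ h := by
  induction h using List.reverseRecOn with
  | nil => simp
  | append_singleton h e ih =>
    simp only [historyWeight_append_singleton, ih, mixPolicy]
    split_ifs with hd
    · have hw₀ : t * historyWeight π₀ h = 0 := by
        have := historyWeight_nonneg h₀ h
        have := historyWeight_nonneg h₁ h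
        nlinarith [ht.1, ht.2]
      have hw₁ : (1 - t) * historyWeight π₁ h = 0 := by linarith
      rw [hd]
      linear_combination (-π₀ h e.1) * hw₀ - π₁ h e.1 * hw₁
    · field_simp

lemma playProb_mixPolicy (h₀ : IsPolicy π₀) (h₁ : IsPolicy π₁) (ht : t ∈ Icc (0 : ℝ) 1)
    (Φ : Fin k → X → S) (x : Fin n → X) (a : Fin n → Fin k) :
    playProb Φ (mixPolicy π₀ π₁ t) x a =
      t * playProb Φ π₀ x a + (1 - t) * playProb Φ π₁ x a := by
  simp only [playProb_eq_historyWeight, historyWeight_mixPolicy h₀ h₁ ht]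

end Mixture

section Regret

variable {k n : ℕ} {X S : Type*} {L : Fin k → X → ℝ} {Φ : Fin k → X → S}
  {π : List (Fin k × S) → Fin k → ℝ}

lemma isCompact_setOf_isPolicy :
    IsCompact {π : List (Fin k × S) → Fin k → ℝ | IsPolicy π} := by
  simpa [IsPolicy, Set.pi] using isCompact_univ_pi fun _ : List (Fin k × S) =>
    isCompact_stdSimplex ℝ (Fin k)

lemma nonempty_setOf_isPolicy [NeZero k] :
    {π : List (Fin k × S) → Fin k → ℝ | IsPolicy π}.Nonempty :=
  ⟨fun _ => Pi.single 0 1, fun _ => single_mem_stdSimplex ℝ 0⟩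

lemma playProb_mem_Icc (hπ : IsPolicy π) (x : Fin n → X) (a : Fin n → Fin k) :
    playProb Φ π x a ∈ Icc (0 : ℝ) 1 :=
  ⟨Finset.prod_nonneg fun _ _ => (hπ _).1 _, Finset.prod_le_one (fun _ _ => (hπ _).1 _)
    fun _ _ => (mem_Icc_of_mem_stdSimplex (hπ _) _).2⟩

def comparatorRegret (L : Fin k → X → ℝ) (Φ : Fin k → X → S)
    (π : List (Fin k × S) → Fin k → ℝ) (x : Fin n → X) (b : Fin k) : ℝ :=
  ∑ a : Fin n → Fin k, playProb Φ π x a * ∑ t : Fin n, (L (a t) (x t) - L b (x t))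

lemma regret_eq_sup' [NeZero k] (x : Fin n → X) :
    regret L Φ π x = Finset.univ.sup' Finset.univ_nonempty (comparatorRegret L Φ π x) :=
  (Finset.sup'_univ_eq_ciSup _).symm

lemma abs_comparatorRegret_le (hL : ∀ a x, L a x ∈ Icc (0 : ℝ) 1) (hπ : IsPolicy π)
    (x : Fin n → X) (b : Fin k) : |comparatorRegret L Φ π x b| ≤ n * k ^ n := by
  have hloss (a : Fin n → Fin k) : |∑ t, (L (a t) (x t) - L b (x t))| ≤ n := by
    have hdiff (t : Fin n) : |L (a t) (x t) - L b (x t)| ≤ 1 := by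
      obtain ⟨h₁, h₂⟩ := hL (a t) (x t)
      obtain ⟨h₃, h₄⟩ := hL b (x t)
      exact abs_sub_le_iff.2 ⟨by linarith, by linarith⟩
    calc _ ≤ ∑ t : Fin n, |L (a t) (x t) - L b (x t)| := Finset.abs_sum_le_sum_abs _ _
      _ ≤ ∑ t : Fin n, (1 : ℝ) := Finset.sum_le_sum fun t _ => hdiff t
      _ = n := by simp
  calc |comparatorRegret L Φ π x b|
      ≤ ∑ a : Fin n → Fin k, (n : ℝ) := by
        refine (Finset.abs_sum_le_sum_abs _ _).trans (Finset.sum_le_sum fun a _ => ?_)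
        obtain ⟨h₀, h₁⟩ := playProb_mem_Icc (Φ := Φ) hπ x a
        rw [abs_mul, abs_of_nonneg h₀]
        exact (mul_le_of_le_one_left (abs_nonneg _) h₁).trans (hloss a)
    _ = n * k ^ n := by simp [mul_comm]

lemma abs_regret_le [NeZero k] (hL : ∀ a x, L a x ∈ Icc (0 : ℝ) 1) (hπ : IsPolicy π)
    (x : Fin n → X) : |regret L Φ π x| ≤ n * k ^ n := by
  rw [regret_eq_sup', abs_le]
  refine ⟨?_, Finset.sup'_le _ _ fun b _ => (abs_le.1 (abs_comparatorRegret_le hL hπ x b)).2⟩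
  exact (abs_le.1 (abs_comparatorRegret_le hL hπ x 0)).1.trans
    (Finset.le_sup' _ (Finset.mem_univ 0))

lemma bddAbove_range_regret [NeZero k] (hL : ∀ a x, L a x ∈ Icc (0 : ℝ) 1)
    (hπ : IsPolicy π) : BddAbove (range (regret (n := n) L Φ π)) :=
  ⟨n * k ^ n, forall_mem_range.2 fun x => le_of_abs_le (abs_regret_le hL hπ x)⟩

lemma continuous_regret [NeZero k] (x : Fin n → X) :
    Continuous fun π : List (Fin k × S) → Fin k → ℝ => regret L Φ π x := by
  simp only [regret_eq_sup']
  refine Continuous.finset_sup'_apply _ fun b _ => ?_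
  unfold comparatorRegret playProb
  fun_prop

lemma regret_mixPolicy_le [NeZero k] {π₀ π₁ : List (Fin k × S) → Fin k → ℝ} {t : ℝ}
    (h₀ : IsPolicy π₀) (h₁ : IsPolicy π₁) (ht : t ∈ Icc (0 : ℝ) 1) (x : Fin n → X) :
    regret L Φ (mixPolicy π₀ π₁ t) x ≤ t * regret L Φ π₀ x + (1 - t) * regret L Φ π₁ x := by
  simp only [regret_eq_sup']
  refine Finset.sup'_le _ _ fun b _ => ?_
  have hmix : comparatorRegret L Φ (mixPolicy π₀ π₁ t) x b =
      t * comparatorRegret L Φ π₀ x b + (1 - t) * comparatorRegret L Φ π₁ x b := by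
    rw [comparatorRegret, comparatorRegret, comparatorRegret, Finset.mul_sum, Finset.mul_sum,
      ← Finset.sum_add_distrib]
    refine Finset.sum_congr rfl fun a _ => ?_
    rw [playProb_mixPolicy h₀ h₁ ht]
    ring
  rw [hmix]
  gcongr
  · exact ht.1
  · exact Finset.le_sup' _ (Finset.mem_univ b)
  · exact sub_nonneg.2 ht.2
  · exact Finset.le_sup' _ (Finset.mem_univ b)

lemma convexLikeOn_regret [NeZero k] :
    ConvexLikeOn {π : List (Fin k × S) → Fin k → ℝ | IsPolicy π} (regret (n := n) L Φ) :=
  fun _ h₀ _ h₁ _ ht => ⟨_, isPolicy_mixPolicy h₀ h₁ ht, regret_mixPolicy_le h₀ h₁ ht⟩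

end Regret

section Bayes

variable {k n : ℕ} {X S : Type*} {L : Fin k → X → ℝ} {Φ : Fin k → X → S}

def minBayesRegret (L : Fin k → X → ℝ) (Φ : Fin k → X → S) (ν : (Fin n → X) →₀ ℝ) : ℝ :=
  ⨅ π : {π : List (Fin k × S) → Fin k → ℝ // IsPolicy π}, bayesRegret L Φ π.1 ν

lemma bayesRegret_eq_sum (π : List (Fin k × S) → Fin k → ℝ) (ν : (Fin n → X) →₀ ℝ) :
    bayesRegret L Φ π ν = ∑ x ∈ ν.support, ν x * regret L Φ π x := rfl

lemma isPrior_single (x : Fin n → X) : IsPrior (Finsupp.single x (1 : ℝ)) :=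
  ⟨fun y => (Finsupp.single_nonneg.2 zero_le_one : 0 ≤ Finsupp.single x (1 : ℝ)) y, by simp⟩

lemma exists_isPrior_bayesRegret_eq_sum (F : Finset (Fin n → X)) {w : F → ℝ}
    (hw : w ∈ stdSimplex ℝ F) :
    ∃ ν : (Fin n → X) →₀ ℝ, IsPrior ν ∧
      ∀ π, bayesRegret L Φ π ν = ∑ j, w j * regret L Φ π j.1 := by
  set ν := (Finsupp.equivFunOnFinite.symm w).embDomain (Function.Embedding.subtype (· ∈ F))
  refine ⟨ν, ⟨fun x => ?_, ?_⟩, fun π => ?_⟩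
  · rw [Finsupp.embDomain_apply]
    split_ifs
    exacts [hw.1 _, le_rfl]
  · rw [Finsupp.sum_embDomain, Finsupp.sum_fintype _ _ fun _ => rfl]
    exact hw.2
  · rw [bayesRegret, Finsupp.sum_embDomain, Finsupp.sum_fintype _ _ fun _ => zero_mul _]
    rfl

variable [NeZero k] (hL : ∀ a x, L a x ∈ Icc (0 : ℝ) 1)
include hL

lemma abs_bayesRegret_le {π : List (Fin k × S) → Fin k → ℝ} (hπ : IsPolicy π)
    {ν : (Fin n → X) →₀ ℝ} (hν : IsPrior ν) : |bayesRegret L Φ π ν| ≤ n * k ^ n := by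
  have hν₁ : ∑ x ∈ ν.support, ν x = 1 := hν.2
  rw [bayesRegret_eq_sum]
  calc |∑ x ∈ ν.support, ν x * regret L Φ π x|
      ≤ ∑ x ∈ ν.support, ν x * (n * k ^ n) := by
        refine (Finset.abs_sum_le_sum_abs _ _).trans (Finset.sum_le_sum fun x _ => ?_)
        rw [abs_mul, abs_of_nonneg (hν.1 x)]
        exact mul_le_mul_of_nonneg_left (abs_regret_le hL hπ x) (hν.1 x)
    _ = n * k ^ n := by rw [← Finset.sum_mul, hν₁, one_mul]

lemma bayesRegret_le_iSup_regret {π : List (Fin k × S) → Fin k → ℝ} (hπ : IsPolicy π)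
    {ν : (Fin n → X) →₀ ℝ} (hν : IsPrior ν) :
    bayesRegret L Φ π ν ≤ ⨆ x : Fin n → X, regret L Φ π x := by
  have hν₁ : ∑ x ∈ ν.support, ν x = 1 := hν.2
  rw [bayesRegret_eq_sum]
  calc ∑ x ∈ ν.support, ν x * regret L Φ π x
      ≤ ∑ x ∈ ν.support, ν x * ⨆ x : Fin n → X, regret L Φ π x :=
        Finset.sum_le_sum fun x _ => mul_le_mul_of_nonneg_left
          (le_ciSup (bddAbove_range_regret hL hπ) x) (hν.1 x)
    _ = ⨆ x : Fin n → X, regret L Φ π x := by rw [← Finset.sum_mul, hν₁, one_mul]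

lemma bddBelow_range_bayesRegret {ν : (Fin n → X) →₀ ℝ} (hν : IsPrior ν) :
    BddBelow (range fun π : {π : List (Fin k × S) → Fin k → ℝ // IsPolicy π} =>
      bayesRegret L Φ π.1 ν) :=
  ⟨-(n * k ^ n), forall_mem_range.2 fun π => neg_le_of_abs_le (abs_bayesRegret_le hL π.2 hν)⟩

lemma exists_bayesRegret_eq_minBayesRegret {ν : (Fin n → X) →₀ ℝ} (hν : IsPrior ν) :
    ∃ π : {π : List (Fin k × S) → Fin k → ℝ // IsPolicy π},
      bayesRegret L Φ π.1 ν = minBayesRegret L Φ ν := by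
  have hcont : Continuous fun π : List (Fin k × S) → Fin k → ℝ => bayesRegret L Φ π ν :=
    continuous_finsetSum _ fun x _ => continuous_const.mul (continuous_regret x)
  obtain ⟨π, hπ, hmin⟩ :=
    isCompact_setOf_isPolicy.exists_isMinOn nonempty_setOf_isPolicy hcont.continuousOn
  have : Nonempty {π : List (Fin k × S) → Fin k → ℝ // IsPolicy π} := ⟨⟨π, hπ⟩⟩
  exact ⟨⟨π, hπ⟩, le_antisymm (le_ciInf fun π' => hmin π'.2)
    (ciInf_le (bddBelow_range_bayesRegret hL hν) ⟨π, hπ⟩)⟩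

lemma bddAbove_range_minBayesRegret :
    BddAbove (range fun ν : {ν : (Fin n → X) →₀ ℝ // IsPrior ν} => minBayesRegret L Φ ν.1) := by
  refine ⟨n * k ^ n, forall_mem_range.2 fun ν => ?_⟩
  obtain ⟨π, hπ⟩ := exists_bayesRegret_eq_minBayesRegret (Φ := Φ) hL ν.2
  exact hπ ▸ le_of_abs_le (abs_bayesRegret_le hL π.2 ν.2)

theorem exists_isPolicy_regret_le_iSup_minBayesRegret :
    ∃ π, IsPolicy π ∧ ∀ x : Fin n → X,
      regret L Φ π x ≤ ⨆ ν : {ν : (Fin n → X) →₀ ℝ // IsPrior ν}, minBayesRegret L Φ ν.1 := by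
  refine convexLikeOn_regret.exists_forall_le_of_forall_stdSimplex isCompact_setOf_isPolicy
    nonempty_setOf_isPolicy (continuous_pi continuous_regret) fun F w hw => ?_
  obtain ⟨ν, hν, hνw⟩ := exists_isPrior_bayesRegret_eq_sum (L := L) (Φ := Φ) F hw
  obtain ⟨π, hπ⟩ := exists_bayesRegret_eq_minBayesRegret (Φ := Φ) hL hν
  refine ⟨π.1, π.2, ?_⟩
  rw [← hνw, hπ]
  exact le_ciSup (bddAbove_range_minBayesRegret hL) ⟨ν, hν⟩

variable [Nonempty (Fin n → X)]

lemma minimaxRegret_le_iSup_minBayesRegret :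
    minimaxRegret k n L Φ ≤ ⨆ ν : {ν : (Fin n → X) →₀ ℝ // IsPrior ν}, minBayesRegret L Φ ν.1 := by
  obtain ⟨π, hπ, hle⟩ := exists_isPolicy_regret_le_iSup_minBayesRegret (Φ := Φ) hL
  have hbdd : BddBelow (range fun π : {π : List (Fin k × S) → Fin k → ℝ // IsPolicy π} =>
      ⨆ x : Fin n → X, regret L Φ π.1 x) :=
    ⟨-(n * k ^ n), forall_mem_range.2 fun π =>
      (neg_le_of_abs_le (abs_regret_le hL π.2 (Classical.arbitrary _))).trans
        (le_ciSup (bddAbove_range_regret hL π.2) _)⟩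
  exact (ciInf_le hbdd ⟨π, hπ⟩).trans (ciSup_le hle)

lemma iSup_minBayesRegret_le_minimaxRegret :
    ⨆ ν : {ν : (Fin n → X) →₀ ℝ // IsPrior ν}, minBayesRegret L Φ ν.1 ≤ minimaxRegret k n L Φ := by
  have : Nonempty {π : List (Fin k × S) → Fin k → ℝ // IsPolicy π} :=
    nonempty_setOf_isPolicy.to_subtype
  have : Nonempty {ν : (Fin n → X) →₀ ℝ // IsPrior ν} :=
    ⟨⟨_, isPrior_single (Classical.arbitrary _)⟩⟩
  exact ciSup_le fun ν => le_ciInf fun π => (ciInf_le (bddBelow_range_bayesRegret hL ν.2) π).trans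
    (bayesRegret_le_iSup_regret hL π.2 ν.2)

end Bayes

lemma minimaxRegret_eq_iSup_minBayesRegret_of_isEmpty {k n : ℕ} {X S : Type*}
    [IsEmpty (Fin n → X)] (L : Fin k → X → ℝ) (Φ : Fin k → X → S) :
    minimaxRegret k n L Φ = ⨆ ν : {ν : (Fin n → X) →₀ ℝ // IsPrior ν}, minBayesRegret L Φ ν.1 := by
  have : IsEmpty {ν : (Fin n → X) →₀ ℝ // IsPrior ν} :=
    ⟨fun ν => by simpa [Finsupp.sum, Subsingleton.elim ν.1 0] using ν.2.2⟩
  simp [minimaxRegret]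

theorem pm_minimax_theorem_general (k n : ℕ) (hk : 1 ≤ k) {X S : Type*}
    (L : Fin k → X → ℝ) (hL : ∀ a x, L a x ∈ Set.Icc (0:ℝ) 1) (Φ : Fin k → X → S) :
    (minimaxRegret k n L Φ =
      ⨆ ν : {ν : (Fin n → X) →₀ ℝ // IsPrior ν},
        ⨅ π : {π : List (Fin k × S) → Fin k → ℝ // IsPolicy π},
          bayesRegret L Φ π.1 ν.1) ∧
    (∀ ν : {ν : (Fin n → X) →₀ ℝ // IsPrior ν},
      ∃ π : {π : List (Fin k × S) → Fin k → ℝ // IsPolicy π},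
        bayesRegret L Φ π.1 ν.1 =
          ⨅ π' : {π' : List (Fin k × S) → Fin k → ℝ // IsPolicy π'},
            bayesRegret L Φ π'.1 ν.1) := by
  have : NeZero k := ⟨by omega⟩
  refine ⟨?_, fun ν => exists_bayesRegret_eq_minBayesRegret hL ν.2⟩
  rcases isEmpty_or_nonempty (Fin n → X) with hX | hX
  · exact minimaxRegret_eq_iSup_minBayesRegret_of_isEmpty L Φ
  · exact le_antisymm (minimaxRegret_le_iSup_minBayesRegret hL)
      (iSup_minBayesRegret_le_minimaxRegret hL)

/-- **Minimax theorem for finite-action partial monitoring.**  For any finite-action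
partial monitoring game and any horizon, the minimax regret equals the worst-case
Bayesian regret over finitely supported priors, and for each such prior the
Bayesian-optimal regret is attained by some policy. -/
theorem pm_minimax_theorem (k n : ℕ) (hk : 1 ≤ k) (hn : 1 ≤ n) {X S : Type*}
    (L : Fin k → X → ℝ) (hL : ∀ a x, L a x ∈ Set.Icc (0:ℝ) 1) (Φ : Fin k → X → S) :
    (minimaxRegret k n L Φ =
      ⨆ ν : {ν : (Fin n → X) →₀ ℝ // IsPrior ν},
        ⨅ π : {π : List (Fin k × S) → Fin k → ℝ // IsPolicy π},
          bayesRegret L Φ π.1 ν.1) ∧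
    (∀ ν : {ν : (Fin n → X) →₀ ℝ // IsPrior ν},
      ∃ π : {π : List (Fin k × S) → Fin k → ℝ // IsPolicy π},
        bayesRegret L Φ π.1 ν.1 =
          ⨅ π' : {π' : List (Fin k × S) → Fin k → ℝ // IsPolicy π'},
            bayesRegret L Φ π'.1 ν.1) :=
  pm_minimax_theorem_general k n hk L hL Φ

end
end

section
/- Let (Ω,𝔉,P) be a probability space with a filtration (𝔉_t)_{t=1}^{n+1}, let D ⊆ ℝ^m, and let F : ℝ^m → ℝ be convex with diam_F(D) < ∞. Let (M_t)_{t=1}^{n+1} be an ℝ^m-valued martingale adapted to (𝔉_t)_{t=1}^{n+1} with M_t ∈ D almost surely for every t, and let Δ_1,…,Δ_n be integrable real random variables. Suppose there exist constants α, β ≥ 0 such that for every t ∈ {1,…,n}, the random variable D_F(M_{t+1},M_t) is measurable and E[Δ_t | 𝔉_t] ≤ α + sqrt(β · E[D_F(M_{t+1},M_t) | 𝔉_t]) almost surely. Then E[∑_{t=1}^n Δ_t] ≤ α n + sqrt(n β · diam_F(D)). -/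
open MeasureTheory
open scoped BigOperators

noncomputable section

/-- The one-sided directional derivative of a convex function `F` at `y` in the
direction `v`: for convex `F` the difference quotients are monotone in `h`, so it
equals the infimum over `h > 0`. -/
def dirDeriv {m : ℕ} (F : (Fin m → ℝ) → ℝ) (y v : Fin m → ℝ) : ℝ :=
  sInf ((fun h : ℝ => (F (y + h • v) - F y) / h) '' Set.Ioi 0)

/-- The Bregman divergence of a convex function `F`. -/
def bregman {m : ℕ} (F : (Fin m → ℝ) → ℝ) (x y : Fin m → ℝ) : ℝ :=
  F x - F y - dirDeriv F y (x - y)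

/-- The diameter of a set with respect to `F`: `sup_{x,y ∈ D} (F x − F y)`. -/
def bregDiam {m : ℕ} (F : (Fin m → ℝ) → ℝ) (D : Set (Fin m → ℝ)) : ℝ :=
  sSup {z | ∃ x ∈ D, ∃ y ∈ D, z = F x - F y}

/-!
Integrating the per-round hypothesis (tower property, then Jensen for `√`) gives
`E[Δ_t] ≤ α + √(β c_t)` with `c_t = E[D_F(M_{t+1}, M_t)]`, and Cauchy–Schwarz gives
`∑_t √(β c_t) ≤ √(n β ∑_t c_t)`. The heart of the matter is `c_t ≤ E[F(M_{t+1})] − E[F(M_t)]`,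
i.e. that `∇_{M_{t+1}−M_t} F(M_t)` has nonnegative expectation: it is the decreasing limit of
the difference quotients `(F(M_t + h (M_{t+1}−M_t)) − F(M_t)) / h`, whose expectations are
nonnegative by conditional Jensen because `E[M_t + h (M_{t+1}−M_t) | 𝔉_t] = M_t`.
The sum of the `c_t` then telescopes to `E[F(M_n)] − E[F(M_0)] ≤ diam_F(D)`.
-/

open Filter Topology

section DirectionalDerivative

variable {m : ℕ} {F : (Fin m → ℝ) → ℝ}

def diffQuot (F : (Fin m → ℝ) → ℝ) (y v : Fin m → ℝ) (h : ℝ) : ℝ :=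
  (F (y + h • v) - F y) / h

lemma diffQuot_one (F : (Fin m → ℝ) → ℝ) (x y : Fin m → ℝ) :
    diffQuot F x (y - x) 1 = F y - F x := by
  simp [diffQuot]

lemma ConvexOn.diffQuot_le_diffQuot (hF : ConvexOn ℝ Set.univ F) (y v : Fin m → ℝ)
    {h₁ h₂ : ℝ} (h₁0 : h₁ ≠ 0) (h₂0 : h₂ ≠ 0) (h : h₁ ≤ h₂) :
    diffQuot F y v h₁ ≤ diffQuot F y v h₂ := by
  have hline : ConvexOn ℝ Set.univ fun t : ℝ => F (y + t • v) := by
    refine (hF.comp_affineMap (AffineMap.lineMap y (y + v))).congr fun t _ => ?_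
    simp [AffineMap.lineMap_apply, add_comm]
  simpa [diffQuot] using hline.secant_mono (Set.mem_univ 0) (Set.mem_univ h₁)
    (Set.mem_univ h₂) h₁0 h₂0 h

lemma ConvexOn.bddBelow_diffQuot (hF : ConvexOn ℝ Set.univ F) (y v : Fin m → ℝ) :
    BddBelow (diffQuot F y v '' Set.Ioi 0) := by
  refine ⟨diffQuot F y v (-1), ?_⟩
  rintro _ ⟨h, hh, rfl⟩
  exact hF.diffQuot_le_diffQuot y v (by norm_num) hh.ne' (by linarith [hh.out])

lemma ConvexOn.dirDeriv_le_diffQuot (hF : ConvexOn ℝ Set.univ F) (y v : Fin m → ℝ)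
    {h : ℝ} (hh : 0 < h) : dirDeriv F y v ≤ diffQuot F y v h :=
  csInf_le (hF.bddBelow_diffQuot y v) ⟨h, hh, rfl⟩

lemma ConvexOn.tendsto_diffQuot_dirDeriv (hF : ConvexOn ℝ Set.univ F) (y v : Fin m → ℝ) :
    Tendsto (diffQuot F y v) (𝓝[>] 0) (𝓝 (dirDeriv F y v)) :=
  MonotoneOn.tendsto_nhdsGT
    (fun _ h₁ _ h₂ h => hF.diffQuot_le_diffQuot y v h₁.out.ne' h₂.out.ne' h)
    (hF.bddBelow_diffQuot y v)

lemma ConvexOn.bregman_nonneg (hF : ConvexOn ℝ Set.univ F) (x y : Fin m → ℝ) :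
    0 ≤ bregman F x y := by
  have := hF.dirDeriv_le_diffQuot y (x - y) one_pos
  rw [diffQuot_one] at this
  unfold bregman
  linarith

end DirectionalDerivative

section Expectation

variable {Ω : Type*} {G mΩ : MeasurableSpace Ω} {P : Measure Ω}

lemma ConvexOn.integral_comp_le_of_condExp_ae_eq {E : Type*} [NormedAddCommGroup E]
    [NormedSpace ℝ E] [FiniteDimensional ℝ E] {φ : E → ℝ} (hφ : ConvexOn ℝ Set.univ φ)
    (hG : G ≤ mΩ) [SigmaFinite (P.trim hG)] {X Z : Ω → E} (hZ : Integrable Z P)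
    (hφX : Integrable (fun ω => φ (X ω)) P) (hφZ : Integrable (fun ω => φ (Z ω)) P)
    (hcond : P[Z|G] =ᵐ[P] X) :
    ∫ ω, φ (X ω) ∂P ≤ ∫ ω, φ (Z ω) ∂P := by
  calc ∫ ω, φ (X ω) ∂P ≤ ∫ ω, (P[fun ω => φ (Z ω)|G]) ω ∂P := by
        refine integral_mono_ae hφX integrable_condExp ?_
        filter_upwards [hφ.map_condExp_le_of_finiteDimensional hG hZ hφZ, hcond] with ω hω hXω
        rwa [Function.comp_apply, hXω] at hω
    _ = ∫ ω, φ (Z ω) ∂P := integral_condExp hG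

lemma condExp_add_smul_sub_ae_eq {E : Type*} [NormedAddCommGroup E] [NormedSpace ℝ E]
    [CompleteSpace E] (hG : G ≤ mΩ) [SigmaFinite (P.trim hG)] {X Y : Ω → E}
    (hXm : StronglyMeasurable[G] X) (hX : Integrable X P)
    (hY : Integrable Y P) (hcond : P[Y|G] =ᵐ[P] X) (h : ℝ) :
    P[X + h • (Y - X)|G] =ᵐ[P] X := by
  have hXX : P[X|G] = X := condExp_of_stronglyMeasurable hG hXm hX
  filter_upwards [condExp_add hX ((hY.sub hX).smul h) G, condExp_smul h (Y - X) G,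
    condExp_sub hY hX G, hcond] with ω hadd hsmul hsub hYω
  simp_all

variable {m : ℕ} {F : (Fin m → ℝ) → ℝ}

lemma ConvexOn.integral_dirDeriv_nonneg (hF : ConvexOn ℝ Set.univ F) (hG : G ≤ mΩ)
    [SigmaFinite (P.trim hG)] {X Y : Ω → Fin m → ℝ} (hXm : StronglyMeasurable[G] X)
    (hX : Integrable X P) (hY : Integrable Y P) (hcond : P[Y|G] =ᵐ[P] X)
    (hFX : Integrable (fun ω => F (X ω)) P) (hFY : Integrable (fun ω => F (Y ω)) P)
    (hd : Integrable (fun ω => dirDeriv F (X ω) (Y ω - X ω)) P) :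
    0 ≤ ∫ ω, dirDeriv F (X ω) (Y ω - X ω) ∂P := by
  obtain ⟨u, hu_anti, hu_mem, hu_lim⟩ := exists_seq_strictAnti_tendsto' (zero_lt_one' ℝ)
  have hu_pos k : 0 < u k := (hu_mem k).1
  set Q : ℕ → Ω → ℝ := fun k ω => diffQuot F (X ω) (Y ω - X ω) (u k) with hQ
  have hQ_int k : Integrable (Q k) P := by
    refine integrable_of_le_of_le (g₁ := fun ω => dirDeriv F (X ω) (Y ω - X ω))
      (g₂ := fun ω => F (Y ω) - F (X ω)) ?_ (ae_of_all _ fun ω => ?_)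
      (ae_of_all _ fun ω => ?_) hd (hFY.sub hFX)
    · have hFc := hF.locallyLipschitz.continuous
      have hXa := hX.aestronglyMeasurable
      have hYa := hY.aestronglyMeasurable
      simp only [hQ, diffQuot]
      fun_prop
    · exact hF.dirDeriv_le_diffQuot _ _ (hu_pos k)
    · exact (hF.diffQuot_le_diffQuot _ _ (hu_pos k).ne' one_ne_zero (hu_mem k).2.le).trans_eq
        (diffQuot_one F (X ω) (Y ω))
  have hQ_nonneg k : 0 ≤ ∫ ω, Q k ω ∂P := by
    have hFZ : Integrable (fun ω => F ((X + u k • (Y - X)) ω)) P := by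
      refine (hFX.add ((hQ_int k).const_mul (u k))).congr (ae_of_all _ fun ω => ?_)
      simp [hQ, diffQuot, mul_div_cancel₀ _ (hu_pos k).ne']
    have hJensen := hF.integral_comp_le_of_condExp_ae_eq hG
      (hX.add ((hY.sub hX).smul (u k))) hFX hFZ
      (condExp_add_smul_sub_ae_eq hG hXm hX hY hcond (u k))
    have hQ_eq : ∫ ω, Q k ω ∂P
        = (∫ ω, F ((X + u k • (Y - X)) ω) ∂P - ∫ ω, F (X ω) ∂P) / u k := by
      rw [← integral_sub hFZ hFX, ← integral_div]
      rfl
    rw [hQ_eq]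
    exact div_nonneg (sub_nonneg.2 hJensen) (hu_pos k).le
  have hQ_lim : Tendsto (fun k => ∫ ω, Q k ω ∂P) atTop
      (𝓝 (∫ ω, dirDeriv F (X ω) (Y ω - X ω) ∂P)) := by
    refine integral_tendsto_of_tendsto_of_antitone hQ_int hd
      (ae_of_all _ fun ω k l hkl => ?_) (ae_of_all _ fun ω => ?_)
    · exact hF.diffQuot_le_diffQuot _ _ (hu_pos l).ne' (hu_pos k).ne' (hu_anti.antitone hkl)
    · exact (hF.tendsto_diffQuot_dirDeriv _ _).comp
        (tendsto_nhdsWithin_iff.2 ⟨hu_lim, Eventually.of_forall hu_pos⟩)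
  exact ge_of_tendsto' hQ_lim hQ_nonneg

lemma ConvexOn.integral_bregman_le (hF : ConvexOn ℝ Set.univ F) (hG : G ≤ mΩ)
    [SigmaFinite (P.trim hG)] {X Y : Ω → Fin m → ℝ} (hXm : StronglyMeasurable[G] X)
    (hX : Integrable X P) (hY : Integrable Y P) (hcond : P[Y|G] =ᵐ[P] X)
    (hFX : Integrable (fun ω => F (X ω)) P) (hFY : Integrable (fun ω => F (Y ω)) P) :
    ∫ ω, bregman F (Y ω) (X ω) ∂P ≤ ∫ ω, F (Y ω) ∂P - ∫ ω, F (X ω) ∂P := by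
  by_cases hB : Integrable (fun ω => bregman F (Y ω) (X ω)) P
  · have hd : Integrable (fun ω => dirDeriv F (X ω) (Y ω - X ω)) P :=
      ((hFY.sub hFX).sub hB).congr (ae_of_all _ fun ω => by simp [bregman])
    have hsplit : ∫ ω, bregman F (Y ω) (X ω) ∂P
        = ∫ ω, F (Y ω) ∂P - ∫ ω, F (X ω) ∂P - ∫ ω, dirDeriv F (X ω) (Y ω - X ω) ∂P := by
      rw [← integral_sub hFY hFX,
        ← integral_sub (f := fun ω => F (Y ω) - F (X ω)) (hFY.sub hFX) hd]
      rfl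
    linarith [hF.integral_dirDeriv_nonneg hG hXm hX hY hcond hFX hFY hd]
  -- The Bochner integral of a non-integrable function is `0`.
  · rw [integral_undef hB, sub_nonneg]
    exact hF.integral_comp_le_of_condExp_ae_eq hG hY hFX hFY hcond

lemma MeasureTheory.Integrable.sqrt [IsFiniteMeasure P] {f : Ω → ℝ} (hf : Integrable f P) :
    Integrable (fun ω => √(f ω)) P := by
  refine (hf.norm.add (integrable_const 1)).mono' hf.aemeasurable.sqrt.aestronglyMeasurable
    (ae_of_all _ fun ω => ?_)
  rw [Real.norm_eq_abs, abs_of_nonneg (Real.sqrt_nonneg _), Pi.add_apply, Real.norm_eq_abs,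
    Real.sqrt_le_iff]
  exact ⟨by positivity, by nlinarith [abs_nonneg (f ω), le_abs_self (f ω)]⟩

lemma integral_sqrt_le_sqrt_integral [IsProbabilityMeasure P] {f : Ω → ℝ}
    (hf : Integrable f P) (hf₀ : 0 ≤ᵐ[P] f) :
    ∫ ω, √(f ω) ∂P ≤ √(∫ ω, f ω ∂P) :=
  Real.strictConcaveOn_sqrt.concaveOn.le_map_integral Real.continuous_sqrt.continuousOn
    isClosed_Ici hf₀ hf hf.sqrt

lemma integral_le_add_sqrt_integral [IsProbabilityMeasure P] (hG : G ≤ mΩ) {Δ B : Ω → ℝ}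
    {α β : ℝ} (hβ : 0 ≤ β) (hB : 0 ≤ᵐ[P] B) (hbound : ∀ᵐ ω ∂P, (P[Δ|G]) ω ≤ α + √(β * (P[B|G]) ω)) :
    ∫ ω, Δ ω ∂P ≤ α + √(β * ∫ ω, B ω ∂P) := by
  have hβB : Integrable (fun ω => β * (P[B|G]) ω) P := integrable_condExp.const_mul β
  calc ∫ ω, Δ ω ∂P = ∫ ω, (P[Δ|G]) ω ∂P := (integral_condExp hG).symm
    _ ≤ ∫ ω, (α + √(β * (P[B|G]) ω)) ∂P :=
        integral_mono_ae integrable_condExp ((integrable_const α).add hβB.sqrt) hbound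
    _ = α + ∫ ω, √(β * (P[B|G]) ω) ∂P := by
        rw [integral_add (integrable_const α) hβB.sqrt, integral_const]
        simp
    _ ≤ α + √(∫ ω, β * (P[B|G]) ω ∂P) := by
        gcongr
        refine integral_sqrt_le_sqrt_integral hβB ?_
        filter_upwards [condExp_nonneg (m := G) hB] with ω hω
        exact mul_nonneg hβ hω
    _ = α + √(β * ∫ ω, B ω ∂P) := by
        rw [integral_const_mul, integral_condExp hG]

end Expectation

lemma sum_le_mul_add_sqrt {ι : Type*} {s : Finset ι} {a c : ι → ℝ} {α β K : ℝ}
    (hβ : 0 ≤ β) (hc : ∀ i, 0 ≤ c i) (ha : ∀ i ∈ s, a i ≤ α + √(β * c i))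
    (hK : ∑ i ∈ s, c i ≤ K) :
    ∑ i ∈ s, a i ≤ α * s.card + √(s.card * β * K) := by
  have hCS := Real.sum_sqrt_mul_sqrt_le s (fun _ => zero_le_one) fun i => mul_nonneg hβ (hc i)
  simp only [Real.sqrt_one, one_mul, Finset.sum_const, nsmul_eq_mul, mul_one] at hCS
  calc ∑ i ∈ s, a i ≤ ∑ i ∈ s, (α + √(β * c i)) := Finset.sum_le_sum ha
    _ = α * s.card + ∑ i ∈ s, √(β * c i) := by
        rw [Finset.sum_add_distrib, Finset.sum_const, nsmul_eq_mul, mul_comm]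
    _ ≤ α * s.card + √(s.card * β * K) := by
        gcongr
        refine hCS.trans ?_
        rw [← Real.sqrt_mul (Nat.cast_nonneg _), ← Finset.mul_sum, mul_assoc]
        gcongr

section Diameter

variable {m : ℕ} {F : (Fin m → ℝ) → ℝ} {D : Set (Fin m → ℝ)}

lemma sub_le_bregDiam (hdiam : BddAbove {z | ∃ x ∈ D, ∃ y ∈ D, z = F x - F y}) {x y : Fin m → ℝ}
    (hx : x ∈ D) (hy : y ∈ D) : F x - F y ≤ bregDiam F D :=
  le_csSup hdiam ⟨x, hx, y, hy, rfl⟩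

variable {Ω : Type*} {mΩ : MeasurableSpace Ω} {P : Measure Ω}

lemma integrable_comp_of_ae_mem [IsFiniteMeasure P] (hF : Continuous F)
    (hdiam : BddAbove {z | ∃ x ∈ D, ∃ y ∈ D, z = F x - F y}) {y₀ : Fin m → ℝ} (hy₀ : y₀ ∈ D)
    {X : Ω → Fin m → ℝ} (hX : AEStronglyMeasurable X P) (hXD : ∀ᵐ ω ∂P, X ω ∈ D) :
    Integrable (fun ω => F (X ω)) P := by
  refine .of_bound (hF.comp_aestronglyMeasurable hX) (|F y₀| + bregDiam F D) ?_
  filter_upwards [hXD] with ω hω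
  rw [Real.norm_eq_abs, abs_le]
  constructor <;> linarith [sub_le_bregDiam hdiam hω hy₀, sub_le_bregDiam hdiam hy₀ hω,
    le_abs_self (F y₀), neg_abs_le (F y₀)]

lemma integral_sub_le_bregDiam [IsProbabilityMeasure P]
    (hdiam : BddAbove {z | ∃ x ∈ D, ∃ y ∈ D, z = F x - F y}) {X Y : Ω → Fin m → ℝ}
    (hFX : Integrable (fun ω => F (X ω)) P) (hFY : Integrable (fun ω => F (Y ω)) P)
    (hXD : ∀ᵐ ω ∂P, X ω ∈ D) (hYD : ∀ᵐ ω ∂P, Y ω ∈ D) :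
    ∫ ω, F (X ω) ∂P - ∫ ω, F (Y ω) ∂P ≤ bregDiam F D := by
  rw [← integral_sub hFX hFY]
  calc ∫ ω, F (X ω) - F (Y ω) ∂P ≤ ∫ _, bregDiam F D ∂P := by
        refine integral_mono_ae (hFX.sub hFY) (integrable_const _) ?_
        filter_upwards [hXD, hYD] with ω hx hy
        exact sub_le_bregDiam hdiam hx hy
    _ = bregDiam F D := by simp

end Diameter

-- Rounds are indexed `0, …, n-1` and the martingale `0, …, n`.
theorem bregman_regret_bound_general {Ω : Type*} {mΩ : MeasurableSpace Ω}
    {P : Measure Ω} [IsProbabilityMeasure P] {m n : ℕ}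
    (𝔉 : Filtration ℕ mΩ)
    (D : Set (Fin m → ℝ)) (F : (Fin m → ℝ) → ℝ)
    (hF : ConvexOn ℝ Set.univ F)
    (hdiam : BddAbove {z | ∃ x ∈ D, ∃ y ∈ D, z = F x - F y})
    (M : ℕ → Ω → Fin m → ℝ) (hM : Martingale M 𝔉 P)
    (hMD : ∀ t ≤ n, ∀ᵐ ω ∂P, M t ω ∈ D)
    (Δ : ℕ → Ω → ℝ) (hΔ : ∀ t < n, Integrable (Δ t) P)
    (α β : ℝ) (hβ : 0 ≤ β)
    (hbound : ∀ t < n, ∀ᵐ ω ∂P,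
      (P[Δ t | 𝔉 t]) ω ≤
        α + Real.sqrt (β * (P[fun ω' => bregman F (M (t + 1) ω') (M t ω') | 𝔉 t]) ω)) :
    ∫ ω, (∑ t ∈ Finset.range n, Δ t ω) ∂P ≤ α * n + Real.sqrt (n * β * bregDiam F D) := by
  obtain ⟨ω₀, hω₀⟩ := (hMD 0 n.zero_le).exists
  have hFM : ∀ t ≤ n, Integrable (fun ω => F (M t ω)) P := fun t ht =>
    integrable_comp_of_ae_mem hF.locallyLipschitz.continuous hdiam hω₀
      ((hM.stronglyAdapted t).mono (𝔉.le t)).aestronglyMeasurable (hMD t ht)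
  have hround : ∀ t ∈ Finset.range n, ∫ ω, Δ t ω ∂P
      ≤ α + √(β * ∫ ω, bregman F (M (t + 1) ω) (M t ω) ∂P) := fun t ht =>
    integral_le_add_sqrt_integral (𝔉.le t) hβ (ae_of_all _ fun _ => hF.bregman_nonneg _ _)
      (hbound t (Finset.mem_range.1 ht))
  have hbreg : ∀ t ∈ Finset.range n, ∫ ω, bregman F (M (t + 1) ω) (M t ω) ∂P
      ≤ ∫ ω, F (M (t + 1) ω) ∂P - ∫ ω, F (M t ω) ∂P := fun t ht =>
    hF.integral_bregman_le (𝔉.le t) (hM.stronglyAdapted t) (hM.integrable t)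
      (hM.integrable (t + 1)) (hM.condExp_ae_eq t.le_succ) (hFM t (Finset.mem_range.1 ht).le)
      (hFM (t + 1) (Finset.mem_range.1 ht))
  have htelescope : ∑ t ∈ Finset.range n, ∫ ω, bregman F (M (t + 1) ω) (M t ω) ∂P
      ≤ bregDiam F D := by
    refine (Finset.sum_le_sum hbreg).trans ?_
    rw [Finset.sum_range_sub (fun t => ∫ ω, F (M t ω) ∂P)]
    exact integral_sub_le_bregDiam hdiam (hFM n le_rfl) (hFM 0 n.zero_le) (hMD n le_rfl)
      (hMD 0 n.zero_le)
  rw [integral_finsetSum _ fun t ht => hΔ t (Finset.mem_range.1 ht)]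
  simpa using sum_le_mul_add_sqrt hβ (fun t => integral_nonneg fun _ => hF.bregman_nonneg _ _)
    hround htelescope

/-- **Generalised information-theoretic regret bound.**  If an adapted martingale `M`
with values in `D` and convex potential `F` with finite `F`-diameter on `D` satisfy
`E[Δ_t | 𝔉_t] ≤ α + √(β E[D_F(M_{t+1}, M_t) | 𝔉_t])` a.s. for all rounds `t`, then
`E[∑_t Δ_t] ≤ α n + √(n β diam_F(D))`.  (Rounds are indexed `0, …, n-1` and the
martingale is indexed `0, …, n`.) -/
theorem bregman_regret_bound {Ω : Type*} {mΩ : MeasurableSpace Ω}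
    {P : Measure Ω} [IsProbabilityMeasure P] {m n : ℕ}
    (𝔉 : Filtration ℕ mΩ)
    (D : Set (Fin m → ℝ)) (F : (Fin m → ℝ) → ℝ)
    (hF : ConvexOn ℝ Set.univ F)
    (hdiam : BddAbove {z | ∃ x ∈ D, ∃ y ∈ D, z = F x - F y})
    (M : ℕ → Ω → Fin m → ℝ) (hM : Martingale M 𝔉 P)
    (hMD : ∀ t ≤ n, ∀ᵐ ω ∂P, M t ω ∈ D)
    (Δ : ℕ → Ω → ℝ) (hΔ : ∀ t < n, Integrable (Δ t) P)
    (α β : ℝ) (hα : 0 ≤ α) (hβ : 0 ≤ β)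
    (hmeas : ∀ t < n, Measurable fun ω => bregman F (M (t + 1) ω) (M t ω))
    (hbound : ∀ t < n, ∀ᵐ ω ∂P,
      (P[Δ t | 𝔉 t]) ω ≤
        α + Real.sqrt (β * (P[fun ω' => bregman F (M (t + 1) ω') (M t ω') | 𝔉 t]) ω)) :
    ∫ ω, (∑ t ∈ Finset.range n, Δ t ω) ∂P ≤ α * n + Real.sqrt (n * β * bregDiam F D) :=
  bregman_regret_bound_general 𝔉 D F hF hdiam M hM hMD Δ hΔ α β hβ hbound

end
end

section
/- (Russo–Van Roy information-theoretic regret bound, stated via the posterior-martingale form.) Let (Ω,𝔉,P) be a probability space with a filtration (𝔉_t)_{t=1}^{n+1}, let A* : Ω → [k] be measurable, and for each t let P*_t be the Δ^{k−1}-valued random vector with coordinates P*_{t,a} = P(A* = a | 𝔉_t). Let F be the unnormalised negentropy F(p) = ∑_{a=1}^k (p_a log p_a − p_a) (with 0 log 0 = 0), whose Bregman divergence on probability vectors is the relative entropy D_F(p,q) = ∑_{a=1}^k p_a log(p_a/q_a); the conditional expectation E[D_F(P*_{t+1},P*_t) | 𝔉_t] equals the conditional mutual information gained about A* in round t. Let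 Δ_1,…,Δ_n be integrable real random variables and β ≥ 0 a constant such that for every t ∈ {1,…,n}, E[Δ_t | 𝔉_t] ≤ sqrt(β · E[D_F(P*_{t+1},P*_t) | 𝔉_t]) almost surely. Then E[∑_{t=1}^n Δ_t] ≤ sqrt(n β log k). -/
/-!
The expected information gain `E[D(P*_{t+1}, P*_t)]` is exactly the drop `H_t - H_{t+1}` of the
conditional entropy `H_t = E[∑ₐ -P*_{t,a} log P*_{t,a}]` of `A*`: the cross term
`E[P*_{t+1,a} (-log P*_{t,a})]` equals `E[P*_{t,a} (-log P*_{t,a})]` by the tower property, which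
is applied to Lebesgue integrals because `-log P*_{t,a}` is unbounded. Hence the gains telescope
to at most `H_0 ≤ log k`. Bounding `√(β x) ≤ β x / (2γ) + γ / 2` inside the expectation gives
`E[∑ Δ_t] ≤ β log k / (2γ) + n γ / 2` for every `γ > 0`, and the optimal `γ` gives
`√(n β log k)`.
-/

open MeasureTheory
open scoped BigOperators

noncomputable section

/-- The relative entropy between two probability vectors, which is the Bregman
divergence of the unnormalised negentropy `F(p) = ∑ₐ (pₐ log pₐ − pₐ)` on probability
vectors (with the convention `0 log 0 = 0`). -/
def klDiv {k : ℕ} (p q : Fin k → ℝ) : ℝ :=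
  ∑ a : Fin k, p a * Real.log (p a / q a)

/-- The posterior distribution of `A*` given a `σ`-algebra: the vector of conditional
probabilities `P(A* = a | m')`. -/
def posterior {Ω : Type*} {mΩ : MeasurableSpace Ω} (P : Measure Ω) {k : ℕ}
    (Astar : Ω → Fin k) (m' : MeasurableSpace Ω) : Ω → Fin k → ℝ :=
  fun ω a => (P[fun ω' => if Astar ω' = a then (1 : ℝ) else 0 | m']) ω

open Real Finset
open scoped ENNReal

theorem sub_le_mul_log_div {x y : ℝ} (hx : 0 ≤ x) (hy : 0 ≤ y) (hxy : y = 0 → x = 0) :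
    x - y ≤ x * log (x / y) := by
  rcases hx.eq_or_lt with rfl | hx
  · simpa using hy
  have hy : 0 < y := hy.lt_of_ne' fun h => hx.ne' (hxy h)
  calc x - y = x * (1 - (x / y)⁻¹) := by field_simp
    _ ≤ x * log (x / y) := by gcongr; exact one_sub_inv_le_log_of_pos (div_pos hx hy)

theorem klDiv_nonneg {k : ℕ} {p q : Fin k → ℝ} (hp : ∀ a, 0 ≤ p a) (hq : ∀ a, 0 ≤ q a)
    (hpq : ∀ a, q a = 0 → p a = 0) (hsum : ∑ a, q a ≤ ∑ a, p a) : 0 ≤ klDiv p q :=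
  calc 0 ≤ ∑ a, (p a - q a) := by rw [sum_sub_distrib]; linarith
    _ ≤ klDiv p q := sum_le_sum fun a _ => sub_le_mul_log_div (hp a) (hq a) (hpq a)

theorem klDiv_eq_sum_mul_neg_log_sub {k : ℕ} (p q : Fin k → ℝ) (hpq : ∀ a, q a = 0 → p a = 0) :
    klDiv p q = ∑ a, p a * -log (q a) - ∑ a, negMulLog (p a) := by
  rw [klDiv, ← sum_sub_distrib]
  refine sum_congr rfl fun a _ => ?_
  by_cases hp : p a = 0
  · simp [hp]
  · rw [log_div hp (mt (hpq a) hp), negMulLog]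
    ring

theorem sum_negMulLog_nonneg {k : ℕ} {p : Fin k → ℝ} (hp : p ∈ stdSimplex ℝ (Fin k)) :
    0 ≤ ∑ a, negMulLog (p a) :=
  sum_nonneg fun a _ => negMulLog_nonneg (hp.1 a) (mem_Icc_of_mem_stdSimplex hp a).2

theorem sum_negMulLog_le_log_card {k : ℕ} {p : Fin k → ℝ} (hp : p ∈ stdSimplex ℝ (Fin k)) :
    ∑ a, negMulLog (p a) ≤ log k := by
  have hk : (0 : ℝ) < k := by
    rcases Nat.eq_zero_or_pos k with rfl | hk
    · simpa using hp.2
    · exact_mod_cast hk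
  have hu : ∀ a, ((fun _ => (k : ℝ)⁻¹) : Fin k → ℝ) a = 0 → p a = 0 :=
    fun _ h => absurd h (inv_ne_zero hk.ne')
  have h := klDiv_nonneg hp.1 (fun _ => inv_nonneg.2 hk.le) hu (by simp [hp.2, hk.ne'])
  rw [klDiv_eq_sum_mul_neg_log_sub _ _ hu] at h
  simp only [log_inv, neg_neg, ← sum_mul, hp.2, one_mul] at h
  linarith

theorem sqrt_le_div_add {x γ : ℝ} (hx : 0 ≤ x) (hγ : 0 < γ) : √x ≤ x / (2 * γ) + γ / 2 := by
  rw [div_add_div _ _ (by positivity) two_ne_zero, le_div_iff₀ (by positivity)]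
  nlinarith [sq_nonneg (√x - γ), sq_sqrt hx]

theorem le_sqrt_of_forall_le_div_add {a b X : ℝ} (hb : 0 < b)
    (h : ∀ γ > 0, X ≤ a / (2 * γ) + b * γ / 2) : X ≤ √(b * a) := by
  by_contra! hX
  have hX0 : 0 < X := (sqrt_nonneg _).trans_lt hX
  have hba : b * a < X ^ 2 := (sqrt_lt' hX0).1 hX
  have := h (X / b) (div_pos hX0 hb)
  field_simp at this
  nlinarith

section ConditionalExpectation

variable {Ω : Type*} {m mΩ : MeasurableSpace Ω} {μ : Measure Ω}

theorem ae_eq_zero_of_condExp_eq_zero (hm : m ≤ mΩ) [SigmaFinite (μ.trim hm)] {f : Ω → ℝ}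
    (hf : Integrable f μ) (hf0 : 0 ≤ᵐ[μ] f) : ∀ᵐ ω ∂μ, μ[f|m] ω = 0 → f ω = 0 := by
  have hS : MeasurableSet[m] {ω | μ[f|m] ω = 0} :=
    stronglyMeasurable_condExp.measurableSet_eq_fun stronglyMeasurable_const
  have h : ∫ ω in {ω | μ[f|m] ω = 0}, f ω ∂μ = 0 := by
    rw [← setIntegral_condExp hm hf hS]
    exact setIntegral_eq_zero_of_forall_eq_zero fun ω hω => hω
  rw [setIntegral_eq_zero_iff_of_nonneg_ae (ae_restrict_of_ae hf0) hf.integrableOn] at h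
  exact ae_imp_of_ae_restrict h

theorem lintegral_condLExp_mul (hm : m ≤ mΩ) [SigmaFinite (μ.trim hm)] {X g : Ω → ℝ≥0∞}
    (hX : AEMeasurable X μ) (hg : Measurable[m] g) :
    ∫⁻ ω, μ⁻[X|m] ω * g ω ∂μ = ∫⁻ ω, X ω * g ω ∂μ := by
  have htrim : (μ.withDensity μ⁻[X|m]).trim hm = (μ.withDensity X).trim hm := by
    refine @Measure.ext _ m _ _ fun s hs => ?_
    rw [trim_measurableSet_eq hm hs, trim_measurableSet_eq hm hs, withDensity_apply _ (hm s hs),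
      withDensity_apply _ (hm s hs), setLIntegral_condLExp hm μ X hs]
  have hg' : AEMeasurable g μ := (hg.mono hm le_rfl).aemeasurable
  calc ∫⁻ ω, μ⁻[X|m] ω * g ω ∂μ = ∫⁻ ω, g ω ∂(μ.withDensity μ⁻[X|m]) :=
        (lintegral_withDensity_eq_lintegral_mul₀ (measurable_condLExp' m μ X).aemeasurable hg').symm
    _ = ∫⁻ ω, g ω ∂((μ.withDensity X).trim hm) := by rw [← htrim, lintegral_trim hm hg]
    _ = ∫⁻ ω, X ω * g ω ∂μ := by
      rw [lintegral_trim hm hg, lintegral_withDensity_eq_lintegral_mul₀ hX hg']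
      rfl

theorem lintegral_ofReal_condExp_mul (hm : m ≤ mΩ) [SigmaFinite (μ.trim hm)] {f : Ω → ℝ}
    (hf : Integrable f μ) (hf0 : 0 ≤ᵐ[μ] f) {g : Ω → ℝ≥0∞} (hg : Measurable[m] g) :
    ∫⁻ ω, ENNReal.ofReal (μ[f|m] ω) * g ω ∂μ = ∫⁻ ω, ENNReal.ofReal (f ω) * g ω ∂μ := by
  rw [← lintegral_condLExp_mul hm hf.aemeasurable.ennreal_ofReal hg]
  refine lintegral_congr_ae ?_
  filter_upwards [condLExp_ofReal m hf hf0] with ω hω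
  rw [hω]

theorem integrable_and_integral_eq_of_lintegral_ofReal_eq {f g : Ω → ℝ}
    (hf : AEStronglyMeasurable f μ) (hf0 : 0 ≤ᵐ[μ] f) (hg : Integrable g μ) (hg0 : 0 ≤ᵐ[μ] g)
    (h : ∫⁻ ω, ENNReal.ofReal (f ω) ∂μ = ∫⁻ ω, ENNReal.ofReal (g ω) ∂μ) :
    Integrable f μ ∧ ∫ ω, f ω ∂μ = ∫ ω, g ω ∂μ :=
  ⟨⟨hf, (hasFiniteIntegral_iff_ofReal hf0).2 (h ▸ (hasFiniteIntegral_iff_ofReal hg0).1 hg.2)⟩,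
    by rw [integral_eq_lintegral_of_nonneg_ae hf0 hf,
      integral_eq_lintegral_of_nonneg_ae hg0 hg.1, h]⟩

theorem integral_le_of_condExp_le_sqrt [IsProbabilityMeasure μ] (hm : m ≤ mΩ) {X Y : Ω → ℝ}
    (hY : 0 ≤ᵐ[μ] Y) {β γ : ℝ} (hβ : 0 ≤ β) (hγ : 0 < γ)
    (h : ∀ᵐ ω ∂μ, μ[X|m] ω ≤ √(β * μ[Y|m] ω)) :
    ∫ ω, X ω ∂μ ≤ β / (2 * γ) * ∫ ω, Y ω ∂μ + γ / 2 :=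
  calc ∫ ω, X ω ∂μ = ∫ ω, μ[X|m] ω ∂μ := (integral_condExp hm).symm
    _ ≤ ∫ ω, (β / (2 * γ) * μ[Y|m] ω + γ / 2) ∂μ := by
      refine integral_mono_ae integrable_condExp
        ((integrable_condExp.const_mul _).add (integrable_const _)) ?_
      filter_upwards [h, condExp_nonneg (m := m) hY] with ω hX hY
      calc μ[X|m] ω ≤ √(β * μ[Y|m] ω) := hX
        _ ≤ β * μ[Y|m] ω / (2 * γ) + γ / 2 := sqrt_le_div_add (mul_nonneg hβ hY) hγ
        _ = β / (2 * γ) * μ[Y|m] ω + γ / 2 := by ring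
    _ = β / (2 * γ) * ∫ ω, Y ω ∂μ + γ / 2 := by
      rw [integral_add (integrable_condExp.const_mul _) (integrable_const _), integral_const_mul,
        integral_condExp hm]
      simp

end ConditionalExpectation

section Posterior

variable {Ω : Type*} {m m₁ m₂ mΩ : MeasurableSpace Ω} {P : Measure Ω} {k : ℕ}
  {Astar : Ω → Fin k}

theorem stronglyMeasurable_posterior (a : Fin k) :
    StronglyMeasurable[m] fun ω => posterior P Astar m ω a :=
  stronglyMeasurable_condExp

theorem integrable_ite_eq [IsFiniteMeasure P] (hA : Measurable Astar) (a : Fin k) :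
    Integrable (fun ω => if Astar ω = a then (1 : ℝ) else 0) P :=
  have hmeas : Measurable fun ω => if Astar ω = a then (1 : ℝ) else 0 :=
    Measurable.ite (measurableSet_eq_fun hA measurable_const) measurable_const measurable_const
  Integrable.of_bound hmeas.aestronglyMeasurable 1 (ae_of_all _ fun ω => by split_ifs <;> simp)

theorem ae_posterior_mem_stdSimplex [IsFiniteMeasure P] (hA : Measurable Astar)
    (hm : m ≤ mΩ) : ∀ᵐ ω ∂P, posterior P Astar m ω ∈ stdSimplex ℝ (Fin k) := by
  have hnonneg : ∀ᵐ ω ∂P, ∀ a, 0 ≤ posterior P Astar m ω a :=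
    ae_all_iff.2 fun a => condExp_nonneg (ae_of_all _ fun _ => ite_nonneg zero_le_one le_rfl)
  have hsum := condExp_finsetSum (μ := P) (s := univ)
    (fun a _ => integrable_ite_eq (P := P) hA a) m
  have hone : ∑ a : Fin k, (fun ω => if Astar ω = a then (1 : ℝ) else 0) = fun _ => 1 := by
    ext ω
    simp [Finset.sum_apply]
  rw [hone, condExp_const hm] at hsum
  filter_upwards [hnonneg, hsum] with ω h0 h1
  exact ⟨h0, by simpa [posterior, Finset.sum_apply] using h1.symm⟩

theorem condExp_posterior (h12 : m₁ ≤ m₂) (hm₂ : m₂ ≤ mΩ) [SigmaFinite (P.trim hm₂)]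
    (a : Fin k) :
    P[fun ω => posterior P Astar m₂ ω a|m₁] =ᵐ[P] fun ω => posterior P Astar m₁ ω a :=
  condExp_condExp_of_le h12 hm₂

theorem ae_posterior_eq_zero_of_eq_zero [IsFiniteMeasure P] (h12 : m₁ ≤ m₂) (hm₂ : m₂ ≤ mΩ) :
    ∀ᵐ ω ∂P, ∀ a, posterior P Astar m₁ ω a = 0 → posterior P Astar m₂ ω a = 0 := by
  refine ae_all_iff.2 fun a => ?_
  filter_upwards [ae_eq_zero_of_condExp_eq_zero (h12.trans hm₂)
    (f := fun ω => posterior P Astar m₂ ω a) integrable_condExp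
    (condExp_nonneg (ae_of_all _ fun _ => ite_nonneg zero_le_one le_rfl)),
    condExp_posterior h12 hm₂ a] with ω h hω
  rwa [hω] at h

theorem lintegral_posterior_mul_neg_log [IsFiniteMeasure P] (hA : Measurable Astar)
    (h12 : m₁ ≤ m₂) (hm₂ : m₂ ≤ mΩ) (a : Fin k) :
    ∫⁻ ω, ENNReal.ofReal (posterior P Astar m₂ ω a) *
        ENNReal.ofReal (-log (posterior P Astar m₁ ω a)) ∂P =
      ∫⁻ ω, ENNReal.ofReal (posterior P Astar m₁ ω a) *
        ENNReal.ofReal (-log (posterior P Astar m₁ ω a)) ∂P := by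
  have hg : Measurable[m₁] fun ω => ENNReal.ofReal (-log (posterior P Astar m₁ ω a)) :=
    (stronglyMeasurable_posterior a).measurable.log.neg.ennreal_ofReal
  have h0 : 0 ≤ᵐ[P] fun ω => if Astar ω = a then (1 : ℝ) else 0 :=
    ae_of_all _ fun _ => ite_nonneg zero_le_one le_rfl
  exact (lintegral_ofReal_condExp_mul hm₂ (integrable_ite_eq hA a) h0 (hg.mono h12 le_rfl)).trans
    (lintegral_ofReal_condExp_mul (h12.trans hm₂) (integrable_ite_eq hA a) h0 hg).symm

theorem integrable_negMulLog_posterior [IsFiniteMeasure P] (hA : Measurable Astar)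
    (hm : m ≤ mΩ) (a : Fin k) :
    Integrable (fun ω => negMulLog (posterior P Astar m ω a)) P := by
  refine .of_bound (continuous_negMulLog.measurable.comp
    ((stronglyMeasurable_posterior a).mono hm).measurable).aestronglyMeasurable 1 ?_
  filter_upwards [ae_posterior_mem_stdSimplex hA hm] with ω h
  have h01 := mem_Icc_of_mem_stdSimplex h a
  rw [norm_of_nonneg (negMulLog_nonneg h01.1 h01.2)]
  linarith [negMulLog_le_one_sub_self h01.1, h01.1]

theorem integrable_posterior_mul_neg_log_and_integral_eq [IsFiniteMeasure P]
    (hA : Measurable Astar) (h12 : m₁ ≤ m₂) (hm₂ : m₂ ≤ mΩ) (a : Fin k) :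
    Integrable (fun ω => posterior P Astar m₂ ω a * -log (posterior P Astar m₁ ω a)) P ∧
      ∫ ω, posterior P Astar m₂ ω a * -log (posterior P Astar m₁ ω a) ∂P =
        ∫ ω, negMulLog (posterior P Astar m₁ ω a) ∂P := by
  have hm₁ := h12.trans hm₂
  have hΔ₁ := ae_posterior_mem_stdSimplex (P := P) hA hm₁
  have hΔ₂ := ae_posterior_mem_stdSimplex (P := P) hA hm₂
  refine integrable_and_integral_eq_of_lintegral_ofReal_eq
    ((((stronglyMeasurable_posterior a).mono hm₂).measurable.mul
      ((stronglyMeasurable_posterior a).mono hm₁).measurable.log.neg).aestronglyMeasurable)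
    ?_ (integrable_negMulLog_posterior hA hm₁ a) ?_ ?_
  · filter_upwards [hΔ₁, hΔ₂] with ω h₁ h₂
    exact mul_nonneg (h₂.1 a)
      (neg_nonneg.2 (log_nonpos (h₁.1 a) (mem_Icc_of_mem_stdSimplex h₁ a).2))
  · filter_upwards [hΔ₁] with ω h
    exact negMulLog_nonneg (h.1 a) (mem_Icc_of_mem_stdSimplex h a).2
  · calc ∫⁻ ω, ENNReal.ofReal (posterior P Astar m₂ ω a * -log (posterior P Astar m₁ ω a)) ∂P
        = ∫⁻ ω, ENNReal.ofReal (posterior P Astar m₂ ω a) *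
            ENNReal.ofReal (-log (posterior P Astar m₁ ω a)) ∂P :=
          lintegral_congr_ae (by filter_upwards [hΔ₂] with ω h using ENNReal.ofReal_mul (h.1 a))
      _ = ∫⁻ ω, ENNReal.ofReal (posterior P Astar m₁ ω a) *
            ENNReal.ofReal (-log (posterior P Astar m₁ ω a)) ∂P :=
          lintegral_posterior_mul_neg_log hA h12 hm₂ a
      _ = ∫⁻ ω, ENNReal.ofReal (negMulLog (posterior P Astar m₁ ω a)) ∂P := by
          refine lintegral_congr_ae ?_
          filter_upwards [hΔ₁] with ω h
          rw [← ENNReal.ofReal_mul (h.1 a), negMulLog, neg_mul, mul_neg]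

/-- The conditional entropy `H(A* | m)`. -/
def posteriorEntropy {Ω : Type*} {mΩ : MeasurableSpace Ω} (P : Measure Ω) {k : ℕ}
    (Astar : Ω → Fin k) (m : MeasurableSpace Ω) : ℝ :=
  ∫ ω, ∑ a, negMulLog (posterior P Astar m ω a) ∂P

theorem posteriorEntropy_nonneg [IsFiniteMeasure P] (hA : Measurable Astar) (hm : m ≤ mΩ) :
    0 ≤ posteriorEntropy P Astar m :=
  integral_nonneg_of_ae <| by
    filter_upwards [ae_posterior_mem_stdSimplex hA hm] with ω h using sum_negMulLog_nonneg h

theorem posteriorEntropy_le_log [IsProbabilityMeasure P] (hA : Measurable Astar) (hm : m ≤ mΩ) :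
    posteriorEntropy P Astar m ≤ log k := by
  calc posteriorEntropy P Astar m ≤ ∫ _, log k ∂P :=
        integral_mono_ae (integrable_finsetSum _ fun a _ => integrable_negMulLog_posterior hA hm a)
          (integrable_const _) (by
            filter_upwards [ae_posterior_mem_stdSimplex hA hm] with ω h
            exact sum_negMulLog_le_log_card h)
    _ = log k := by simp

theorem ae_klDiv_posterior_nonneg [IsFiniteMeasure P] (hA : Measurable Astar)
    (h12 : m₁ ≤ m₂) (hm₂ : m₂ ≤ mΩ) :
    0 ≤ᵐ[P] fun ω => klDiv (posterior P Astar m₂ ω) (posterior P Astar m₁ ω) := by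
  filter_upwards [ae_posterior_mem_stdSimplex hA (h12.trans hm₂),
    ae_posterior_mem_stdSimplex hA hm₂, ae_posterior_eq_zero_of_eq_zero h12 hm₂]
    with ω h₁ h₂ habs
  exact klDiv_nonneg h₂.1 h₁.1 habs (by rw [h₁.2, h₂.2])

theorem integral_klDiv_posterior [IsFiniteMeasure P] (hA : Measurable Astar)
    (h12 : m₁ ≤ m₂) (hm₂ : m₂ ≤ mΩ) :
    ∫ ω, klDiv (posterior P Astar m₂ ω) (posterior P Astar m₁ ω) ∂P =
      posteriorEntropy P Astar m₁ - posteriorEntropy P Astar m₂ := by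
  have hcross a := integrable_posterior_mul_neg_log_and_integral_eq (P := P) hA h12 hm₂ a
  calc ∫ ω, klDiv (posterior P Astar m₂ ω) (posterior P Astar m₁ ω) ∂P
      = ∫ ω, (∑ a, posterior P Astar m₂ ω a * -log (posterior P Astar m₁ ω a) -
          ∑ a, negMulLog (posterior P Astar m₂ ω a)) ∂P := by
        refine integral_congr_ae ?_
        filter_upwards [ae_posterior_eq_zero_of_eq_zero h12 hm₂] with ω h
        exact klDiv_eq_sum_mul_neg_log_sub _ _ h
    _ = ∑ a, ∫ ω, negMulLog (posterior P Astar m₁ ω a) ∂P - posteriorEntropy P Astar m₂ := by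
        rw [integral_sub (integrable_finsetSum _ fun a _ => (hcross a).1)
          (integrable_finsetSum _ fun a _ => integrable_negMulLog_posterior hA hm₂ a),
          integral_finsetSum _ fun a _ => (hcross a).1]
        simp only [fun a => (hcross a).2]
        rfl
    _ = posteriorEntropy P Astar m₁ - posteriorEntropy P Astar m₂ := by
        rw [posteriorEntropy, posteriorEntropy, integral_finsetSum _ fun a _ =>
          integrable_negMulLog_posterior hA (h12.trans hm₂) a]

theorem sum_integral_klDiv_posterior_le_log [IsProbabilityMeasure P] (hA : Measurable Astar)
    (𝔉 : Filtration ℕ mΩ) (n : ℕ) :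
    ∑ t ∈ range n, ∫ ω, klDiv (posterior P Astar (𝔉 (t + 1)) ω) (posterior P Astar (𝔉 t) ω) ∂P ≤
      log k := by
  rw [sum_congr rfl fun t _ => integral_klDiv_posterior hA (𝔉.mono t.le_succ) (𝔉.le (t + 1)),
    sum_range_sub']
  linarith [posteriorEntropy_le_log (P := P) hA (𝔉.le 0),
    posteriorEntropy_nonneg (P := P) hA (𝔉.le n)]

end Posterior

theorem russo_van_roy_regret_bound_general {Ω : Type*} {mΩ : MeasurableSpace Ω}
    {P : Measure Ω} [IsProbabilityMeasure P] {k n : ℕ}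
    (𝔉 : Filtration ℕ mΩ)
    (Astar : Ω → Fin k) (hA : Measurable Astar)
    (Δ : ℕ → Ω → ℝ) (hΔ : ∀ t < n, Integrable (Δ t) P)
    (β : ℝ) (hβ : 0 ≤ β)
    (hbound : ∀ t < n, ∀ᵐ ω ∂P,
      (P[Δ t | 𝔉 t]) ω ≤
        Real.sqrt (β *
          (P[fun ω' => klDiv (posterior P Astar (𝔉 (t + 1)) ω')
              (posterior P Astar (𝔉 t) ω') | 𝔉 t]) ω)) :
    ∫ ω, (∑ t ∈ Finset.range n, Δ t ω) ∂P ≤ Real.sqrt (n * β * Real.log k) := by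
  rcases Nat.eq_zero_or_pos n with rfl | hn
  · simp
  set I := fun t => ∫ ω, klDiv (posterior P Astar (𝔉 (t + 1)) ω) (posterior P Astar (𝔉 t) ω) ∂P
  have hI : ∑ t ∈ range n, I t ≤ log k := sum_integral_klDiv_posterior_le_log hA 𝔉 n
  rw [mul_assoc]
  refine le_sqrt_of_forall_le_div_add (Nat.cast_pos.2 hn) fun γ hγ => ?_
  calc ∫ ω, ∑ t ∈ range n, Δ t ω ∂P = ∑ t ∈ range n, ∫ ω, Δ t ω ∂P :=
        integral_finsetSum _ fun t ht => hΔ t (mem_range.1 ht)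
    _ ≤ ∑ t ∈ range n, (β / (2 * γ) * I t + γ / 2) :=
        sum_le_sum fun t ht => integral_le_of_condExp_le_sqrt (𝔉.le t)
          (ae_klDiv_posterior_nonneg hA (𝔉.mono t.le_succ) (𝔉.le (t + 1))) hβ hγ
          (hbound t (mem_range.1 ht))
    _ = β / (2 * γ) * ∑ t ∈ range n, I t + n * γ / 2 := by
        rw [sum_add_distrib, ← mul_sum, sum_const, card_range, nsmul_eq_mul]
        ring
    _ ≤ β / (2 * γ) * log k + n * γ / 2 := by gcongr
    _ = β * log k / (2 * γ) + n * γ / 2 := by ring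

/-- **Russo–Van Roy information-theoretic regret bound** (posterior-martingale form).
If the one-step regret is bounded by `√(β E_t[D(P*_{t+1} ‖ P*_t)])`, where `P*_t` is
the posterior distribution of the optimal action `A*` given `𝔉_t` and `D` is the
relative entropy (the Bregman divergence of the unnormalised negentropy, whose
conditional expectation is the conditional information gain about `A*`), then the
total expected regret is at most `√(n β log k)`. -/
theorem russo_van_roy_regret_bound {Ω : Type*} {mΩ : MeasurableSpace Ω}
    {P : Measure Ω} [IsProbabilityMeasure P] {k n : ℕ} (hk : 1 ≤ k)
    (𝔉 : Filtration ℕ mΩ)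
    (Astar : Ω → Fin k) (hA : Measurable Astar)
    (Δ : ℕ → Ω → ℝ) (hΔ : ∀ t < n, Integrable (Δ t) P)
    (β : ℝ) (hβ : 0 ≤ β)
    (hbound : ∀ t < n, ∀ᵐ ω ∂P,
      (P[Δ t | 𝔉 t]) ω ≤
        Real.sqrt (β *
          (P[fun ω' => klDiv (posterior P Astar (𝔉 (t + 1)) ω')
              (posterior P Astar (𝔉 t) ω') | 𝔉 t]) ω)) :
    ∫ ω, (∑ t ∈ Finset.range n, Δ t ω) ∂P ≤ Real.sqrt (n * β * Real.log k) :=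
  russo_van_roy_regret_bound_general 𝔉 Astar hA Δ hΔ β hβ hbound

end
end

section
/- (One-round Thompson-sampling lemma for bandits.) Let (Ω,𝔉,P) be a probability space, X : Ω → [0,1]^k and A* : Ω → [k] measurable, and let p ∈ Δ^{k−1} be given by p_a = P(A* = a). Let F(q) = −2 ∑_{a=1}^k sqrt(q_a) on [0,∞)^k, whose Bregman divergence is D_F(q,p) = ∑_{c : q_c ≠ p_c} (sqrt(q_c) − sqrt(p_c))² / sqrt(p_c) (interpreted as +∞ when p_c = 0 < q_c). For each a with p_a > 0 let Q^a be the Δ^{k−1}-valued random vector with coordinates Q^a_c = P(A* = c | σ(X_a)). Then ∑_{a : p_a > 0} p_a (E[X_a] − E[X_a | A* = a]) ≤ sqrt( k^{1/2} · ∑_{a : p_a > 0} p_a E[D_F(Q^a, p)] ), where E[X_a | A* = a] = E[X_a 1_{A* = a}] / p_a. (This is the round-t claim of the lemma with 𝔉_t trivial: when A_t is drawn from the posterior p independently of X, the conditional one-step regret is bounded by the square root of k^{1/2} times the expected Bregman information gain about A*.) -/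
/-!
For an arm `a` write `q = Qᵃ_a`. Since `E[q] = p_a` and `E[X_a q] = E[X_a 1_{A* = a}]`, the
`a`-th regret term equals `E[(X_a - 1/2)(p_a - q)]`. Factoring
`p_a - q = (√p_a - √q)(√p_a + √q)` and applying AM-GM with a free weight `u > 0` bounds it by
`(u/4) p_a E[(√q - √p_a)² / √p_a] + √p_a / u`, and the first expectation is at most
`E[D_F(Qᵃ, p)]`. Summing over the arms, `∑ √p_a ≤ √k` by Cauchy-Schwarz, and optimizing
over `u` gives the square root.
-/

open MeasureTheory
open scoped BigOperators

noncomputable section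

/-- The Bregman divergence of the potential `F(q) = −2 ∑ₐ √qₐ`:
`D_F(q, p) = ∑_{c : q_c ≠ p_c} (√q_c − √p_c)² / √p_c` (with the division-by-zero
convention for the coordinates with `p_c = 0 < q_c`). -/
def sqrtBregman {k : ℕ} (q p : Fin k → ℝ) : ℝ :=
  ∑ c : Fin k,
    if q c = p c then 0 else (Real.sqrt (q c) - Real.sqrt (p c)) ^ 2 / Real.sqrt (p c)

open Set

lemma sqrtBregman_eq_sum {k : ℕ} (q p : Fin k → ℝ) :
    sqrtBregman q p = ∑ c, (Real.sqrt (q c) - Real.sqrt (p c)) ^ 2 / Real.sqrt (p c) := by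
  refine Finset.sum_congr rfl fun c _ => ?_
  split_ifs with h
  · simp [h]
  · rfl

lemma sqrtBregman_nonneg {k : ℕ} (q p : Fin k → ℝ) : 0 ≤ sqrtBregman q p := by
  rw [sqrtBregman_eq_sum]
  positivity

lemma sq_sqrt_sub_div_le_sqrtBregman {k : ℕ} (q p : Fin k → ℝ) (a : Fin k) :
    (Real.sqrt (q a) - Real.sqrt (p a)) ^ 2 / Real.sqrt (p a) ≤ sqrtBregman q p := by
  rw [sqrtBregman_eq_sum]
  exact Finset.single_le_sum
    (f := fun c => (Real.sqrt (q c) - Real.sqrt (p c)) ^ 2 / Real.sqrt (p c))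
    (fun c _ => by positivity) (Finset.mem_univ a)

/-- AM-GM, after factoring `π - q = (√π - √q) (√π + √q)` and using `|x - 1/2| ≤ 1/2`. -/
lemma sub_half_mul_sub_le {x q π u : ℝ} (hx : x ∈ Icc (0 : ℝ) 1) (hq : 0 ≤ q) (hπ : 0 < π)
    (hu : 0 < u) :
    (x - 1 / 2) * (π - q) ≤
      u * Real.sqrt π / 4 * (Real.sqrt q - Real.sqrt π) ^ 2 +
        (Real.sqrt π + Real.sqrt q) ^ 2 / (4 * u * Real.sqrt π) := by
  have hs : 0 < Real.sqrt π := Real.sqrt_pos.2 hπ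
  have hπ2 := Real.sq_sqrt hπ.le
  have hq2 := Real.sq_sqrt hq
  set a := Real.sqrt π
  set b := Real.sqrt q
  rw [← mul_le_mul_iff_right₀ (by positivity : (0 : ℝ) < 4 * u * a)]
  have h0 := mul_nonneg hx.1 (sq_nonneg (u * a * (a - b) - (a + b)))
  have h1 := mul_nonneg (sub_nonneg.2 hx.2) (sq_nonneg (u * a * (a - b) + (a + b)))
  calc 4 * u * a * ((x - 1 / 2) * (π - q))
      ≤ u ^ 2 * a ^ 2 * (b - a) ^ 2 + (a + b) ^ 2 := by rw [← hπ2, ← hq2]; nlinarith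
    _ = _ := by field_simp

lemma le_sqrt_mul_of_forall_le {L S c : ℝ} (hS : 0 ≤ S) (hc : 0 ≤ c)
    (h : ∀ u > 0, L ≤ u / 4 * S + c / u) : L ≤ Real.sqrt (c * S) := by
  rcases le_or_gt L 0 with hL | hL
  · exact hL.trans (Real.sqrt_nonneg _)
  refine Real.le_sqrt_of_sq_le ?_
  rcases hS.eq_or_lt with rfl | hS
  · have := h (2 * (c + 1) / L) (by positivity)
    rw [mul_zero, zero_add, le_div_iff₀ (by positivity), mul_div_cancel₀ _ hL.ne'] at this
    linarith
  · have := h (2 * L / S) (by positivity)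
    rw [show 2 * L / S / 4 * S = L / 2 by field_simp; ring, div_div_eq_mul_div,
      ← sub_le_iff_le_add', le_div_iff₀ (by positivity)] at this
    nlinarith

lemma sum_sqrt_le_sqrt_card {ι : Type*} (s : Finset ι) {f : ι → ℝ} (hf : ∀ i, 0 ≤ f i)
    (hs : ∑ i ∈ s, f i ≤ 1) : ∑ i ∈ s, Real.sqrt (f i) ≤ Real.sqrt s.card := by
  calc ∑ i ∈ s, Real.sqrt (f i)
      = ∑ i ∈ s, Real.sqrt (f i) * Real.sqrt 1 := by simp
    _ ≤ Real.sqrt (∑ i ∈ s, f i) * Real.sqrt (∑ _i ∈ s, 1) :=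
        Real.sum_sqrt_mul_sqrt_le s hf fun _ => zero_le_one
    _ ≤ 1 * Real.sqrt s.card := by
        gcongr
        · exact Real.sqrt_le_one.2 hs
        · simp
    _ = Real.sqrt s.card := one_mul _

lemma sum_le_sqrt_mul_sum_of_forall_le {ι : Type*} {s : Finset ι} {r d w : ι → ℝ} {c : ℝ}
    (hd : ∀ i ∈ s, 0 ≤ d i) (hw : ∑ i ∈ s, w i ≤ c) (hc : 0 ≤ c)
    (h : ∀ u > 0, ∀ i ∈ s, r i ≤ u / 4 * d i + w i / u) :
    ∑ i ∈ s, r i ≤ Real.sqrt (c * ∑ i ∈ s, d i) := by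
  refine le_sqrt_mul_of_forall_le (Finset.sum_nonneg hd) hc fun u hu => ?_
  calc ∑ i ∈ s, r i ≤ ∑ i ∈ s, (u / 4 * d i + w i / u) := Finset.sum_le_sum (h u hu)
    _ = u / 4 * ∑ i ∈ s, d i + (∑ i ∈ s, w i) / u := by
        rw [Finset.sum_add_distrib, Finset.mul_sum, Finset.sum_div]
    _ ≤ u / 4 * ∑ i ∈ s, d i + c / u := by gcongr

lemma norm_le_one_of_mem_Icc {x : ℝ} (hx : x ∈ Icc (0 : ℝ) 1) : ‖x‖ ≤ 1 := by
  rw [Real.norm_of_nonneg hx.1]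
  exact hx.2

section Probability

variable {Ω : Type*} {mΩ : MeasurableSpace Ω} {P : Measure Ω}

lemma integrable_comp_of_ae_mem_s6 [IsFiniteMeasure P] {K : Set ℝ} (hK : IsCompact K)
    {g : ℝ → ℝ} (hg : Continuous g) {f : Ω → ℝ} (hf : AEStronglyMeasurable f P)
    (hfK : ∀ᵐ ω ∂P, f ω ∈ K) : Integrable (fun ω => g (f ω)) P := by
  obtain ⟨C, hC⟩ := hK.exists_bound_of_continuousOn hg.continuousOn
  exact .of_bound (hg.comp_aestronglyMeasurable hf) C (hfK.mono fun ω h => hC _ h)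

lemma condExp_indicator_one_mem_Icc [IsFiniteMeasure P] {m : MeasurableSpace Ω} (hm : m ≤ mΩ)
    {s : Set Ω} (hs : MeasurableSet[mΩ] s) :
    ∀ᵐ ω ∂P, P[s.indicator (fun _ => (1 : ℝ)) | m] ω ∈ Icc 0 1 := by
  have hint : Integrable (s.indicator fun _ => (1 : ℝ)) P :=
    (integrable_const 1).indicator hs
  have h0 : 0 ≤ᵐ[P] P[s.indicator (fun _ => (1 : ℝ)) | m] :=
    condExp_nonneg (.of_forall fun ω => indicator_nonneg (fun _ _ => zero_le_one) ω)
  have h1 : P[s.indicator (fun _ => (1 : ℝ)) | m] ≤ᵐ[P] P[fun _ => (1 : ℝ) | m] :=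
    condExp_mono hint (integrable_const 1)
      (.of_forall fun ω => indicator_le_self' (fun _ _ => zero_le_one) ω)
  rw [condExp_const hm] at h1
  filter_upwards [h0, h1] with ω h0 h1 using ⟨h0, h1⟩

lemma integral_mul_condExp_indicator [IsFiniteMeasure P] {m : MeasurableSpace Ω}
    (hm : m ≤ mΩ) {Y : Ω → ℝ} (hY : StronglyMeasurable[m] Y) {C : ℝ}
    (hYC : ∀ᵐ ω ∂P, ‖Y ω‖ ≤ C) {s : Set Ω} (hs : MeasurableSet[mΩ] s) :
    ∫ ω, Y ω * P[s.indicator (fun _ => (1 : ℝ)) | m] ω ∂P = ∫ ω in s, Y ω ∂P := by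
  have hint : Integrable (s.indicator fun _ => (1 : ℝ)) P :=
    (integrable_const 1).indicator hs
  calc ∫ ω, Y ω * P[s.indicator (fun _ => (1 : ℝ)) | m] ω ∂P
      = ∫ ω, P[Y * s.indicator (fun _ => (1 : ℝ)) | m] ω ∂P :=
        integral_congr_ae (condExp_stronglyMeasurable_mul_of_bound hm hY hint C hYC).symm
    _ = ∫ ω, s.indicator Y ω ∂P := by
        rw [integral_condExp hm]
        congr 1
        ext ω
        by_cases h : ω ∈ s <;> simp [h]
    _ = ∫ ω in s, Y ω ∂P := integral_indicator hs

lemma integrable_sqrtBregman [IsFiniteMeasure P] {k : ℕ} {Q : Ω → Fin k → ℝ}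
    (hQ : ∀ c, AEStronglyMeasurable (fun ω => Q ω c) P)
    (hQ01 : ∀ c, ∀ᵐ ω ∂P, Q ω c ∈ Icc 0 1) (p : Fin k → ℝ) :
    Integrable (fun ω => sqrtBregman (Q ω) p) P := by
  simp_rw [sqrtBregman_eq_sum]
  exact integrable_finsetSum _ fun c _ =>
    integrable_comp_of_ae_mem_s6 (g := fun x => (Real.sqrt x - Real.sqrt (p c)) ^ 2 /
      Real.sqrt (p c)) isCompact_Icc (by fun_prop) (hQ c) (hQ01 c)

lemma sqrt_mul_integral_sq_le_integral_sqrtBregman [IsFiniteMeasure P] {k : ℕ}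
    {Q : Ω → Fin k → ℝ} (hQ : ∀ c, AEStronglyMeasurable (fun ω => Q ω c) P)
    (hQ01 : ∀ c, ∀ᵐ ω ∂P, Q ω c ∈ Icc 0 1) {p : Fin k → ℝ} {a : Fin k} (ha : 0 < p a) :
    Real.sqrt (p a) * ∫ ω, (Real.sqrt (Q ω a) - Real.sqrt (p a)) ^ 2 ∂P ≤
      p a * ∫ ω, sqrtBregman (Q ω) p ∂P := by
  have hsa : 0 < Real.sqrt (p a) := Real.sqrt_pos.2 ha
  have hterm : Integrable (fun ω => (Real.sqrt (Q ω a) - Real.sqrt (p a)) ^ 2) P :=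
    integrable_comp_of_ae_mem_s6 (g := fun x => (Real.sqrt x - Real.sqrt (p a)) ^ 2)
      isCompact_Icc (by fun_prop) (hQ a) (hQ01 a)
  calc Real.sqrt (p a) * ∫ ω, (Real.sqrt (Q ω a) - Real.sqrt (p a)) ^ 2 ∂P
      = p a * ∫ ω, (Real.sqrt (Q ω a) - Real.sqrt (p a)) ^ 2 / Real.sqrt (p a) ∂P := by
        rw [integral_div, mul_div_assoc', eq_div_iff hsa.ne', mul_right_comm,
          Real.mul_self_sqrt ha.le]
    _ ≤ p a * ∫ ω, sqrtBregman (Q ω) p ∂P := by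
        gcongr p a * ?_
        exact integral_mono (hterm.div_const _) (integrable_sqrtBregman hQ hQ01 p)
          fun ω => sq_sqrt_sub_div_le_sqrtBregman (Q ω) p a

variable [IsProbabilityMeasure P]

lemma sum_sqrt_measureReal_preimage_singleton_le {ι : Type*} (s : Finset ι) {f : Ω → ι}
    (hf : ∀ i ∈ s, MeasurableSet (f ⁻¹' {i})) :
    ∑ i ∈ s, Real.sqrt (P.real (f ⁻¹' {i})) ≤ Real.sqrt s.card :=
  sum_sqrt_le_sqrt_card s (fun _ => measureReal_nonneg)
    ((sum_measureReal_preimage_singleton s hf).trans_le measureReal_le_one)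

lemma mul_integral_sub_integral_mul_eq {Y q : Ω → ℝ} (hY : Integrable Y P)
    (hq : Integrable q P) (hYq : Integrable (fun ω => Y ω * q ω) P) {π : ℝ}
    (hqπ : ∫ ω, q ω ∂P = π) :
    π * ∫ ω, Y ω ∂P - ∫ ω, Y ω * q ω ∂P = ∫ ω, (Y ω - 1 / 2) * (π - q ω) ∂P := by
  have hsplit : (fun ω => (Y ω - 1 / 2) * (π - q ω)) =
      fun ω => (π * Y ω - Y ω * q ω) + (q ω - π) / 2 := by
    ext ω; ring
  rw [hsplit, integral_add (f := fun ω => π * Y ω - Y ω * q ω) (g := fun ω => (q ω - π) / 2)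
    ((hY.const_mul π).sub hYq) ((hq.sub (integrable_const π)).div_const 2),
    integral_sub (hY.const_mul π) hYq, integral_div, integral_sub hq (integrable_const π),
    integral_const_mul, hqπ]
  simp

lemma integral_sqrt_add_sqrt_sq_le {q : Ω → ℝ} (hq : Integrable q P)
    (hq0 : ∀ᵐ ω ∂P, 0 ≤ q ω) {π : ℝ} (hπ : 0 ≤ π) (hqπ : ∫ ω, q ω ∂P = π) :
    ∫ ω, (Real.sqrt π + Real.sqrt (q ω)) ^ 2 ∂P ≤ 4 * π := by
  have hbound : ∀ᵐ ω ∂P, (Real.sqrt π + Real.sqrt (q ω)) ^ 2 ≤ 2 * π + 2 * q ω := by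
    filter_upwards [hq0] with ω hqω
    nlinarith [Real.sq_sqrt hqω, Real.sq_sqrt hπ, sq_nonneg (Real.sqrt π - Real.sqrt (q ω))]
  have hdom : Integrable (fun ω => 2 * π + 2 * q ω) P :=
    (integrable_const _).add (hq.const_mul 2)
  have hint : Integrable (fun ω => (Real.sqrt π + Real.sqrt (q ω)) ^ 2) P :=
    hdom.mono' (by fun_prop (disch := exact hq.aestronglyMeasurable))
      (hbound.mono fun ω h => by rwa [Real.norm_of_nonneg (sq_nonneg _)])
  calc ∫ ω, (Real.sqrt π + Real.sqrt (q ω)) ^ 2 ∂P ≤ ∫ ω, (2 * π + 2 * q ω) ∂P :=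
        integral_mono_ae hint hdom hbound
    _ = 4 * π := by
        rw [integral_add (integrable_const _) (hq.const_mul 2), integral_const,
          integral_const_mul, hqπ]
        simp
        ring

lemma mul_integral_sub_integral_mul_le {Y q : Ω → ℝ} (hY : AEStronglyMeasurable Y P)
    (hq : AEStronglyMeasurable q P) (hY01 : ∀ᵐ ω ∂P, Y ω ∈ Icc 0 1)
    (hq01 : ∀ᵐ ω ∂P, q ω ∈ Icc 0 1) {π u : ℝ} (hπ : 0 < π) (hqπ : ∫ ω, q ω ∂P = π)
    (hu : 0 < u) :
    π * ∫ ω, Y ω ∂P - ∫ ω, Y ω * q ω ∂P ≤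
      u / 4 * (Real.sqrt π * ∫ ω, (Real.sqrt (q ω) - Real.sqrt π) ^ 2 ∂P) +
        Real.sqrt π / u := by
  have hYi : Integrable Y P := integrable_comp_of_ae_mem_s6 isCompact_Icc continuous_id hY hY01
  have hqi : Integrable q P := integrable_comp_of_ae_mem_s6 isCompact_Icc continuous_id hq hq01
  have hminus : Integrable (fun ω => (Real.sqrt (q ω) - Real.sqrt π) ^ 2) P :=
    integrable_comp_of_ae_mem_s6 (g := fun x => (Real.sqrt x - Real.sqrt π) ^ 2) isCompact_Icc
      (by fun_prop) hq hq01
  have hplus : Integrable (fun ω => (Real.sqrt π + Real.sqrt (q ω)) ^ 2) P :=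
    integrable_comp_of_ae_mem_s6 (g := fun x => (Real.sqrt π + Real.sqrt x) ^ 2) isCompact_Icc
      (by fun_prop) hq hq01
  have hcentered : Integrable (fun ω => (Y ω - 1 / 2) * (π - q ω)) P :=
    ((integrable_const π).sub hqi).bdd_mul (c := 1) (hY.sub aestronglyMeasurable_const)
      (hY01.mono fun ω h => by
        rw [Real.norm_eq_abs, abs_le]; constructor <;> linarith [h.1, h.2])
  have hpointwise : ∀ᵐ ω ∂P, (Y ω - 1 / 2) * (π - q ω) ≤
      u * Real.sqrt π / 4 * (Real.sqrt (q ω) - Real.sqrt π) ^ 2 +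
        (Real.sqrt π + Real.sqrt (q ω)) ^ 2 / (4 * u * Real.sqrt π) := by
    filter_upwards [hY01, hq01] with ω hYω hqω
    exact sub_half_mul_sub_le hYω hqω.1 hπ hu
  rw [mul_integral_sub_integral_mul_eq hYi hqi
    (hqi.bdd_mul hY (hY01.mono fun ω h => norm_le_one_of_mem_Icc h)) hqπ]
  calc ∫ ω, (Y ω - 1 / 2) * (π - q ω) ∂P
      ≤ ∫ ω, (u * Real.sqrt π / 4 * (Real.sqrt (q ω) - Real.sqrt π) ^ 2 +
          (Real.sqrt π + Real.sqrt (q ω)) ^ 2 / (4 * u * Real.sqrt π)) ∂P :=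
        integral_mono_ae hcentered ((hminus.const_mul _).add (hplus.div_const _)) hpointwise
    _ = u * Real.sqrt π / 4 * ∫ ω, (Real.sqrt (q ω) - Real.sqrt π) ^ 2 ∂P +
          (∫ ω, (Real.sqrt π + Real.sqrt (q ω)) ^ 2 ∂P) / (4 * u * Real.sqrt π) := by
        rw [integral_add (hminus.const_mul _) (hplus.div_const _), integral_const_mul,
          integral_div]
    _ ≤ u * Real.sqrt π / 4 * ∫ ω, (Real.sqrt (q ω) - Real.sqrt π) ^ 2 ∂P +
          4 * π / (4 * u * Real.sqrt π) := by
        gcongr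
        exact integral_sqrt_add_sqrt_sq_le hqi (hq01.mono fun ω h => h.1) hπ.le hqπ
    _ = _ := by
        rw [show 4 * π / (4 * u * Real.sqrt π) = Real.sqrt π / u by
          rw [div_eq_div_iff (by positivity) hu.ne']
          linear_combination (-4 * u) * Real.mul_self_sqrt hπ.le]
        ring

lemma mul_integral_sub_setIntegral_le {Y q : Ω → ℝ} (hY : Measurable Y)
    (hY01 : ∀ ω, Y ω ∈ Icc 0 1) {s : Set Ω} (hs : MeasurableSet s)
    (hq : q = P[s.indicator (fun _ => 1) | MeasurableSpace.comap Y inferInstance])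
    (hPs : 0 < P.real s) {u : ℝ} (hu : 0 < u) :
    P.real s * ∫ ω, Y ω ∂P - ∫ ω in s, Y ω ∂P ≤
      u / 4 * (Real.sqrt (P.real s) * ∫ ω, (Real.sqrt (q ω) - Real.sqrt (P.real s)) ^ 2 ∂P) +
        Real.sqrt (P.real s) / u := by
  subst hq
  rw [← integral_mul_condExp_indicator hY.comap_le (comap_measurable Y).stronglyMeasurable
    (.of_forall fun ω => norm_le_one_of_mem_Icc (hY01 ω)) hs]
  exact mul_integral_sub_integral_mul_le hY.aestronglyMeasurable
    integrable_condExp.aestronglyMeasurable (.of_forall hY01)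
    (condExp_indicator_one_mem_Icc hY.comap_le hs) hPs (integral_condExp_indicator hY hs) hu

end Probability

theorem thompson_one_round_bandit_general {Ω : Type*} {mΩ : MeasurableSpace Ω}
    {P : Measure Ω} [IsProbabilityMeasure P] {k : ℕ}
    (X : Ω → Fin k → ℝ) (hX : Measurable X)
    (hX01 : ∀ ω a, X ω a ∈ Set.Icc (0 : ℝ) 1)
    (Astar : Ω → Fin k) (hA : Measurable Astar)
    (p : Fin k → ℝ) (hp : ∀ a, p a = (P {ω | Astar ω = a}).toReal)
    (Q : Fin k → Ω → Fin k → ℝ)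
    (hQ : ∀ a c, (fun ω => Q a ω c) =
      P[fun ω' => if Astar ω' = c then (1 : ℝ) else 0 |
        MeasurableSpace.comap (fun ω' => X ω' a) inferInstance]) :
    ∑ a ∈ Finset.univ.filter (fun a => 0 < p a),
        p a * ((∫ ω, X ω a ∂P) - (∫ ω in {ω' | Astar ω' = a}, X ω a ∂P) / p a) ≤
      Real.sqrt (Real.sqrt k *
        ∑ a ∈ Finset.univ.filter (fun a => 0 < p a),
          p a * ∫ ω, sqrtBregman (Q a ω) p ∂P) := by
  set T := Finset.univ.filter (fun a => 0 < p a)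
  have hpreal : ∀ a, p a = P.real {ω | Astar ω = a} := hp
  have hXa : ∀ a, Measurable fun ω => X ω a := fun a => (measurable_pi_apply a).comp hX
  have hAset : ∀ c, MeasurableSet {ω | Astar ω = c} := fun c => hA (measurableSet_singleton c)
  have hind : ∀ c, (fun ω => if Astar ω = c then (1 : ℝ) else 0) =
      {ω | Astar ω = c}.indicator fun _ => 1 := fun c => by
    ext ω
    simp [Set.indicator_apply]
  simp_rw [hind] at hQ
  have hQm : ∀ a c, AEStronglyMeasurable (fun ω => Q a ω c) P := fun a c =>
    hQ a c ▸ integrable_condExp.aestronglyMeasurable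
  have hQ01 : ∀ a c, ∀ᵐ ω ∂P, Q a ω c ∈ Icc 0 1 := fun a c => by
    simpa only [← hQ a c] using
      condExp_indicator_one_mem_Icc (P := P) (hXa a).comap_le (hAset c)
  have hsqrt : ∑ a ∈ T, Real.sqrt (p a) ≤ Real.sqrt k := by
    simp_rw [hpreal]
    exact (sum_sqrt_measureReal_preimage_singleton_le T fun a _ => hAset a).trans
      (Real.sqrt_le_sqrt (by exact_mod_cast (Finset.card_le_univ T).trans_eq (by simp)))
  refine sum_le_sqrt_mul_sum_of_forall_le (fun a ha => mul_nonneg (Finset.mem_filter.1 ha).2.le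
    (integral_nonneg fun ω => sqrtBregman_nonneg _ _)) hsqrt (Real.sqrt_nonneg _)
    fun u hu a ha => ?_
  have hpa : 0 < p a := (Finset.mem_filter.1 ha).2
  have harm := mul_integral_sub_setIntegral_le (hXa a) (fun ω => hX01 ω a) (hAset a) (hQ a a)
    (hpreal a ▸ hpa) hu
  rw [← hpreal a] at harm
  calc p a * ((∫ ω, X ω a ∂P) - (∫ ω in {ω' | Astar ω' = a}, X ω a ∂P) / p a)
      = p a * ∫ ω, X ω a ∂P - ∫ ω in {ω' | Astar ω' = a}, X ω a ∂P := by
        rw [mul_sub, mul_div_cancel₀ _ hpa.ne']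
    _ ≤ _ := harm
    _ ≤ _ := by
        gcongr u / 4 * ?_ + _
        exact sqrt_mul_integral_sq_le_integral_sqrtBregman (hQm a) (hQ01 a) hpa

/-- **One-round Thompson-sampling lemma for `k`-armed bandits.**  Let `p` be the prior
distribution of the optimal action `A*` and, for each action `a`, let `Qᵃ` be the
posterior distribution of `A*` given the observed loss `X_a`.  When the action is
sampled from `p` independently of `X`, the expected one-step regret
`∑_a p_a (E[X_a] − E[X_a | A* = a])` is at most
`√(k^{1/2} ∑_a p_a E[D_F(Qᵃ, p)])` for the potential `F(q) = −2 ∑ₐ √qₐ`. -/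
theorem thompson_one_round_bandit {Ω : Type*} {mΩ : MeasurableSpace Ω}
    {P : Measure Ω} [IsProbabilityMeasure P] {k : ℕ} (hk : 1 ≤ k)
    (X : Ω → Fin k → ℝ) (hX : Measurable X)
    (hX01 : ∀ ω a, X ω a ∈ Set.Icc (0 : ℝ) 1)
    (Astar : Ω → Fin k) (hA : Measurable Astar)
    (p : Fin k → ℝ) (hp : ∀ a, p a = (P {ω | Astar ω = a}).toReal)
    (Q : Fin k → Ω → Fin k → ℝ)
    (hQ : ∀ a c, (fun ω => Q a ω c) =
      P[fun ω' => if Astar ω' = c then (1 : ℝ) else 0 |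
        MeasurableSpace.comap (fun ω' => X ω' a) inferInstance]) :
    ∑ a ∈ Finset.univ.filter (fun a => 0 < p a),
        p a * ((∫ ω, X ω a ∂P) - (∫ ω in {ω' | Astar ω' = a}, X ω a ∂P) / p a) ≤
      Real.sqrt (Real.sqrt k *
        ∑ a ∈ Finset.univ.filter (fun a => 0 < p a),
          p a * ∫ ω, sqrtBregman (Q a ω) p ∂P) :=
  thompson_one_round_bandit_general (mΩ := mΩ) X hX hX01 Astar hA p hp Q hQ

end
end

section
/- (Properties of the water transfer operator.) Let k ≥ 1, let r ∈ [k] and let 𝒫 : [k] \ {r} → [k] be a parent map whose directed graph (with an edge from a to 𝒫(a) for each a ≠ r) is a directed tree with root r, and let L̄ : [k] → ℝ satisfy L̄(𝒫(a)) ≤ L̄(a) for every a ≠ r. Then for every probability vector P ∈ Δ^{k−1} there exists a probability vector Q ∈ Δ^{k−1} such that: (1) ∑_{a=1}^k Q_a L̄(a) ≤ ∑_{a=1}^k P_a L̄(a); (2) Q_a ≤ Q_{𝒫(a)} for every a ≠ r; and (3) Q_a ≥ P_a / k for every a ∈ [k]. -/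
/-!
Each vertex `b` sends a `1/k` share of its mass to every vertex on its path to the root
(itself included) and the remaining `1 - |path|/k` to the root. This is a row-stochastic
matrix `W`, and `Q = P W` works: the loss is antitone along parent edges, so every share
lands where the loss is at most `L̄(b)`; a vertex `a ≠ r` receives from each `b` at most
what its parent receives, since the paths through `a` also pass through `𝒫(a)`; and `b`
keeps at least `1/k` of its own mass.
-/

open Finset Matrix Relation

section Stochastic

variable {R n : Type*} [Fintype n] [Semiring R] [PartialOrder R] [IsOrderedRing R]
  {M : Matrix n n R} {x : n → R}

lemma vecMul_mem_stdSimplex_of_mem_rowStochastic [DecidableEq n] (hM : M ∈ rowStochastic R n)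
    (hx : x ∈ stdSimplex R n) : x ᵥ* M ∈ stdSimplex R n := by
  refine ⟨nonneg_vecMul_of_mem_rowStochastic hM hx.1, ?_⟩
  have h := vecMul_dotProduct_one_eq_one_rowStochastic hM (by simpa [dotProduct] using hx.2)
  simpa [dotProduct] using h

lemma mul_diag_le_vecMul_apply (hM : ∀ i j, 0 ≤ M i j) (hx : 0 ≤ x) (i : n) :
    x i * M i i ≤ (x ᵥ* M) i :=
  single_le_sum (f := fun j => x j * M j i) (fun j _ => mul_nonneg (hx j) (hM j i))
    (mem_univ i)

end Stochastic

namespace WaterTransfer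

variable {α : Type*} [Fintype α] (r : α) (par : α → α)

-- `par r` carries no meaning, so the root has no outgoing edge.
def TreeEdge (x y : α) : Prop := x ≠ r ∧ par x = y

open Classical in
noncomputable def ancestors (b : α) : Finset α :=
  univ.filter (ReflTransGen (TreeEdge r par) b)

variable {r par}

lemma mem_ancestors {a b : α} : a ∈ ancestors r par b ↔ ReflTransGen (TreeEdge r par) b a := by
  simp [ancestors]

lemma self_mem_ancestors (a : α) : a ∈ ancestors r par a :=
  mem_ancestors.2 ReflTransGen.refl

lemma parent_mem_ancestors {a b : α} (ha : a ≠ r) (h : a ∈ ancestors r par b) :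
    par a ∈ ancestors r par b :=
  mem_ancestors.2 ((mem_ancestors.1 h).tail ⟨ha, rfl⟩)

lemma root_mem_ancestors {b : α} {m : ℕ} (hm : par^[m] b = r) : r ∈ ancestors r par b := by
  induction m generalizing b with
  | zero => exact hm ▸ self_mem_ancestors b
  | succ m ih =>
    by_cases hb : b = r
    · exact hb ▸ self_mem_ancestors b
    · exact mem_ancestors.2 ((mem_ancestors.1 (ih hm)).head ⟨hb, rfl⟩)

lemma le_of_mem_ancestors {L : α → ℝ} (hL : ∀ a, a ≠ r → L (par a) ≤ L a) {a b : α}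
    (h : a ∈ ancestors r par b) : L a ≤ L b := by
  induction mem_ancestors.1 h with
  | refl => exact le_rfl
  | tail _ hcd ih => exact hcd.2 ▸ (hL _ hcd.1).trans (ih (mem_ancestors.2 ‹_›))

variable (r par)

lemma card_ancestors_div_le_one (b : α) :
    (#(ancestors r par b) : ℝ) / Fintype.card α ≤ 1 :=
  div_le_one_of_le₀ (mod_cast card_le_univ _) (Nat.cast_nonneg _)

variable [DecidableEq α]

noncomputable def transferMatrix : Matrix α α ℝ := fun b a =>
  (if a ∈ ancestors r par b then (Fintype.card α : ℝ)⁻¹ else 0) +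
    if a = r then 1 - (#(ancestors r par b) : ℝ) / Fintype.card α else 0

lemma transferMatrix_mem_rowStochastic : transferMatrix r par ∈ rowStochastic ℝ α := by
  refine mem_rowStochastic_iff_sum.2 ⟨fun b a => ?_, fun b => ?_⟩
  · have := card_ancestors_div_le_one r par b
    unfold transferMatrix
    split_ifs <;> positivity
  · simp only [transferMatrix, sum_add_distrib, sum_ite_mem, univ_inter, sum_const,
      nsmul_eq_mul, sum_ite_eq', mem_univ, if_true]
    ring

variable {r par}

lemma transferMatrix_mulVec_le (htree : ∀ a, ∃ m, par^[m] a = r) {L : α → ℝ}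
    (hL : ∀ a, a ≠ r → L (par a) ≤ L a) : transferMatrix r par *ᵥ L ≤ L := by
  intro b
  obtain ⟨m, hm⟩ := htree b
  set c := (#(ancestors r par b) : ℝ) / Fintype.card α
  have hc : c ≤ 1 := card_ancestors_div_le_one r par b
  have hshares : ∑ a ∈ ancestors r par b, (Fintype.card α : ℝ)⁻¹ * L a ≤ c * L b := by
    calc ∑ a ∈ ancestors r par b, (Fintype.card α : ℝ)⁻¹ * L a
        ≤ ∑ _a ∈ ancestors r par b, (Fintype.card α : ℝ)⁻¹ * L b := by
          gcongr with a ha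
          exact le_of_mem_ancestors hL ha
      _ = c * L b := by rw [sum_const, nsmul_eq_mul]; ring
  have hroot : (1 - c) * L r ≤ (1 - c) * L b :=
    mul_le_mul_of_nonneg_left (le_of_mem_ancestors hL (root_mem_ancestors hm)) (by linarith)
  calc (transferMatrix r par *ᵥ L) b
      = ∑ a ∈ ancestors r par b, (Fintype.card α : ℝ)⁻¹ * L a + (1 - c) * L r := by
        simp only [mulVec, dotProduct, transferMatrix, add_mul, ite_mul, zero_mul,
          sum_add_distrib, sum_ite_mem, univ_inter, sum_ite_eq', mem_univ, if_true, c]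
    _ ≤ c * L b + (1 - c) * L b := add_le_add hshares hroot
    _ = L b := by ring

lemma transferMatrix_le_parent {a : α} (ha : a ≠ r) (b : α) :
    transferMatrix r par b a ≤ transferMatrix r par b (par a) := by
  have := card_ancestors_div_le_one r par b
  unfold transferMatrix
  rw [if_neg ha]
  gcongr
  · split_ifs with h h' <;> first | rfl | positivity | exact absurd (parent_mem_ancestors ha h) h'
  · split_ifs <;> first | rfl | linarith

lemma inv_card_le_transferMatrix_self (a : α) :
    (Fintype.card α : ℝ)⁻¹ ≤ transferMatrix r par a a := by
  have := card_ancestors_div_le_one r par a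
  unfold transferMatrix
  rw [if_pos (self_mem_ancestors a)]
  split_ifs <;> linarith

end WaterTransfer

open WaterTransfer in
theorem water_transfer_properties_general (k : ℕ) (r : Fin k)
    (par : Fin k → Fin k)
    (htree : ∀ a : Fin k, ∃ m : ℕ, par^[m] a = r)
    (Lbar : Fin k → ℝ) (hL : ∀ a : Fin k, a ≠ r → Lbar (par a) ≤ Lbar a)
    (P : Fin k → ℝ) (hP : P ∈ stdSimplex ℝ (Fin k)) :
    ∃ Q ∈ stdSimplex ℝ (Fin k),
      (∑ a : Fin k, Q a * Lbar a ≤ ∑ a : Fin k, P a * Lbar a) ∧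
      (∀ a : Fin k, a ≠ r → Q a ≤ Q (par a)) ∧
      (∀ a : Fin k, P a / k ≤ Q a) := by
  have hW := transferMatrix_mem_rowStochastic r par
  refine ⟨P ᵥ* transferMatrix r par, vecMul_mem_stdSimplex_of_mem_rowStochastic hW hP,
    ?_, fun a ha => ?_, fun a => ?_⟩
  · calc (P ᵥ* transferMatrix r par) ⬝ᵥ Lbar = P ⬝ᵥ (transferMatrix r par *ᵥ Lbar) :=
          (dotProduct_mulVec _ _ _).symm
      _ ≤ P ⬝ᵥ Lbar :=
          dotProduct_le_dotProduct_of_nonneg_left (transferMatrix_mulVec_le htree hL) hP.1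
  · exact dotProduct_le_dotProduct_of_nonneg_left (transferMatrix_le_parent ha) hP.1
  · calc P a / k = P a * (Fintype.card (Fin k) : ℝ)⁻¹ := by simp [div_eq_mul_inv]
      _ ≤ P a * transferMatrix r par a a :=
          mul_le_mul_of_nonneg_left (inv_card_le_transferMatrix_self a) (hP.1 a)
      _ ≤ (P ᵥ* transferMatrix r par) a :=
          mul_diag_le_vecMul_apply hW.1 hP.1 a

/-- **Properties of the water transfer operator.**  Given a parent map `par` on `[k]`
whose directed graph (with an edge from each `a ≠ r` to its parent) is a directed tree
with root `r`, and a loss function that does not increase along parent edges, every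
probability vector `P` can be transformed into a probability vector `Q` that (1) has no
larger expected loss, (2) is monotone along parent edges, and (3) pointwise loses at
most a factor `k`. -/
theorem water_transfer_properties (k : ℕ) (hk : 1 ≤ k) (r : Fin k)
    (par : Fin k → Fin k)
    (htree : ∀ a : Fin k, ∃ m : ℕ, par^[m] a = r)
    (Lbar : Fin k → ℝ) (hL : ∀ a : Fin k, a ≠ r → Lbar (par a) ≤ Lbar a)
    (P : Fin k → ℝ) (hP : P ∈ stdSimplex ℝ (Fin k)) :
    ∃ Q ∈ stdSimplex ℝ (Fin k),
      (∑ a : Fin k, Q a * Lbar a ≤ ∑ a : Fin k, P a * Lbar a) ∧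
      (∀ a : Fin k, a ≠ r → Q a ≤ Q (par a)) ∧
      (∀ a : Fin k, P a / k ≤ Q a) :=
  water_transfer_properties_general k r par htree Lbar hL P hP
end

section
/- Consider a non-degenerate finite partial monitoring game with k actions and d outcomes. Let a, b ∈ [k] be distinct actions and u ∈ C_a. Then there exists an action c ∈ N_b \ {b} such that ⟨ℓ_b − ℓ_c, u⟩ ≥ 0. Furthermore, if u ∉ C_b, then c can be chosen so that ⟨ℓ_b − ℓ_c, u⟩ > 0. -/
open scoped BigOperators Classical

noncomputable section

/-- The affine dimension of a subset of `ℝ^d`, with the convention that the empty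
set has dimension `-1`. -/
def affDim {d : ℕ} (s : Set (Fin d → ℝ)) : ℤ :=
  if s = ∅ then -1 else (Module.finrank ℝ (affineSpan ℝ s).direction : ℤ)

/-- The cell of action `a`: distributions over outcomes for which `a` has minimal
expected loss. -/
def cell {k d : ℕ} (L : Fin k → Fin d → ℝ) (a : Fin k) : Set (Fin d → ℝ) :=
  {u | u ∈ stdSimplex ℝ (Fin d) ∧ ∀ b : Fin k, ∑ x, L a x * u x ≤ ∑ x, L b x * u x}

/-- An action is Pareto optimal if its cell has affine dimension `d - 1`. -/
def Pareto {k d : ℕ} (L : Fin k → Fin d → ℝ) (a : Fin k) : Prop :=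
  affDim (cell L a) = (d : ℤ) - 1

/-- Two Pareto optimal actions are neighbours if their cells intersect in a set of
affine dimension `d - 2`. -/
def Neighbours {k d : ℕ} (L : Fin k → Fin d → ℝ) (a b : Fin k) : Prop :=
  Pareto L a ∧ Pareto L b ∧ affDim (cell L a ∩ cell L b) = (d : ℤ) - 2

/-- A game is non-degenerate if there are no duplicate actions and every action is
Pareto optimal. -/
def NondegenerateGame {k d : ℕ} (L : Fin k → Fin d → ℝ) : Prop :=
  (∀ a b : Fin k, a ≠ b → (fun x => L a x) ≠ (fun x => L b x)) ∧ ∀ a : Fin k, Pareto L a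

/-- The neighbourhood `N_a` of an action `a`. -/
def nbhd {k d : ℕ} (L : Fin k → Fin d → ℝ) (a : Fin k) : Set (Fin k) :=
  {b | (d : ℤ) - 2 ≤ affDim (cell L a ∩ cell L b)}

/-! The cell `C_b` is cut out of the simplex by the inequalities `⟨ℓ_b, x⟩ ≤ ⟨ℓ_c, x⟩`, and in an
irredundant subfamily each inequality defines a facet: if dropping `c` admits a point `y` of the
simplex with `⟨ℓ_c - ℓ_b, y⟩ < 0`, the segment from a relative interior point `w` of `C_b` to `y`
crosses `⟨ℓ_c - ℓ_b, ·⟩ = 0` at a point around which `C_b ∩ C_c` contains a `(d - 2)`-dimensional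
ball. Hence `C_b` is cut out by the inequalities of `N_b \ {b}` alone, which is the strict claim.
For `u ∈ C_a ∩ C_b`, moving from `u` towards the interior of `C_a` leaves `C_b` at once, so one of
these inequalities is tight at `u`. -/

open Matrix Set Filter Topology

lemma finrank_le_finrank_ker_inf_ker_add_two {K V : Type*} [Field K] [AddCommGroup V]
    [Module K V] [FiniteDimensional K V] (f g : V →ₗ[K] K) :
    Module.finrank K V ≤ Module.finrank K ↥(LinearMap.ker f ⊓ LinearMap.ker g) + 2 := by
  have hf := f.finrank_range_add_finrank_ker
  have hg := g.finrank_range_add_finrank_ker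
  have hf₁ := Submodule.finrank_le (LinearMap.range f)
  have hg₁ := Submodule.finrank_le (LinearMap.range g)
  have hsup := Submodule.finrank_le (LinearMap.ker f ⊔ LinearMap.ker g)
  have hmod := Submodule.finrank_sup_add_finrank_inf_eq (LinearMap.ker f) (LinearMap.ker g)
  rw [Module.finrank_self] at hf₁ hg₁
  omega

lemma exists_pos_norm_smul_lt {E : Type*} [SeminormedAddCommGroup E] [NormedSpace ℝ E]
    (y : E) {r : ℝ} (hr : 0 < r) : ∃ t : ℝ, 0 < t ∧ ‖t • y‖ < r := by
  refine ⟨r / (‖y‖ + 1), by positivity, ?_⟩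
  rw [norm_smul, Real.norm_of_nonneg (by positivity), div_mul_eq_mul_div,
    div_lt_iff₀ (by positivity)]
  nlinarith

lemma Convex.combo_add_mem {E : Type*} [SeminormedAddCommGroup E] [NormedSpace ℝ E]
    {s : Set E} (hs : Convex ℝ s) {V : Submodule ℝ E} {w y : E} {ε t : ℝ}
    (hball : ∀ v ∈ V, ‖v‖ < ε → w + v ∈ s) (hy : y ∈ s) (ht₀ : 0 ≤ t) (ht₁ : t < 1)
    {v : E} (hv : v ∈ V) (hvε : ‖v‖ < (1 - t) * ε) : (1 - t) • w + t • y + v ∈ s := by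
  have hw : w + (1 - t)⁻¹ • v ∈ s := by
    refine hball _ (V.smul_mem _ hv) ?_
    rwa [norm_smul, Real.norm_of_nonneg (inv_nonneg.2 (by linarith)),
      inv_mul_lt_iff₀ (by linarith)]
  have hcombo : (1 - t) • (w + (1 - t)⁻¹ • v) + t • y = (1 - t) • w + t • y + v := by
    rw [smul_add, smul_smul, mul_inv_cancel₀ (by linarith), one_smul]
    abel
  exact hcombo ▸ hs hw hy (by linarith) ht₀ (by ring)

namespace PartialMonitoring

variable {k d : ℕ}

def sumZero (d : ℕ) : Submodule ℝ (Fin d → ℝ) :=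
  LinearMap.ker (dotProductBilin ℝ ℝ (1 : Fin d → ℝ))

lemma mem_sumZero {y : Fin d → ℝ} : y ∈ sumZero d ↔ ∑ i, y i = 0 := by
  simp [sumZero, one_dotProduct]

lemma ne_zero_of_mem_stdSimplex {x : Fin d → ℝ} (hx : x ∈ stdSimplex ℝ (Fin d)) : d ≠ 0 := by
  rintro rfl
  simpa using hx.2

lemma finrank_le_affDim_of_add_mem {s : Set (Fin d → ℝ)} (V : Submodule ℝ (Fin d → ℝ))
    {z : Fin d → ℝ} {r : ℝ} (hr : 0 < r) (h : ∀ y ∈ V, ‖y‖ < r → z + y ∈ s) :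
    (Module.finrank ℝ V : ℤ) ≤ affDim s := by
  have hz : z ∈ s := by simpa using h 0 V.zero_mem (by simpa)
  have hV : V ≤ (affineSpan ℝ s).direction := by
    intro y hy
    obtain ⟨t, ht, hty⟩ := exists_pos_norm_smul_lt y hr
    have hmem : t • y ∈ (affineSpan ℝ s).direction := by
      simpa using AffineSubspace.vsub_mem_direction
        (subset_affineSpan ℝ s (h _ (V.smul_mem t hy) hty)) (subset_affineSpan ℝ s hz)
    simpa [ht.ne'] using Submodule.smul_mem _ t⁻¹ hmem
  rw [affDim, if_neg (Set.nonempty_iff_ne_empty.1 ⟨z, hz⟩)]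
  exact_mod_cast Submodule.finrank_mono hV

lemma exists_add_mem_of_affDim_eq {s : Set (Fin d → ℝ)} (hd : d ≠ 0) (hconv : Convex ℝ s)
    (hsub : s ⊆ stdSimplex ℝ (Fin d)) (hdim : affDim s = d - 1) :
    ∃ w : Fin d → ℝ, ∃ ε > 0, ∀ y ∈ sumZero d, ‖y‖ < ε → w + y ∈ s := by
  have hne : s ≠ ∅ := by
    rintro rfl
    simp only [affDim, if_true] at hdim
    omega
  have hdir : (affineSpan ℝ s).direction = sumZero d := by
    refine Submodule.eq_of_le_of_finrank_le ?_ ?_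
    · rw [direction_affineSpan, vectorSpan_def, Submodule.span_le]
      rintro _ ⟨x, hx, y, hy, rfl⟩
      simp [mem_sumZero, Finset.sum_sub_distrib, (hsub hx).2, (hsub hy).2]
    · have hproper : sumZero d ≠ ⊤ := fun htop => by
        have := (mem_sumZero (y := Pi.single ⟨0, Nat.pos_of_ne_zero hd⟩ 1)).1
          (htop ▸ Submodule.mem_top)
        simp at this
      have := Submodule.finrank_lt hproper
      rw [affDim, if_neg hne] at hdim
      rw [Module.finrank_fin_fun] at this
      omega
  obtain ⟨_, hw⟩ := (Set.nonempty_iff_ne_empty.2 hne).intrinsicInterior hconv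
  obtain ⟨w, hwint, -⟩ := mem_intrinsicInterior.1 hw
  obtain ⟨ε, hε, hball⟩ := Metric.mem_nhds_iff.1 (mem_interior_iff_mem_nhds.1 hwint)
  refine ⟨w, ε, hε, fun y hy hyε => ?_⟩
  have hy' : y ∈ (affineSpan ℝ s).direction := hdir ▸ hy
  refine hball (a := ⟨w + y, ?_⟩) ?_
  · simpa [add_comm] using AffineSubspace.vadd_mem_of_mem_direction hy' w.2
  · simpa [Metric.mem_ball, Subtype.dist_eq, dist_eq_norm] using hyε

lemma eq_zero_of_dotProduct_nonneg_near {φ w : Fin d → ℝ} {ε : ℝ} (hε : 0 < ε)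
    (hw : ∑ i, w i = 1) (hφw : φ ⬝ᵥ w = 0)
    (hφ : ∀ y ∈ sumZero d, ‖y‖ < ε → 0 ≤ φ ⬝ᵥ (w + y)) : φ = 0 := by
  have horth : ∀ y ∈ sumZero d, φ ⬝ᵥ y = 0 := by
    intro y hy
    obtain ⟨t, ht, hty⟩ := exists_pos_norm_smul_lt y hε
    have h₁ := hφ _ ((sumZero d).smul_mem t hy) hty
    have h₂ := hφ _ ((sumZero d).smul_mem (-t) hy) (by rwa [neg_smul, norm_neg])
    simp only [dotProduct_add, dotProduct_smul, hφw, smul_eq_mul, zero_add] at h₁ h₂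
    nlinarith
  have hconst : ∀ i j, φ i = φ j := fun i j => by
    have := horth (Pi.single i 1 - Pi.single j 1)
      (mem_sumZero.2 (by simp [Finset.sum_sub_distrib]))
    simpa [dotProduct_sub, sub_eq_zero] using this
  funext j
  calc φ j = ∑ i, φ i * w i := by simp [hconst _ j, ← Finset.mul_sum, hw]
    _ = 0 := hφw

lemma dotProduct_le_of_mem_cell {L : Fin k → Fin d → ℝ} {a : Fin k} {x : Fin d → ℝ}
    (hx : x ∈ cell L a) (c : Fin k) : L a ⬝ᵥ x ≤ L c ⬝ᵥ x :=
  hx.2 c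

lemma mem_cell_of_mem_cell_of_dotProduct_eq {L : Fin k → Fin d → ℝ} {b c : Fin k}
    {x : Fin d → ℝ} (hx : x ∈ cell L b) (hbc : L c ⬝ᵥ x = L b ⬝ᵥ x) : x ∈ cell L c :=
  ⟨hx.1, fun c' => (hbc.trans_le (dotProduct_le_of_mem_cell hx c') : L c ⬝ᵥ x ≤ L c' ⬝ᵥ x)⟩

lemma dotProduct_sub_pos_of_add_mem_cell {L : Fin k → Fin d → ℝ} {a c : Fin k}
    (hca : L c ≠ L a) {w : Fin d → ℝ} {ε : ℝ} (hε : 0 < ε)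
    (hball : ∀ y ∈ sumZero d, ‖y‖ < ε → w + y ∈ cell L a) : 0 < (L c - L a) ⬝ᵥ w := by
  have hnonneg : ∀ y ∈ sumZero d, ‖y‖ < ε → 0 ≤ (L c - L a) ⬝ᵥ (w + y) := fun y hy hyε => by
    rw [sub_dotProduct, sub_nonneg]
    exact dotProduct_le_of_mem_cell (hball y hy hyε) c
  have hw : w ∈ cell L a := by simpa using hball 0 (sumZero d).zero_mem (by simpa)
  have hle : 0 ≤ (L c - L a) ⬝ᵥ w := by simpa using hnonneg 0 (sumZero d).zero_mem (by simpa)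
  refine hle.lt_of_ne fun h => hca (sub_eq_zero.1 ?_)
  exact eq_zero_of_dotProduct_nonneg_near hε hw.1.2 h.symm hnonneg

variable (L : Fin k → Fin d → ℝ) (b : Fin k)

def cellAgainst (S : Set (Fin k)) : Set (Fin d → ℝ) :=
  {x | x ∈ stdSimplex ℝ (Fin d) ∧ ∀ c ∈ S, L b ⬝ᵥ x ≤ L c ⬝ᵥ x}

lemma cellAgainst_univ : cellAgainst L b univ = cell L b := by
  ext x
  simp [cellAgainst, cell, dotProduct]

lemma cellAgainst_antitone : Antitone (cellAgainst L b) :=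
  fun _ _ hST _ hx => ⟨hx.1, fun c hc => hx.2 c (hST hc)⟩

lemma cell_subset_cellAgainst (S : Set (Fin k)) : cell L b ⊆ cellAgainst L b S :=
  cellAgainst_univ L b ▸ cellAgainst_antitone L b (subset_univ S)

lemma convex_cellAgainst (S : Set (Fin k)) : Convex ℝ (cellAgainst L b S) := by
  intro x hx y hy s t hs ht hst
  refine ⟨convex_stdSimplex ℝ (Fin d) hx.1 hy.1 hs ht hst, fun c hc => ?_⟩
  simp only [dotProduct_add, dotProduct_smul, smul_eq_mul]
  exact add_le_add (mul_le_mul_of_nonneg_left (hx.2 c hc) hs)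
    (mul_le_mul_of_nonneg_left (hy.2 c hc) ht)

lemma convex_cell : Convex ℝ (cell L b) :=
  cellAgainst_univ L b ▸ convex_cellAgainst L b univ

lemma exists_dotProduct_lt_of_notMem_cellAgainst {S : Set (Fin k)} {x : Fin d → ℝ}
    (hx : x ∈ stdSimplex ℝ (Fin d)) (hxS : x ∉ cellAgainst L b S) :
    ∃ c ∈ S, L c ⬝ᵥ x < L b ⬝ᵥ x := by
  by_contra! h
  exact hxS ⟨hx, h⟩

lemma exists_minimal_cellAgainst_eq_cell :
    ∃ R : Set (Fin k), cellAgainst L b R = cell L b ∧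
      ∀ c ∈ R, cellAgainst L b (R \ {c}) ≠ cell L b := by
  obtain ⟨R, hR, hmin⟩ := wellFounded_lt.has_min {R | cellAgainst L b R = cell L b}
    ⟨univ, cellAgainst_univ L b⟩
  exact ⟨R, hR, fun c hc h => hmin _ h (sdiff_singleton_ssubset.2 hc)⟩

lemma mem_cellAgainst_of_mem_sdiff {R : Set (Fin k)} {c : Fin k} {x : Fin d → ℝ}
    (hx : x ∈ cellAgainst L b (R \ {c})) (hxc : L b ⬝ᵥ x ≤ L c ⬝ᵥ x) : x ∈ cellAgainst L b R :=
  ⟨hx.1, fun c' hc' => if h : c' = c then h ▸ hxc else hx.2 c' ⟨hc', h⟩⟩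

lemma exists_dotProduct_lt_of_essential {R : Set (Fin k)} (hR : cellAgainst L b R = cell L b)
    {c : Fin k} (hess : cellAgainst L b (R \ {c}) ≠ cell L b) :
    ∃ y ∈ cellAgainst L b (R \ {c}), L c ⬝ᵥ y < L b ⬝ᵥ y := by
  have hsub : cell L b ⊆ cellAgainst L b (R \ {c}) := hR ▸ cellAgainst_antitone L b sdiff_subset
  obtain ⟨y, hy, hyb⟩ := exists_of_ssubset (hsub.ssubset_of_ne hess.symm)
  refine ⟨y, hy, ?_⟩
  by_contra! h
  exact hyb (hR ▸ mem_cellAgainst_of_mem_sdiff L b hy h)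

lemma mem_nbhd_of_mem_cellAgainst_sdiff {R : Set (Fin k)} (hR : cellAgainst L b R = cell L b)
    {c : Fin k} {y : Fin d → ℝ} (hy : y ∈ cellAgainst L b (R \ {c}))
    (hyc : L c ⬝ᵥ y < L b ⬝ᵥ y) {w : Fin d → ℝ} {ε : ℝ} (hε : 0 < ε)
    (hball : ∀ v ∈ sumZero d, ‖v‖ < ε → w + v ∈ cell L b) : c ∈ nbhd L b := by
  set φ := L c - L b
  have hα : 0 < φ ⬝ᵥ w :=
    dotProduct_sub_pos_of_add_mem_cell (fun h => (h ▸ hyc).false) hε hball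
  have hβ : φ ⬝ᵥ y < 0 := by rw [sub_dotProduct]; linarith
  set t := φ ⬝ᵥ w / (φ ⬝ᵥ w - φ ⬝ᵥ y)
  have ht₀ : 0 < t := div_pos hα (by linarith)
  have ht₁ : t < 1 := (div_lt_one (by linarith)).2 (by linarith)
  set z := (1 - t) • w + t • y
  have hz : φ ⬝ᵥ z = 0 := by
    have hden : φ ⬝ᵥ w - φ ⬝ᵥ y ≠ 0 := by linarith
    simp only [z, t, dotProduct_add, dotProduct_smul, smul_eq_mul]
    field_simp
    ring
  have hface : ∀ v ∈ sumZero d ⊓ LinearMap.ker (dotProductBilin ℝ ℝ φ),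
      ‖v‖ < (1 - t) * ε → z + v ∈ cell L b ∩ cell L c := by
    intro v hv hvε
    have hmem : z + v ∈ cellAgainst L b (R \ {c}) :=
      Convex.combo_add_mem (convex_cellAgainst L b _)
        (fun v hv hvε => cell_subset_cellAgainst L b _ (hball v hv hvε)) hy ht₀.le ht₁ hv.1 hvε
    have hφzv : φ ⬝ᵥ (z + v) = 0 := by
      have : φ ⬝ᵥ v = 0 := by simpa using hv.2
      rw [dotProduct_add, hz, this, add_zero]
    have hcb : L c ⬝ᵥ (z + v) = L b ⬝ᵥ (z + v) := by
      rw [sub_dotProduct] at hφzv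
      linarith
    have hzb : z + v ∈ cell L b := hR ▸ mem_cellAgainst_of_mem_sdiff L b hmem hcb.ge
    exact ⟨hzb, mem_cell_of_mem_cell_of_dotProduct_eq hzb hcb⟩
  have hrank := finrank_le_finrank_ker_inf_ker_add_two
    (dotProductBilin ℝ ℝ (1 : Fin d → ℝ)) (dotProductBilin ℝ ℝ φ)
  rw [Module.finrank_fin_fun] at hrank
  calc (d : ℤ) - 2 ≤ Module.finrank ℝ ↥(sumZero d ⊓ LinearMap.ker (dotProductBilin ℝ ℝ φ)) := by
        unfold sumZero; omega
    _ ≤ affDim (cell L b ∩ cell L c) :=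
        finrank_le_affDim_of_add_mem _ (mul_pos (by linarith) hε) hface

theorem cell_eq_cellAgainst_nbhd (hb : Pareto L b) :
    cell L b = cellAgainst L b (nbhd L b \ {b}) := by
  refine (cell_subset_cellAgainst L b _).antisymm fun x hx => ?_
  obtain ⟨w, ε, hε, hball⟩ := exists_add_mem_of_affDim_eq (ne_zero_of_mem_stdSimplex hx.1)
    (convex_cell L b) (fun _ hy => hy.1) hb
  obtain ⟨R, hR, hess⟩ := exists_minimal_cellAgainst_eq_cell L b
  have hRnbhd : R ⊆ nbhd L b \ {b} := by
    intro c hc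
    obtain ⟨y, hy, hyc⟩ := exists_dotProduct_lt_of_essential L b hR (hess c hc)
    exact ⟨mem_nbhd_of_mem_cellAgainst_sdiff L b hR hy hyc hε hball, fun hcb => (hcb ▸ hyc).false⟩
  exact hR ▸ cellAgainst_antitone L b hRnbhd hx

lemma exists_segment_mem_cellAgainst {S : Set (Fin k)} {u x : Fin d → ℝ}
    (hu : u ∈ stdSimplex ℝ (Fin d)) (hx : x ∈ stdSimplex ℝ (Fin d))
    (hS : ∀ c ∈ S, L b ⬝ᵥ u < L c ⬝ᵥ u) :
    ∃ t ∈ Ioc (0 : ℝ) 1, (1 - t) • u + t • x ∈ cellAgainst L b S := by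
  have hnear : ∀ᶠ t in 𝓝 (0 : ℝ), ∀ c ∈ S,
      L b ⬝ᵥ ((1 - t) • u + t • x) < L c ⬝ᵥ ((1 - t) • u + t • x) := by
    refine (eventually_all_finite S.toFinite).2 fun c hc => ?_
    refine ContinuousAt.eventually_lt ?_ ?_ (by simpa using hS c hc) <;>
    · simp only [dotProduct_add, dotProduct_smul, smul_eq_mul]
      fun_prop
  obtain ⟨t, hct, ht⟩ := ((hnear.filter_mono nhdsWithin_le_nhds).and
    (Ioc_mem_nhdsGT zero_lt_one)).exists
  exact ⟨t, ht, convex_stdSimplex ℝ (Fin d) hu hx (by linarith [ht.2]) ht.1.le (by ring),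
    fun c hc => (hct c hc).le⟩

lemma exists_nbhd_dotProduct_le_of_mem_cell_inter (hnd : NondegenerateGame L) {a : Fin k}
    (hab : a ≠ b) {u : Fin d → ℝ} (hua : u ∈ cell L a) (hub : u ∈ cell L b) :
    ∃ c ∈ nbhd L b \ {b}, L c ⬝ᵥ u ≤ L b ⬝ᵥ u := by
  by_contra! h
  obtain ⟨w, ε, hε, hball⟩ := exists_add_mem_of_affDim_eq (ne_zero_of_mem_stdSimplex hua.1)
    (convex_cell L a) (fun _ hy => hy.1) (hnd.2 a)
  have hw : w ∈ cell L a := by simpa using hball 0 (sumZero d).zero_mem (by simpa)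
  have hbw : 0 < (L b - L a) ⬝ᵥ w :=
    dotProduct_sub_pos_of_add_mem_cell (hnd.1 a b hab).symm hε hball
  have hbu : 0 ≤ (L b - L a) ⬝ᵥ u := by
    rw [sub_dotProduct, sub_nonneg]
    exact dotProduct_le_of_mem_cell hua b
  obtain ⟨t, ⟨ht₀, ht₁⟩, hp⟩ := exists_segment_mem_cellAgainst L b hub.1 hw.1 h
  rw [← cell_eq_cellAgainst_nbhd L b (hnd.2 b)] at hp
  have hpb : (L b - L a) ⬝ᵥ ((1 - t) • u + t • w) ≤ 0 := by
    rw [sub_dotProduct, sub_nonpos]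
    exact dotProduct_le_of_mem_cell hp a
  simp only [dotProduct_add, dotProduct_smul, smul_eq_mul] at hpb
  nlinarith

end PartialMonitoring

open PartialMonitoring

/-- In a non-degenerate game, for distinct actions `a, b` and `u ∈ C_a`, there is a
neighbour `c ∈ N_b \ {b}` with `⟨ℓ_b − ℓ_c, u⟩ ≥ 0`; and if moreover `u ∉ C_b` then
`c` can be chosen with `⟨ℓ_b − ℓ_c, u⟩ > 0`. -/
theorem exists_neighbour_improvement {k d : ℕ} (L : Fin k → Fin d → ℝ)
    (hnd : NondegenerateGame L) (a b : Fin k) (hab : a ≠ b)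
    (u : Fin d → ℝ) (hu : u ∈ cell L a) :
    (∃ c ∈ nbhd L b \ {b}, 0 ≤ ∑ x, (L b x - L c x) * u x) ∧
    (u ∉ cell L b → ∃ c ∈ nbhd L b \ {b}, 0 < ∑ x, (L b x - L c x) * u x) := by
  have hstrict : u ∉ cell L b → ∃ c ∈ nbhd L b \ {b}, 0 < (L b - L c) ⬝ᵥ u := by
    intro hub
    rw [cell_eq_cellAgainst_nbhd L b (hnd.2 b)] at hub
    obtain ⟨c, hc, hlt⟩ := exists_dotProduct_lt_of_notMem_cellAgainst L b hu.1 hub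
    exact ⟨c, hc, by rwa [sub_dotProduct, sub_pos]⟩
  refine ⟨?_, hstrict⟩
  by_cases hub : u ∈ cell L b
  · obtain ⟨c, hc, hle⟩ := exists_nbhd_dotProduct_le_of_mem_cell_inter L b hnd hab hu hub
    exact ⟨c, hc, show 0 ≤ (L b - L c) ⬝ᵥ u by rwa [sub_dotProduct, sub_nonneg]⟩
  · obtain ⟨c, hc, hlt⟩ := hstrict hub
    exact ⟨c, hc, hlt.le⟩

end
end

section
/- Consider a non-degenerate finite partial monitoring game with k actions and d outcomes, and let u ∈ Δ^{d−1}. Let V = {a ∈ [k] : u ∈ C_a} and let E = {{a,b} ⊆ V : a and b are neighbours}. Then the graph (V, E) is connected. -/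
/-
If the optimal actions at `u` split into two nonempty classes `A`, `B` with no neighbouring pair
across, then every cross intersection `C_p ∩ C_q` (with `p ∈ A`, `q ∈ B`) has dimension at most
`d - 3`: distinct loss vectors already force dimension at most `d - 2`. Close to `u` only cells
through `u` occur, and the cells there still have dimension `d - 1`, so a generic segment from
`C_a` (`a ∈ A`) to `C_b` (`b ∈ B`) near `u` misses the affine spans of all cross intersections.
The segment is connected and covered by the closed sets `⋃ p ∈ A, C_p` and `⋃ q ∈ B, C_q`, so
some point of it lies in a cross intersection: a contradiction.
-/

open scoped BigOperators Classical

noncomputable section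

open Set Module AffineMap Metric Filter Topology

section AffineGeometry

theorem AffineSubspace.lineMap_mem_of_ne {k V P : Type*} [Field k] [AddCommGroup V] [Module k V]
    [AddTorsor V P] {W : AffineSubspace k P} {x y : P} {t₁ t₂ : k} (h : t₁ ≠ t₂)
    (h₁ : lineMap x y t₁ ∈ W) (h₂ : lineMap x y t₂ ∈ W) (t : k) : lineMap x y t ∈ W := by
  have hW := AffineMap.lineMap_mem (Q := W.comap (lineMap x y)) ((t - t₁) / (t₂ - t₁)) h₁ h₂
  rw [AffineSubspace.mem_comap, lineMap_apply_module', smul_eq_mul,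
    div_mul_cancel₀ _ (sub_ne_zero.2 h.symm), sub_add_cancel] at hW
  exact hW

variable {V : Type*} [AddCommGroup V] [Module ℝ V]

theorem Convex.exists_forall_notMem_of_finite {s : Set V} (hs : Convex ℝ s) (hs₀ : s.Nonempty)
    {𝒲 : Set (AffineSubspace ℝ V)} (h𝒲 : 𝒲.Finite) (hs𝒲 : ∀ W ∈ 𝒲, ¬ s ⊆ W) :
    ∃ x ∈ s, ∀ W ∈ 𝒲, x ∉ W := by
  induction 𝒲, h𝒲 using Set.Finite.induction_on with
  | empty =>
    obtain ⟨x, hx⟩ := hs₀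
    exact ⟨x, hx, by simp⟩
  | @insert W₀ 𝒲 _ h𝒲 ih =>
    obtain ⟨x, hxs, hx⟩ := ih fun W hW => hs𝒲 W (mem_insert_of_mem _ hW)
    by_cases hxW₀ : x ∉ W₀
    · exact ⟨x, hxs, forall_mem_insert.2 ⟨hxW₀, hx⟩⟩
    obtain ⟨y, hys, hyW₀⟩ := not_subset.1 (hs𝒲 W₀ (mem_insert _ _))
    -- each `W ∈ 𝒲` misses `x`, so it meets the line through `x` and `y` at most once
    have hbad : {τ : ℝ | ∃ W ∈ 𝒲, lineMap x y τ ∈ W}.Finite := by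
      refine (h𝒲.biUnion (t := fun W => {τ : ℝ | lineMap x y τ ∈ W}) fun W hW =>
        Set.Subsingleton.finite ?_).subset fun τ ⟨W, hW, hτ⟩ => mem_biUnion hW hτ
      intro τ₁ h₁ τ₂ h₂
      by_contra hne
      exact hx W hW (by simpa using AffineSubspace.lineMap_mem_of_ne hne h₁ h₂ 0)
    obtain ⟨τ, hτ, hτbad⟩ := ((Ioc_infinite zero_lt_one).sdiff hbad).nonempty
    refine ⟨lineMap x y τ, hs.lineMap_mem hxs hys (Ioc_subset_Icc_self hτ),
      forall_mem_insert.2 ⟨fun hτW₀ => hyW₀ ?_, fun W hW hτW => hτbad ⟨W, hW, hτW⟩⟩⟩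
    simpa using AffineSubspace.lineMap_mem_of_ne hτ.1.ne (by simpa using not_not.1 hxW₀) hτW₀ 1

theorem not_subset_of_finrank_lt [FiniteDimensional ℝ V] {s : Set V} {W : AffineSubspace ℝ V}
    (h : finrank ℝ W.direction < finrank ℝ (affineSpan ℝ s).direction) : ¬ s ⊆ W := fun hs =>
  h.not_ge (Submodule.finrank_mono (AffineSubspace.direction_le (affineSpan_le.2 hs)))

theorem exists_segment_forall_notMem [FiniteDimensional ℝ V] {s t : Set V} (hs : Convex ℝ s)
    (ht : Convex ℝ t) (hs₀ : s.Nonempty) (ht₀ : t.Nonempty) {𝒲 : Set (AffineSubspace ℝ V)}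
    (h𝒲 : 𝒲.Finite)
    (hs𝒲 : ∀ W ∈ 𝒲, finrank ℝ W.direction + 2 ≤ finrank ℝ (affineSpan ℝ s).direction)
    (ht𝒲 : ∀ W ∈ 𝒲, finrank ℝ W.direction + 1 ≤ finrank ℝ (affineSpan ℝ t).direction) :
    ∃ x ∈ s, ∃ y ∈ t, ∀ W ∈ 𝒲, ∀ z ∈ segment ℝ x y, z ∉ W := by
  obtain ⟨y, hyt, hy⟩ := ht.exists_forall_notMem_of_finite ht₀ h𝒲 fun W hW =>
    not_subset_of_finrank_lt (ht𝒲 W hW)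
  -- `x` is chosen off the spans of `y` and each `W`, so the line through `x` and `y` meets
  -- no `W` except possibly at `y`
  let J (W : AffineSubspace ℝ V) := affineSpan ℝ (insert y (W : Set V))
  have hJ (W : AffineSubspace ℝ V) : finrank ℝ (J W).direction ≤ finrank ℝ W.direction + 1 := by
    rw [direction_affineSpan]
    exact finrank_vectorSpan_insert_le W y
  obtain ⟨x, hxs, hx⟩ := hs.exists_forall_notMem_of_finite hs₀ (h𝒲.image J) <|
    forall_mem_image.2 fun W hW => not_subset_of_finrank_lt <| by linarith [hJ W, hs𝒲 W hW]
  refine ⟨x, hxs, y, hyt, fun W hW z hz hzW => ?_⟩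
  rw [segment_eq_image_lineMap] at hz
  obtain ⟨τ, -, rfl⟩ := hz
  rcases eq_or_ne τ 1 with rfl | hτ
  · exact hy W hW (by simpa using hzW)
  refine hx (J W) (mem_image_of_mem J hW) ?_
  have hyJ : lineMap x y (1 : ℝ) ∈ J W := by simpa using subset_affineSpan ℝ _ (mem_insert y _)
  simpa using AffineSubspace.lineMap_mem_of_ne hτ
    (subset_affineSpan ℝ _ (mem_insert_of_mem y hzW)) hyJ 0

theorem vectorSpan_le_ker_of_forall_eq {s : Set V} {f : V →ₗ[ℝ] ℝ} {r : ℝ}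
    (hf : ∀ v ∈ s, f v = r) : vectorSpan ℝ s ≤ LinearMap.ker f := by
  rw [vectorSpan_def, Submodule.span_le]
  rintro _ ⟨v, hv, w, hw, rfl⟩
  simp [hf v hv, hf w hw]

theorem Convex.affineSpan_inter_ball {E : Type*} [NormedAddCommGroup E] [NormedSpace ℝ E]
    {s : Set E} (hs : Convex ℝ s) {u : E} (hu : u ∈ s) {ε : ℝ} (hε : 0 < ε) :
    affineSpan ℝ (s ∩ ball u ε) = affineSpan ℝ s := by
  refine le_antisymm (affineSpan_mono ℝ inter_subset_left) (affineSpan_le.2 fun v hv => ?_)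
  have hlim : Tendsto (lineMap u v) (𝓝[>] (0 : ℝ)) (𝓝 u) := by
    simpa using ((AffineMap.lineMap_continuous (R := ℝ) (p := u) (q := v)).tendsto 0).mono_left
      nhdsWithin_le_nhds
  obtain ⟨δ, hδu, hδ⟩ :=
    ((hlim.eventually (ball_mem_nhds u hε)).and (Ioo_mem_nhdsGT one_pos)).exists
  have h₀ : lineMap u v (0 : ℝ) ∈ affineSpan ℝ (s ∩ ball u ε) := by
    simpa using subset_affineSpan ℝ (s ∩ ball u ε) ⟨hu, mem_ball_self hε⟩
  have hδ' : lineMap u v δ ∈ affineSpan ℝ (s ∩ ball u ε) :=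
    subset_affineSpan ℝ _ ⟨hs.lineMap_mem hu hv (Ioo_subset_Icc_self hδ), hδu⟩
  simpa using AffineSubspace.lineMap_mem_of_ne hδ.1.ne h₀ hδ' 1

end AffineGeometry

theorem IsPreconnected.exists_mem_inter_of_closed_cover {X ι : Type*} [TopologicalSpace X]
    [Finite ι] {S : Set X} (hS : IsPreconnected S) {C : ι → Set X} (hC : ∀ i, IsClosed (C i))
    {A B : Set ι} (hcover : ∀ z ∈ S, ∃ i ∈ A ∪ B, z ∈ C i) (hA : ∃ z ∈ S, ∃ i ∈ A, z ∈ C i)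
    (hB : ∃ z ∈ S, ∃ i ∈ B, z ∈ C i) :
    ∃ z ∈ S, ∃ p ∈ A, ∃ q ∈ B, z ∈ C p ∧ z ∈ C q := by
  have hclosed (I : Set ι) : IsClosed (⋃ i ∈ I, C i) :=
    I.toFinite.isClosed_biUnion fun i _ => hC i
  obtain ⟨z, hzS, hzA, hzB⟩ := isPreconnected_closed_iff.1 hS _ _ (hclosed A) (hclosed B)
    (fun z hz => by simpa only [← biUnion_union, mem_iUnion₂, exists_prop] using hcover z hz)
    (by simpa only [inter_nonempty, mem_iUnion₂, exists_prop] using hA)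
    (by simpa only [inter_nonempty, mem_iUnion₂, exists_prop] using hB)
  simp only [mem_iUnion₂, exists_prop] at hzA hzB
  obtain ⟨p, hp, hzp⟩ := hzA
  obtain ⟨q, hq, hzq⟩ := hzB
  exact ⟨z, hzS, p, hp, q, hq, hzp, hzq⟩

section Cells

variable {k d : ℕ} (L : Fin k → Fin d → ℝ)

theorem affDim_eq_finrank {s : Set (Fin d → ℝ)} (hs : s.Nonempty) :
    affDim s = finrank ℝ (affineSpan ℝ s).direction := by
  rw [affDim, if_neg hs.ne_empty]

theorem convex_cell (a : Fin k) : Convex ℝ (cell L a) := by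
  intro v hv w hw p q hp hq hpq
  refine ⟨convex_stdSimplex ℝ _ hv.1 hw.1 hp hq hpq, fun b => ?_⟩
  have hlin (c : Fin k) : L c ⬝ᵥ (p • v + q • w) = p * (L c ⬝ᵥ v) + q * (L c ⬝ᵥ w) := by
    simp only [dotProduct_add, dotProduct_smul, smul_eq_mul]
  change L a ⬝ᵥ (p • v + q • w) ≤ L b ⬝ᵥ (p • v + q • w)
  rw [hlin, hlin]
  exact add_le_add (mul_le_mul_of_nonneg_left (hv.2 b) hp) (mul_le_mul_of_nonneg_left (hw.2 b) hq)

theorem isClosed_cell (a : Fin k) : IsClosed (cell L a) := by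
  have hcell : cell L a = stdSimplex ℝ (Fin d) ∩ ⋂ b, {v | L a ⬝ᵥ v ≤ L b ⬝ᵥ v} := by
    ext
    simp [cell, dotProduct]
  rw [hcell]
  exact (isClosed_stdSimplex ℝ (Fin d)).inter <| isClosed_iInter fun b =>
    isClosed_le (by fun_prop) (by fun_prop)

theorem exists_mem_cell [Nonempty (Fin k)] {v : Fin d → ℝ} (hv : v ∈ stdSimplex ℝ (Fin d)) :
    ∃ a, v ∈ cell L a :=
  (Finite.exists_min fun a => L a ⬝ᵥ v).imp fun _ ha => ⟨hv, ha⟩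

theorem affDim_le_of_forall_dotProduct_eq_zero {s : Set (Fin d → ℝ)}
    (hs : s ⊆ stdSimplex ℝ (Fin d)) {c : Fin d → ℝ} (hc : c ≠ 0) (hcs : ∀ v ∈ s, c ⬝ᵥ v = 0) :
    affDim s ≤ d - 2 := by
  rcases s.eq_empty_or_nonempty with rfl | ⟨w, hw⟩
  · obtain ⟨x, -⟩ := Function.ne_iff.1 hc
    have := x.pos
    simp only [affDim, if_true]
    omega
  let σ := dotProductBilin ℝ ℝ (fun _ : Fin d => (1 : ℝ))
  let φ := dotProductBilin ℝ ℝ c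
  have hσ (v) (hv : v ∈ stdSimplex ℝ (Fin d)) : σ v = 1 := by
    simpa [σ, dotProduct] using hv.2
  have hσ₀ : σ ≠ 0 := fun h => by simpa [h] using hσ w (hs hw)
  rw [affDim_eq_finrank ⟨w, hw⟩, direction_affineSpan]
  by_contra! hlt
  -- the span of `s` fills the hyperplane `σ = 0`, so `φ` vanishes on it and also at `w`,
  -- where `σ w = 1`; hence `φ = 0`
  have hker : LinearMap.ker σ ≤ LinearMap.ker φ := by
    have hfin := Module.Dual.finrank_ker_add_one_of_ne_zero hσ₀
    rw [finrank_fin_fun] at hfin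
    have hspan : vectorSpan ℝ s ≤ LinearMap.ker σ :=
      vectorSpan_le_ker_of_forall_eq fun v hv => hσ v (hs hv)
    rw [← Submodule.eq_of_le_of_finrank_le hspan (by omega)]
    exact vectorSpan_le_ker_of_forall_eq (f := φ) hcs
  refine hc (funext fun x => ?_)
  have hx : Pi.single x 1 - σ (Pi.single x 1) • w ∈ LinearMap.ker σ := by
    simp [hσ w (hs hw)]
  simpa [φ, hcs w hw] using hker hx

theorem affDim_cell_inter_cell_le {p q : Fin k} (hpq : L p ≠ L q) :
    affDim (cell L p ∩ cell L q) ≤ d - 2 :=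
  affDim_le_of_forall_dotProduct_eq_zero (fun _ hv => hv.1.1) (sub_ne_zero.2 hpq) fun _ hv => by
    rw [sub_dotProduct, sub_eq_zero]
    exact le_antisymm (hv.1.2 q) (hv.2.2 p)

end Cells

theorem exists_neighbours_of_forall_mem_union {k d : ℕ} {L : Fin k → Fin d → ℝ}
    (hnd : NondegenerateGame L) {u : Fin d → ℝ} {A B : Set (Fin k)}
    (hA : ∀ p ∈ A, u ∈ cell L p) (hB : ∀ q ∈ B, u ∈ cell L q)
    (hAB : ∀ c, u ∈ cell L c → c ∈ A ∪ B) (hdisj : Disjoint A B) (hA₀ : A.Nonempty)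
    (hB₀ : B.Nonempty) : ∃ p ∈ A, ∃ q ∈ B, Neighbours L p q := by
  by_contra! hno
  obtain ⟨a, ha⟩ := hA₀
  obtain ⟨b, hb⟩ := hB₀
  have : Nonempty (Fin k) := ⟨a⟩
  let 𝒲 := image2 (fun p q => affineSpan ℝ (cell L p ∩ cell L q)) A B
  have h𝒲 : ∀ W ∈ 𝒲, (finrank ℝ W.direction : ℤ) + 3 ≤ d := by
    rintro _ ⟨p, hp, q, hq, rfl⟩
    dsimp only
    have hle := affDim_cell_inter_cell_le L (hnd.1 p q (hdisj.ne_of_mem hp hq))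
    have hne : affDim (cell L p ∩ cell L q) ≠ d - 2 := fun h => hno p hp q hq ⟨hnd.2 p, hnd.2 q, h⟩
    rw [affDim_eq_finrank (s := cell L p ∩ cell L q) ⟨u, hA p hp, hB q hq⟩] at hle hne
    omega
  -- near `u`, only the cells through `u` are present
  obtain ⟨ε, hε, hball⟩ := Metric.eventually_nhds_iff_ball.1 <|
    (locallyFinite_of_finite (cell L)).eventually_subset (isClosed_cell L) u
  have hdim (c : Fin k) (hc : u ∈ cell L c) :
      (finrank ℝ (affineSpan ℝ (cell L c ∩ ball u ε)).direction : ℤ) = d - 1 := by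
    rw [(convex_cell L c).affineSpan_inter_ball hc hε, ← affDim_eq_finrank ⟨u, hc⟩]
    exact hnd.2 c
  obtain ⟨x, hx, y, hy, hxy⟩ := exists_segment_forall_notMem
    ((convex_cell L a).inter (convex_ball u ε)) ((convex_cell L b).inter (convex_ball u ε))
    ⟨u, hA a ha, mem_ball_self hε⟩ ⟨u, hB b hb, mem_ball_self hε⟩
    ((toFinite A).image2 _ (toFinite B))
    (fun W hW => by linarith [h𝒲 W hW, hdim a (hA a ha)])
    (fun W hW => by linarith [h𝒲 W hW, hdim b (hB b hb)])
  have hseg : segment ℝ x y ⊆ stdSimplex ℝ (Fin d) ∩ ball u ε :=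
    ((convex_stdSimplex ℝ _).inter (convex_ball u ε)).segment_subset ⟨hx.1.1, hx.2⟩ ⟨hy.1.1, hy.2⟩
  obtain ⟨z, hz, p, hp, q, hq, hzp, hzq⟩ :=
    (convex_segment x y).isPreconnected.exists_mem_inter_of_closed_cover (isClosed_cell L)
      (fun z hz => (exists_mem_cell L (hseg hz).1).imp fun c hc =>
        ⟨hAB c (hball z (hseg hz).2 hc), hc⟩)
      ⟨x, left_mem_segment ℝ x y, a, ha, hx.1⟩ ⟨y, right_mem_segment ℝ x y, b, hb, hy.1⟩
  exact hxy _ (mem_image2_of_mem hp hq) z hz (subset_affineSpan ℝ _ ⟨hzp, hzq⟩)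

/-- In a non-degenerate game, for any distribution `u` over outcomes, the graph on the
set of actions optimal at `u` whose edges join neighbouring actions is connected. -/
theorem optimal_actions_graph_connected {k d : ℕ} (hk : 1 ≤ k)
    (L : Fin k → Fin d → ℝ) (hnd : NondegenerateGame L)
    (u : Fin d → ℝ) (hu : u ∈ stdSimplex ℝ (Fin d))
    (Gr : SimpleGraph {a : Fin k // u ∈ cell L a})
    (hGr : ∀ a b, Gr.Adj a b ↔ Neighbours L a.1 b.1) :
    Gr.Connected := by
  have : Nonempty (Fin k) := ⟨⟨0, hk⟩⟩
  obtain ⟨c, hc⟩ := exists_mem_cell L hu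
  refine (SimpleGraph.connected_iff Gr).2 ⟨fun a b => ?_, ⟨⟨c, hc⟩⟩⟩
  by_contra hab
  obtain ⟨p, ⟨hp, hap⟩, q, ⟨hq, hnaq⟩, hpq⟩ := exists_neighbours_of_forall_mem_union hnd
    (A := {p | ∃ h : u ∈ cell L p, Gr.Reachable a ⟨p, h⟩})
    (B := {q | ∃ h : u ∈ cell L q, ¬ Gr.Reachable a ⟨q, h⟩})
    (fun _ ⟨h, _⟩ => h) (fun _ ⟨h, _⟩ => h)
    (fun c hc => (em (Gr.Reachable a ⟨c, hc⟩)).imp (⟨hc, ·⟩) (⟨hc, ·⟩))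
    (Set.disjoint_left.2 fun _ ⟨_, hr⟩ ⟨_, hnr⟩ => hnr hr)
    ⟨a.1, a.2, .rfl⟩ ⟨b.1, b.2, hab⟩
  exact hnaq (hap.trans ((hGr ⟨p, hp⟩ ⟨q, hq⟩).2 hpq).reachable)

end
end

section
/- If a finite partial monitoring game (with k actions, d outcomes and signal set Σ) is globally observable, then for each pair of neighbours a and b there exists f : [k] × Σ → ℝ satisfying L(a,x) − L(b,x) = ∑_{c=1}^k f(c,Φ(c,x)) for all x ∈ [d] with sup_{c,σ} |f(c,σ)| ≤ d^{1/2} (1+k)^{d/2}. If the game is moreover locally observable, then f can additionally be chosen with f(c,σ) = 0 for all c ∉ N_{ab} and all σ ∈ Σ. -/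
open scoped BigOperators Classical

noncomputable section

/-- The set `N_{ab}` of actions whose cells are contained in `C_a ∩ C_b`. -/
def neighbourhoodSet {k d : ℕ} (L : Fin k → Fin d → ℝ) (a b : Fin k) : Set (Fin k) :=
  {c | cell L c ⊆ cell L a ∩ cell L b}

/-- A finite partial monitoring game is globally observable if all loss differences
between neighbouring actions can be estimated from the signals. -/
def GloballyObservable {k d : ℕ} {S : Type*} (L : Fin k → Fin d → ℝ)
    (Φ : Fin k → Fin d → S) : Prop :=
  ∀ a b : Fin k, Neighbours L a b →
    ∃ f : Fin k → S → ℝ, ∀ x : Fin d, L a x - L b x = ∑ c : Fin k, f c (Φ c x)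

/-- A finite partial monitoring game is locally observable if all loss differences
between neighbouring actions can be estimated using only signals of actions in `N_{ab}`. -/
def LocallyObservable {k d : ℕ} {S : Type*} (L : Fin k → Fin d → ℝ)
    (Φ : Fin k → Fin d → S) : Prop :=
  ∀ a b : Fin k, Neighbours L a b →
    ∃ f : Fin k → S → ℝ, (∀ x : Fin d, L a x - L b x = ∑ c : Fin k, f c (Φ c x)) ∧
      ∀ c : Fin k, c ∉ neighbourhoodSet L a b → ∀ σ : S, f c σ = 0

/-!
The loss difference `v = ℓ_a - ℓ_b` is a linear combination of the signal indicators
`x ↦ [Φ c x = σ]`, so it is also a combination `v = ∑ λ_p b_p` of a linearly independent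
subfamily `(b_p)`, and `f c σ := λ_{(c,σ)}` is again an estimation function. The rows `b_p` are
0/1 vectors with at most `k` ones in each column, so their Gram matrix `G` is a positive definite
integer matrix with `det G ≥ 1` and `tr G ≤ dk`. By AM-GM the eigenvalues `μ_j` of `G` satisfy
`∏ (1 + μ_j) ≤ (1 + k)^d`, and since `∏ μ_j ≥ 1` every eigenvalue is at least `(1 + k)^(-d)`.
Hence `λ_p² ≤ ‖λ‖² ≤ (1 + k)^d λᵀ G λ = (1 + k)^d ‖v‖² ≤ d (1 + k)^d`.
-/

open Matrix Finset

theorem Real.prod_le_mean_pow {ι : Type*} (s : Finset ι) {z : ι → ℝ} (hz : ∀ i ∈ s, 0 ≤ z i) :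
    ∏ i ∈ s, z i ≤ ((∑ i ∈ s, z i) / #s) ^ #s := by
  rcases s.eq_empty_or_nonempty with rfl | hs
  · simp
  have hcard : (0 : ℝ) < #s := by exact_mod_cast hs.card_pos
  have amgm := Real.geom_mean_le_arith_mean_weighted s (fun _ => (#s : ℝ)⁻¹) z
    (fun _ _ => by positivity) (by simp [hcard.ne']) hz
  rw [Real.finsetProd_rpow s z hz, ← Finset.mul_sum, inv_mul_eq_div] at amgm
  calc ∏ i ∈ s, z i = ((∏ i ∈ s, z i) ^ (#s : ℝ)⁻¹) ^ #s :=
        (Real.rpow_inv_natCast_pow (prod_nonneg hz) hs.card_pos.ne').symm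
    _ ≤ _ := pow_le_pow_left₀ (Real.rpow_nonneg (prod_nonneg hz) _) amgm _

theorem one_add_div_mul_pow_le {m d : ℕ} (hm : 0 < m) (hmd : m ≤ d) {k : ℝ} (hk : 0 ≤ k) :
    (1 + d / m * k) ^ m ≤ (1 + k) ^ d := by
  have hm' : (0 : ℝ) < m := by exact_mod_cast hm
  have bernoulli : 1 + d / m * k ≤ (1 + k) ^ ((d : ℝ) / m) :=
    one_add_mul_self_le_rpow_one_add (by linarith)
      ((one_le_div hm').2 (by exact_mod_cast hmd))
  calc (1 + d / m * k) ^ m ≤ ((1 + k) ^ ((d : ℝ) / m)) ^ m :=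
        pow_le_pow_left₀ (by positivity) bernoulli _
    _ = (1 + k) ^ d := by
      rw [← Real.rpow_natCast, ← Real.rpow_mul (by linarith), div_mul_cancel₀ _ hm'.ne',
        Real.rpow_natCast]

theorem prod_one_add_le_one_add_pow {ι : Type*} [Fintype ι] {d : ℕ}
    (hcard : Fintype.card ι ≤ d) {μ : ι → ℝ} (hμ : ∀ i, 0 ≤ μ i) {k : ℝ} (hk : 0 ≤ k)
    (hsum : ∑ i, μ i ≤ d * k) : ∏ i, (1 + μ i) ≤ (1 + k) ^ d := by
  set m := Fintype.card ι
  rcases Nat.eq_zero_or_pos m with hm | hm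
  · simp [Fintype.card_eq_zero_iff.mp hm, one_le_pow₀ (by linarith : (1 : ℝ) ≤ 1 + k)]
  have hm' : (0 : ℝ) < m := by exact_mod_cast hm
  calc ∏ i, (1 + μ i) ≤ ((∑ i, (1 + μ i)) / m) ^ m :=
        Real.prod_le_mean_pow univ fun i _ => by linarith [hμ i]
    _ ≤ (1 + d / m * k) ^ m := by
      gcongr
      · exact div_nonneg (sum_nonneg fun i _ => by linarith [hμ i]) hm'.le
      rw [sum_add_distrib, sum_const, card_univ, nsmul_one, add_div, div_self hm'.ne',
        div_mul_eq_mul_div]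
      gcongr
    _ ≤ (1 + k) ^ d := one_add_div_mul_pow_le hm hcard hk

namespace Matrix

section Spectral

variable {n : Type*} [Fintype n] [DecidableEq n]

open scoped MatrixOrder in
theorem IsHermitian.mul_dotProduct_self_le {A : Matrix n n ℝ} (hA : A.IsHermitian) {r : ℝ}
    (hr : ∀ i, r ≤ hA.eigenvalues i) (x : n → ℝ) : r * (x ⬝ᵥ x) ≤ x ⬝ᵥ (A *ᵥ x) := by
  have hrA : algebraMap ℝ (Matrix n n ℝ) r ≤ A := by
    rw [algebraMap_le_iff_le_spectrum (a := A) hA.isSelfAdjoint,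
      hA.spectrum_real_eq_range_eigenvalues]
    rintro _ ⟨i, rfl⟩
    exact hr i
  have := (Matrix.le_iff.mp hrA).dotProduct_mulVec_nonneg x
  rw [Algebra.algebraMap_eq_smul_one, sub_mulVec, smul_mulVec, one_mulVec, dotProduct_sub,
    dotProduct_smul, star_trivial, smul_eq_mul] at this
  linarith

theorem PosDef.inv_prod_one_add_eigenvalues_le {A : Matrix n n ℝ} (hA : A.PosDef)
    (hdet : 1 ≤ A.det) (i : n) :
    (∏ j, (1 + hA.isHermitian.eigenvalues j))⁻¹ ≤ hA.isHermitian.eigenvalues i := by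
  set μ := hA.isHermitian.eigenvalues
  have hμ : ∀ j, 0 ≤ μ j := fun j => (hA.eigenvalues_pos j).le
  have hμ1 : ∀ j, 0 ≤ 1 + μ j := fun j => by linarith [hμ j]
  rw [inv_le_iff_one_le_mul₀' (prod_pos fun j _ => by linarith [hμ j])]
  calc 1 ≤ ∏ j, μ j := by simpa [hA.isHermitian.det_eq_prod_eigenvalues] using hdet
    _ = (∏ j ∈ univ.erase i, μ j) * μ i := (prod_erase_mul _ _ (mem_univ i)).symm
    _ ≤ (∏ j ∈ univ.erase i, (1 + μ j)) * μ i :=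
      mul_le_mul_of_nonneg_right (prod_le_prod (fun j _ => hμ j) fun j _ => by linarith) (hμ i)
    _ ≤ (∏ j, (1 + μ j)) * μ i :=
      mul_le_mul_of_nonneg_right (prod_le_prod_of_subset_of_one_le (erase_subset i univ)
        (fun j _ => hμ1 j) fun j _ _ => by linarith [hμ j]) (hμ i)

theorem PosDef.one_le_det_map_intCast {M : Matrix n n ℤ} (hM : (M.map (Int.cast : ℤ → ℝ)).PosDef) :
    1 ≤ (M.map (Int.cast : ℤ → ℝ)).det := by
  have hpos : (0 : ℝ) < M.det := by rw [Int.cast_det]; exact hM.det_pos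
  rw [← Int.cast_det]
  exact_mod_cast Int.cast_pos.mp hpos

end Spectral

variable {ι n : Type*} [Fintype ι] [DecidableEq ι] [Fintype n]

theorem sq_le_one_add_pow_mul_of_linearIndependent (B : Matrix ι n ℤ)
    (hB : LinearIndependent ℝ (B.map (Int.cast : ℤ → ℝ)).row) {k : ℕ}
    (hcol : ∀ x, ∑ i, B i x ^ 2 ≤ k) (c : ι → ℝ) (i : ι) :
    c i ^ 2 ≤ (1 + k) ^ Fintype.card n *
      (c ᵥ* B.map (Int.cast : ℤ → ℝ) ⬝ᵥ c ᵥ* B.map (Int.cast : ℤ → ℝ)) := by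
  set A := B.map (Int.cast : ℤ → ℝ)
  set d := Fintype.card n
  have hGA : (B * Bᵀ).map (Int.cast : ℤ → ℝ) = A * Aᵀ := by
    ext; simp [A, mul_apply]
  have hG : ((B * Bᵀ).map (Int.cast : ℤ → ℝ)).PosDef := by
    simpa [hGA] using PosDef.mul_conjTranspose_self A (vecMul_injective_iff.2 hB)
  set μ := hG.isHermitian.eigenvalues
  have hcard : Fintype.card ι ≤ d := by
    simpa [Module.finrank_fintype_fun_eq_card] using hB.fintype_card_le_finrank
  have htrace : ∑ j, μ j ≤ d * k := by
    have htr := hG.isHermitian.trace_eq_sum_eigenvalues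
    simp only [RCLike.ofReal_real_eq_id, id] at htr
    rw [← htr]
    calc _ = ∑ x, ∑ j, (B j x ^ 2 : ℝ) := by
          rw [trace, sum_comm]; simp [mul_apply, sq]
      _ ≤ ∑ x : n, (k : ℝ) := sum_le_sum fun x _ => by exact_mod_cast hcol x
      _ = d * k := by simp [d]
  have hprod : ∏ j, (1 + μ j) ≤ (1 + k) ^ d :=
    prod_one_add_le_one_add_pow hcard (fun j => (hG.eigenvalues_pos j).le) k.cast_nonneg htrace
  have hμ : ∀ j, ((1 + k : ℝ) ^ d)⁻¹ ≤ μ j := fun j =>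
    (inv_anti₀ (prod_pos fun j _ => by linarith [hG.eigenvalues_pos j]) hprod).trans
      (hG.inv_prod_one_add_eigenvalues_le hG.one_le_det_map_intCast j)
  have hrayleigh := hG.isHermitian.mul_dotProduct_self_le hμ c
  rw [hGA, ← mulVec_mulVec, dotProduct_mulVec, mulVec_transpose,
    inv_mul_le_iff₀ (by positivity)] at hrayleigh
  calc c i ^ 2 ≤ c ⬝ᵥ c := by
        simpa [sq, dotProduct] using single_le_sum (fun j _ => mul_self_nonneg (c j)) (mem_univ i)
    _ ≤ _ := hrayleigh

theorem abs_le_sqrt_card_mul_rpow_of_linearIndependent (B : Matrix ι n ℤ)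
    (hB : LinearIndependent ℝ (B.map (Int.cast : ℤ → ℝ)).row) {k : ℕ}
    (hcol : ∀ x, ∑ i, B i x ^ 2 ≤ k) {c : ι → ℝ}
    (hv : ∀ x, |(c ᵥ* B.map (Int.cast : ℤ → ℝ)) x| ≤ 1) (i : ι) :
    |c i| ≤ √(Fintype.card n) * (1 + k) ^ ((Fintype.card n : ℝ) / 2) := by
  set v := c ᵥ* B.map (Int.cast : ℤ → ℝ)
  set d := Fintype.card n
  have hvv : v ⬝ᵥ v ≤ d := by
    calc v ⬝ᵥ v = ∑ x, v x ^ 2 := by simp [dotProduct, sq]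
      _ ≤ ∑ _x : n, (1 : ℝ) := sum_le_sum fun x _ => (sq_le_one_iff_abs_le_one _).2 (hv x)
      _ = d := by simp [d]
  have hci : c i ^ 2 ≤ d * (1 + k) ^ d := by
    rw [mul_comm]
    exact (sq_le_one_add_pow_mul_of_linearIndependent B hB hcol c i).trans
      (mul_le_mul_of_nonneg_left hvv (by positivity))
  calc |c i| = √(c i ^ 2) := (Real.sqrt_sq_eq_abs _).symm
    _ ≤ √(d * (1 + k) ^ d) := Real.sqrt_le_sqrt hci
    _ = √d * (1 + k) ^ ((d : ℝ) / 2) := by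
      rw [Real.sqrt_mul d.cast_nonneg, Real.sqrt_eq_rpow ((1 + k) ^ d), ← Real.rpow_natCast,
        ← Real.rpow_mul (by positivity), mul_one_div]

end Matrix

section SignalIndicator

variable {α X S : Type*}

def signalIndicator (R : Type*) [Zero R] [One R] (Φ : α → X → S) (p : α × S) (x : X) : R :=
  if Φ p.1 x = p.2 then 1 else 0

@[simp, norm_cast]
theorem Int.cast_signalIndicator (Φ : α → X → S) (p : α × S) (x : X) :
    ((signalIndicator ℤ Φ p x : ℤ) : ℝ) = signalIndicator ℝ Φ p x := by
  simp [signalIndicator, apply_ite]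

/-- Of the indicators of action `c`, only the one indexed by `(c, Φ c x)` is nonzero at `x`. -/
theorem sum_signalIndicator_sq_le_card [Fintype α] (Φ : α → X → S) (T : Finset (α × S)) (x : X) :
    ∑ p ∈ T, signalIndicator ℤ Φ p x ^ 2 ≤ Fintype.card α := by
  have hinj : Set.InjOn Prod.fst (T.filter fun p => Φ p.1 x = p.2 : Set (α × S)) := by
    rintro ⟨c, σ⟩ hp ⟨c', σ'⟩ hp' (rfl : c = c')
    simp only [coe_filter, Set.mem_ofPred_eq] at hp hp'
    rw [← hp.2, ← hp'.2]
  calc ∑ p ∈ T, signalIndicator ℤ Φ p x ^ 2 = #(T.filter fun p => Φ p.1 x = p.2) := by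
        simp [signalIndicator, ite_pow]
    _ ≤ Fintype.card α := by
        exact_mod_cast card_le_card_of_injOn Prod.fst (fun _ _ => mem_univ _) hinj

theorem linearCombination_signalIndicator_apply [Fintype α] (Φ : α → X → S) (l : α × S →₀ ℝ)
    (x : X) :
    Finsupp.linearCombination ℝ (signalIndicator ℝ Φ) l x = ∑ c, l (c, Φ c x) := by
  calc Finsupp.linearCombination ℝ (signalIndicator ℝ Φ) l x
        = ∑ p ∈ l.support, ∑ c, if (c, Φ c x) = p then l p else 0 := by
          simp only [Finsupp.linearCombination_apply, Finsupp.sum, Finset.sum_apply]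
          refine sum_congr rfl fun p _ => ?_
          simp [signalIndicator, Prod.ext_iff, ite_and, eq_comm]
    _ = ∑ c, l (c, Φ c x) := by
          rw [sum_comm]
          refine sum_congr rfl fun c _ => ?_
          by_cases h : l (c, Φ c x) = 0 <;> simp [h]

theorem comp_mem_span_signalIndicator [Fintype X] (Φ : α → X → S) {K : Set α} {c : α} (hc : c ∈ K)
    (g : S → ℝ) :
    (fun x => g (Φ c x)) ∈ Submodule.span ℝ (signalIndicator ℝ Φ '' {p | p.1 ∈ K}) := by
  have hg : (fun x => g (Φ c x)) = ∑ σ ∈ univ.image (Φ c), g σ • signalIndicator ℝ Φ (c, σ) := by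
    ext x
    simp [signalIndicator, Finset.sum_apply]
  rw [hg]
  exact Submodule.sum_mem _ fun σ _ =>
    Submodule.smul_mem _ _ (Submodule.subset_span ⟨(c, σ), hc, rfl⟩)

theorem abs_le_of_linearIndepOn_signalIndicator [Fintype α] [Fintype X] {Φ : α → X → S}
    {l : α × S →₀ ℝ} (hl : LinearIndepOn ℝ (signalIndicator ℝ Φ) l.support)
    (hv : ∀ x, |Finsupp.linearCombination ℝ (signalIndicator ℝ Φ) l x| ≤ 1) (p : α × S) :
    |l p| ≤ √(Fintype.card X) * (1 + Fintype.card α) ^ ((Fintype.card X : ℝ) / 2) := by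
  by_cases hp : p ∈ l.support
  · let B : Matrix l.support X ℤ := Matrix.of fun p x => signalIndicator ℤ Φ p x
    have hB : LinearIndependent ℝ (B.map (Int.cast : ℤ → ℝ)).row := by
      have hrow : (B.map (Int.cast : ℤ → ℝ)).row = fun p : l.support => signalIndicator ℝ Φ p := by
        ext p x
        simp [B, Matrix.row]
      rw [hrow]
      exact hl
    have hcol : ∀ x, ∑ p, B p x ^ 2 ≤ Fintype.card α := fun x =>
      (sum_coe_sort l.support fun p => signalIndicator ℤ Φ p x ^ 2).trans_le
        (sum_signalIndicator_sq_le_card Φ l.support x)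
    have hBl : (fun p : l.support => l p) ᵥ* B.map (Int.cast : ℤ → ℝ) =
        Finsupp.linearCombination ℝ (signalIndicator ℝ Φ) l := by
      ext x
      rw [Finsupp.linearCombination_apply, Finsupp.sum, Finset.sum_apply]
      simp only [vecMul, dotProduct, Matrix.map_apply, B, Matrix.of_apply,
        Int.cast_signalIndicator, Pi.smul_apply, smul_eq_mul]
      exact sum_coe_sort l.support fun p => l p * signalIndicator ℝ Φ p x
    exact Matrix.abs_le_sqrt_card_mul_rpow_of_linearIndependent B hB hcol
      (fun x => hBl ▸ hv x) ⟨p, hp⟩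
  · rw [Finsupp.notMem_support_iff.1 hp, abs_zero]
    positivity

end SignalIndicator

theorem exists_bounded_estimator {α X S : Type*} [Fintype α] [Fintype X] (Φ : α → X → S)
    (K : Set α) {v : X → ℝ} (hv : ∀ x, |v x| ≤ 1) (f₀ : α → S → ℝ)
    (hf₀ : ∀ x, v x = ∑ c, f₀ c (Φ c x)) (hf₀K : ∀ c ∉ K, ∀ σ, f₀ c σ = 0) :
    ∃ f : α → S → ℝ, (∀ x, v x = ∑ c, f c (Φ c x)) ∧
      (∀ c σ, |f c σ| ≤ √(Fintype.card X) * (1 + Fintype.card α) ^ ((Fintype.card X : ℝ) / 2)) ∧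
      ∀ c ∉ K, ∀ σ, f c σ = 0 := by
  have hspan : v ∈ Submodule.span ℝ (signalIndicator ℝ Φ '' {p | p.1 ∈ K}) := by
    have hv_eq : v = ∑ c, fun x => f₀ c (Φ c x) := by ext x; simp [hf₀]
    rw [hv_eq]
    refine Submodule.sum_mem _ fun c _ => ?_
    by_cases hc : c ∈ K
    · exact comp_mem_span_signalIndicator Φ hc (f₀ c)
    · simp only [hf₀K c hc]
      exact Submodule.zero_mem _
  obtain ⟨b, hbK, -, hb_span, hb_ind⟩ :=
    exists_linearIndepOn_extension (linearIndepOn_empty ℝ (signalIndicator ℝ Φ))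
      (Set.empty_subset _)
  obtain ⟨l, hlb, hlv⟩ := (Finsupp.mem_span_image_iff_linearCombination ℝ).1
    (Submodule.span_le.2 hb_span hspan)
  refine ⟨fun c σ => l (c, σ), fun x => by rw [← hlv, linearCombination_signalIndicator_apply],
    fun c σ => abs_le_of_linearIndepOn_signalIndicator (hb_ind.mono hlb) (hlv ▸ hv) (c, σ),
    fun c hc σ => Finsupp.notMem_support_iff.1 fun h => hc (hbK (hlb h))⟩

/-- In a globally observable game the loss-difference estimation functions for each
pair of neighbours can be chosen with supremum norm at most `d^{1/2}(1+k)^{d/2}`;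
in a locally observable game they can moreover be chosen supported on `N_{ab}`. -/
theorem estimation_function_sup_norm_bound {k d : ℕ} {S : Type*}
    (L : Fin k → Fin d → ℝ) (hL : ∀ a x, L a x ∈ Set.Icc (0:ℝ) 1)
    (Φ : Fin k → Fin d → S) :
    (GloballyObservable L Φ → ∀ a b : Fin k, Neighbours L a b →
      ∃ f : Fin k → S → ℝ, (∀ x : Fin d, L a x - L b x = ∑ c : Fin k, f c (Φ c x)) ∧
        ∀ c : Fin k, ∀ σ : S, |f c σ| ≤ Real.sqrt d * ((1 : ℝ) + k) ^ ((d : ℝ) / 2)) ∧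
    (LocallyObservable L Φ → ∀ a b : Fin k, Neighbours L a b →
      ∃ f : Fin k → S → ℝ, (∀ x : Fin d, L a x - L b x = ∑ c : Fin k, f c (Φ c x)) ∧
        (∀ c : Fin k, ∀ σ : S, |f c σ| ≤ Real.sqrt d * ((1 : ℝ) + k) ^ ((d : ℝ) / 2)) ∧
        ∀ c : Fin k, c ∉ neighbourhoodSet L a b → ∀ σ : S, f c σ = 0) := by
  have hdiff : ∀ a b x, |L a x - L b x| ≤ 1 := fun a b x =>
    abs_sub_le_iff.2 ⟨by linarith [(hL a x).2, (hL b x).1], by linarith [(hL a x).1, (hL b x).2]⟩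
  refine ⟨fun hobs a b hab => ?_, fun hobs a b hab => ?_⟩
  · obtain ⟨f₀, hf₀⟩ := hobs a b hab
    obtain ⟨f, hf, hbound, -⟩ := exists_bounded_estimator Φ Set.univ (hdiff a b) f₀ hf₀
      fun c hc => absurd (Set.mem_univ c) hc
    exact ⟨f, hf, by simpa using hbound⟩
  · obtain ⟨f₀, hf₀, hf₀N⟩ := hobs a b hab
    obtain ⟨f, hf, hbound, hfN⟩ := exists_bounded_estimator Φ _ (hdiff a b) f₀ hf₀ hf₀N
    exact ⟨f, hf, by simpa using hbound, hfN⟩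
end
end

section
/- Let d ≥ 1 and k ≥ 1 be integers and let B be a d × d real symmetric positive semidefinite matrix whose entries are integers lying in {0,1,…,k}. Then every nonzero eigenvalue λ of B satisfies λ ≥ (1+k)^{−d}. -/
open Polynomial in
lemma det_conj_aux' {d : ℕ} (U D V : Matrix (Fin d) (Fin d) ℝ) (hVU : V * U = 1) :
    (U * D * V).det = D.det := by
  rw [Matrix.det_mul, Matrix.det_mul]
  have h : V.det * U.det = 1 := by rw [← Matrix.det_mul, hVU, Matrix.det_one]
  linear_combination D.det * h

open Polynomial in
lemma charpoly_conj_aux' {d : ℕ} (U D V : Matrix (Fin d) (Fin d) ℝ)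
    (hUV : U * V = 1) (hVU : V * U = 1) :
    (U * D * V).charpoly = D.charpoly := by
  unfold Matrix.charpoly
  have h1 : Matrix.charmatrix (U * D * V) =
      (C : ℝ →+* ℝ[X]).mapMatrix U * Matrix.charmatrix D * (C : ℝ →+* ℝ[X]).mapMatrix V := by
    rw [Matrix.charmatrix, Matrix.charmatrix, mul_sub, sub_mul, map_mul, map_mul]
    congr 1
    rw [mul_assoc, (Matrix.scalar_commute (X : ℝ[X]) (Commute.all _) _).eq, ← mul_assoc,
      ← map_mul, hUV, map_one, one_mul]
  rw [h1, Matrix.det_mul, Matrix.det_mul]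
  have h : ((C : ℝ →+* ℝ[X]).mapMatrix V).det * ((C : ℝ →+* ℝ[X]).mapMatrix U).det = 1 := by
    rw [← Matrix.det_mul, ← map_mul, hVU, map_one, Matrix.det_one]
  linear_combination (Matrix.charmatrix D).det * h

open Polynomial Finset

/-- Every nonzero eigenvalue of a real symmetric positive semidefinite `d × d` matrix
with integer entries in `{0, 1, …, k}` is at least `(1 + k)^{-d}`. -/
theorem psd_integer_matrix_eigenvalue_lower_bound (d k : ℕ) (hd : 1 ≤ d) (hk : 1 ≤ k)
    (B : Matrix (Fin d) (Fin d) ℝ) (hsymm : B.IsSymm) (hpsd : B.PosSemidef)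
    (hent : ∀ i j, ∃ z : ℕ, z ≤ k ∧ B i j = z)
    (lam : ℝ) (hlam : lam ≠ 0)
    (heig : ∃ v : Fin d → ℝ, v ≠ 0 ∧ B.mulVec v = lam • v) :
    ((1 + (k : ℝ)) ^ d)⁻¹ ≤ lam := by
  classical
  have hH : B.IsHermitian := hpsd.1
  set μ : Fin d → ℝ := hH.eigenvalues with hμdef
  have hμ0 : ∀ i, 0 ≤ μ i := fun i => hpsd.eigenvalues_nonneg i
  set U : Matrix (Fin d) (Fin d) ℝ := (hH.eigenvectorUnitary : Matrix (Fin d) (Fin d) ℝ) with hUdef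
  have hUmem := hH.eigenvectorUnitary.2
  rw [Matrix.mem_unitaryGroup_iff'] at hUmem
  have hVU : star U * U = 1 := hUmem
  have hUV : U * star U = 1 :=
    Matrix.mem_unitaryGroup_iff.mp (Matrix.mem_unitaryGroup_iff'.mpr hUmem)
  have hspec : B = U * Matrix.diagonal μ * star U := by
    have h := hH.spectral_theorem
    simpa using h
  -- determinant of B + c•1
  have hdet : ∀ c : ℝ, (B + c • (1 : Matrix (Fin d) (Fin d) ℝ)).det = ∏ i, (μ i + c) := by
    intro c
    have h1 : B + c • (1 : Matrix (Fin d) (Fin d) ℝ)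
        = U * Matrix.diagonal (fun i => μ i + c) * star U := by
      have h2 : c • (1 : Matrix (Fin d) (Fin d) ℝ) = U * (c • 1) * star U := by
        rw [Matrix.mul_smul, mul_one, Matrix.smul_mul, hUV]
      rw [hspec, h2, ← add_mul, ← mul_add]
      congr 2
      rw [Matrix.smul_one_eq_diagonal, ← Matrix.diagonal_add]
    rw [h1, det_conj_aux' _ _ _ hVU, Matrix.det_diagonal]
  -- lam is an eigenvalue
  obtain ⟨v, hv0, hvB⟩ := heig
  have hdet0 : (B + (-lam) • (1 : Matrix (Fin d) (Fin d) ℝ)).det = 0 := by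
    rw [← Matrix.exists_mulVec_eq_zero_iff]
    refine ⟨v, hv0, ?_⟩
    rw [Matrix.add_mulVec, Matrix.smul_mulVec, Matrix.one_mulVec, hvB]
    simp
  rw [hdet (-lam)] at hdet0
  obtain ⟨i₀, -, hi₀⟩ := Finset.prod_eq_zero_iff.mp hdet0
  have hlam_eq : μ i₀ = lam := by linarith [hi₀]
  -- charpoly of B
  have hcp : B.charpoly = ∏ i, (X - C (μ i)) := by
    rw [hspec, charpoly_conj_aux' _ _ _ hUV hVU,
      Matrix.charpoly_of_upperTriangular _ (Matrix.blockTriangular_diagonal μ)]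
    simp
  -- integer coefficients
  choose z hzk hBz using hent
  have hmap : B = (Matrix.of fun i j => ((z i j : ℤ))).map (Int.castRingHom ℝ) := by
    ext i j
    simp [hBz]
  have hint : ∀ m : ℕ, ∃ w : ℤ, B.charpoly.coeff m = (w : ℝ) := by
    intro m
    refine ⟨((Matrix.of fun i j => ((z i j : ℤ))).charpoly).coeff m, ?_⟩
    conv_lhs => rw [hmap]
    rw [Matrix.charpoly_map, Polynomial.coeff_map]
    rfl
  -- split the product over nonzero eigenvalues
  set S : Finset (Fin d) := Finset.univ.filter (fun i => μ i ≠ 0) with hSdef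
  set m : ℕ := (Finset.univ.filter (fun i => ¬ μ i ≠ 0)).card with hmdef
  have hsplit : (∏ i, (X - C (μ i))) = (∏ i ∈ S, (X - C (μ i))) * X ^ m := by
    rw [← Finset.prod_filter_mul_prod_filter_not Finset.univ (fun i => μ i ≠ 0)]
    congr 1
    have h0 : ∀ i ∈ Finset.univ.filter (fun i => ¬ μ i ≠ 0), (X - C (μ i) : ℝ[X]) = X := by
      intro i hi
      simp only [Finset.mem_filter, not_not] at hi
      rw [hi.2, map_zero, sub_zero]
    rw [Finset.prod_congr rfl h0, Finset.prod_const]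
  have hcoeff : B.charpoly.coeff m = (-1) ^ S.card * ∏ i ∈ S, μ i := by
    rw [hcp, hsplit]
    have hc := Polynomial.coeff_mul_X_pow (∏ i ∈ S, (X - C (μ i))) m 0
    rw [zero_add] at hc
    rw [hc, Polynomial.coeff_zero_eq_eval_zero, Polynomial.eval_prod]
    simp only [Polynomial.eval_sub, Polynomial.eval_X, Polynomial.eval_C, zero_sub]
    rw [Finset.prod_congr rfl (fun i _ => (neg_eq_neg_one_mul (μ i))),
      Finset.prod_mul_distrib, Finset.prod_const]
  have hP : 0 < ∏ i ∈ S, μ i := by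
    refine Finset.prod_pos fun i hi => lt_of_le_of_ne (hμ0 i) (Ne.symm ?_)
    simpa [hSdef] using hi
  have h1P : (1:ℝ) ≤ ∏ i ∈ S, μ i := by
    obtain ⟨w, hw⟩ := hint m
    have heq : (w:ℝ) = (-1)^S.card * ∏ i ∈ S, μ i := by rw [← hw, hcoeff]
    have hw0 : w ≠ 0 := by
      intro h
      rw [h, Int.cast_zero] at heq
      exact mul_ne_zero (pow_ne_zero S.card (by norm_num : (-1:ℝ) ≠ 0)) (ne_of_gt hP) heq.symm
    have habs : (1:ℝ) ≤ |(w:ℝ)| := by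
      have h1 : (1:ℤ) ≤ |w| := Int.one_le_abs hw0
      calc (1:ℝ) = ((1:ℤ):ℝ) := by norm_num
        _ ≤ ((|w| : ℤ) : ℝ) := by exact_mod_cast h1
        _ = |(w:ℝ)| := by push_cast; ring
    rwa [heq, abs_mul, abs_pow, abs_neg, abs_one, one_pow, one_mul, abs_of_pos hP] at habs
  -- lam is among the nonzero eigenvalues
  have hi₀S : i₀ ∈ S := by simp [hSdef, hlam_eq, hlam]
  have hprod_split : ∏ i ∈ S, μ i = lam * ∏ i ∈ S.erase i₀, μ i := by
    rw [← Finset.mul_prod_erase S μ hi₀S, hlam_eq]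
  have hQR : (∏ i ∈ S.erase i₀, μ i) ≤ ∏ i, (1 + μ i) :=
    calc (∏ i ∈ S.erase i₀, μ i) ≤ ∏ i ∈ S.erase i₀, (1 + μ i) :=
          Finset.prod_le_prod (fun i _ => hμ0 i) (fun i _ => by linarith [hμ0 i])
      _ ≤ ∏ i, (1 + μ i) := by
          rw [← Finset.prod_sdiff (Finset.subset_univ (S.erase i₀))]
          have h1 : (1:ℝ) ≤ ∏ i ∈ Finset.univ \ S.erase i₀, (1 + μ i) := by
            have := Finset.prod_le_prod (f := fun _ => (1:ℝ)) (g := fun i => 1 + μ i)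
              (s := Finset.univ \ S.erase i₀) (fun i _ => zero_le_one)
              (fun i _ => by show (1:ℝ) ≤ 1 + μ i; linarith [hμ0 i])
            simpa using this
          have h2 : (0:ℝ) ≤ ∏ i ∈ S.erase i₀, (1 + μ i) :=
            Finset.prod_nonneg (fun i _ => by linarith [hμ0 i])
          exact le_mul_of_one_le_left h2 h1
  -- trace bound
  have htr : ∑ i, μ i = ∑ i, B i i := by
    have h2 : Matrix.trace B = Matrix.trace (Matrix.diagonal μ) := by
      rw [hspec, Matrix.trace_mul_cycle, hVU, one_mul]
    simpa [Matrix.trace, Matrix.diag] using h2.symm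
  have htrk : ∑ i, μ i ≤ (d:ℝ) * k := by
    rw [htr]
    calc ∑ i, B i i ≤ ∑ _i : Fin d, (k:ℝ) :=
          Finset.sum_le_sum (fun i _ => by rw [hBz i i]; exact_mod_cast hzk i i)
      _ = (d:ℝ) * k := by simp [Finset.sum_const, mul_comm]
  -- AM-GM
  have hd0 : (0:ℝ) < d := by exact_mod_cast hd
  have hR : (∏ i, (1 + μ i)) ≤ (1 + (k:ℝ)) ^ d := by
    have hAM := Real.geom_mean_le_arith_mean_weighted Finset.univ (fun _ => (d:ℝ)⁻¹)
      (fun i => 1 + μ i) (fun i _ => by positivity)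
      (by simp [Finset.sum_const]; field_simp) (fun i _ => by show (0:ℝ) ≤ 1 + μ i; linarith [hμ0 i])
    rw [Real.finset_prod_rpow Finset.univ _ (fun i _ => by linarith [hμ0 i]) _] at hAM
    have hsum : ∑ i : Fin d, (d:ℝ)⁻¹ * (1 + μ i) ≤ 1 + (k:ℝ) := by
      rw [← Finset.mul_sum, Finset.sum_add_distrib, Finset.sum_const]
      have : (d:ℝ)⁻¹ * ((d:ℝ) * (1 + k)) = 1 + k := by field_simp
      calc (d:ℝ)⁻¹ * (Finset.univ.card • (1:ℝ) + ∑ i, μ i)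
          ≤ (d:ℝ)⁻¹ * ((d:ℝ) * (1 + k)) := by
            refine mul_le_mul_of_nonneg_left ?_ (by positivity)
            simp only [Finset.card_univ, Fintype.card_fin, nsmul_eq_mul, mul_one]
            nlinarith [htrk]
        _ = 1 + k := this
    have hfin := le_trans hAM hsum
    have hprodnn : (0:ℝ) ≤ ∏ i, (1 + μ i) := Finset.prod_nonneg (fun i _ => by linarith [hμ0 i])
    have := pow_le_pow_left₀ (Real.rpow_nonneg hprodnn _) hfin d
    rwa [Real.rpow_inv_natCast_pow hprodnn (by omega)] at this
  -- conclusion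
  have hlam_pos : 0 < lam := lt_of_le_of_ne (hlam_eq ▸ hμ0 i₀) (Ne.symm hlam)
  have hC : (0:ℝ) < (1 + (k:ℝ)) ^ d := by positivity
  have hfinal : 1 ≤ lam * ((1 + (k:ℝ)) ^ d) := by
    calc (1:ℝ) ≤ ∏ i ∈ S, μ i := h1P
      _ = lam * ∏ i ∈ S.erase i₀, μ i := hprod_split
      _ ≤ lam * ((1 + (k:ℝ)) ^ d) :=
          mul_le_mul_of_nonneg_left (le_trans hQR hR) hlam_pos.le
  rw [inv_eq_one_div, div_le_iff₀ hC]
  linarith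
end
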